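/- arXiv:1808.08520 — 9 statements merged into one kernel-verified Lean document; each statement's English description precedes it below -/
import Mathlib

section
/- The number of integer points in the Lee sphere of radius r in dimension n equals ∑_{i=0}^{min(n,r)} 2^i * C(n,i) * C(r,i). -/
private def leeA (n r : ℕ) : ℕ :=
  ∑ i ∈ Finset.range (n + 1), 2 ^ i * n.choose i * r.choose i

private lemma leeA_stable (n r N : ℕ) (h : n + 1 ≤ N) :
    ∑ i ∈ Finset.range N, 2 ^ i * n.choose i * r.choose i = leeA n r := by
  rw [leeA]
  refine (Finset.sum_subset (Finset.range_subset_range.2 h) ?_).symm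
  intro i _ hi
  simp only [Finset.mem_range, not_lt] at hi
  rw [Nat.choose_eq_zero_of_lt (by omega)]
  ring

private lemma leeA_rec (n r : ℕ) :
    leeA (n+1) (r+1) = leeA n (r+1) + leeA (n+1) r + leeA n r := by
  set N := n + r + 2 with hN
  have key : ∀ (m s : ℕ), m + 1 ≤ N →
      leeA m s = (∑ i ∈ Finset.range N, 2 ^ (i+1) * m.choose (i+1) * s.choose (i+1)) + 1 := by
    intro m s hm
    rw [← leeA_stable m s (N+1) (by omega), Finset.sum_range_succ']
    simp
  set S1 := ∑ i ∈ Finset.range N, 2 ^ (i+1) * n.choose i * r.choose i with hS1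
  set S2 := ∑ i ∈ Finset.range N, 2 ^ (i+1) * n.choose i * r.choose (i+1) with hS2
  set S3 := ∑ i ∈ Finset.range N, 2 ^ (i+1) * n.choose (i+1) * r.choose i with hS3
  set S4 := ∑ i ∈ Finset.range N, 2 ^ (i+1) * n.choose (i+1) * r.choose (i+1) with hS4
  have h1 : leeA (n+1) (r+1) = S1 + S2 + S3 + S4 + 1 := by
    rw [key (n+1) (r+1) (by omega)]
    congr 1
    rw [hS1, hS2, hS3, hS4, ← Finset.sum_add_distrib, ← Finset.sum_add_distrib,
      ← Finset.sum_add_distrib]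
    refine Finset.sum_congr rfl fun i _ => ?_
    rw [Nat.choose_succ_succ n i, Nat.choose_succ_succ r i]
    ring
  have h2 : leeA n (r+1) = S3 + S4 + 1 := by
    rw [key n (r+1) (by omega)]
    congr 1
    rw [hS3, hS4, ← Finset.sum_add_distrib]
    refine Finset.sum_congr rfl fun i _ => ?_
    rw [Nat.choose_succ_succ r i]
    ring
  have h3 : leeA (n+1) r = S2 + S4 + 1 := by
    rw [key (n+1) r (by omega)]
    congr 1
    rw [hS2, hS4, ← Finset.sum_add_distrib]
    refine Finset.sum_congr rfl fun i _ => ?_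
    rw [Nat.choose_succ_succ n i]
    ring
  have h4 : leeA n r = S4 + 1 := key n r (by omega)
  have h5 : S1 = 2 * leeA n r := by
    rw [← leeA_stable n r N (by omega), hS1, Finset.mul_sum]
    refine Finset.sum_congr rfl fun i _ => ?_
    ring
  omega

private lemma leeA_zero_right (n : ℕ) : leeA n 0 = 1 := by
  rw [leeA]
  rw [Finset.sum_eq_single_of_mem 0 (Finset.mem_range.2 (by omega))]
  · simp
  · intro i _ hi
    rw [Nat.choose_eq_zero_of_lt (show (0:ℕ) < i by omega)]
    ring

private lemma leeA_zero_left (r : ℕ) : leeA 0 r = 1 := by simp [leeA]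

private lemma sphere_finite (n : ℕ) (s : ℤ) :
    {x : Fin n → ℤ | (∑ i, |x i|) ≤ s}.Finite := by
  apply Set.Finite.subset (Set.Finite.pi (fun i : Fin n => Set.finite_Icc (-s) s))
  intro x hx
  simp only [Set.mem_setOf_eq] at hx
  simp only [Set.mem_pi, Set.mem_univ, Set.mem_Icc, forall_true_left]
  intro i
  have h1 : |x i| ≤ ∑ j, |x j| :=
    Finset.single_le_sum (fun j _ => abs_nonneg (x j)) (Finset.mem_univ i)
  exact abs_le.mp (h1.trans hx)

private lemma pairQ_finite (n : ℕ) (s : ℤ) :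
    {p : ℤ × (Fin n → ℤ) | |p.1| + ∑ i, |p.2 i| ≤ s}.Finite := by
  apply Set.Finite.subset
    ((Set.finite_Icc (-s) s).prod (Set.Finite.pi (fun i : Fin n => Set.finite_Icc (-s) s)))
  intro p hp
  simp only [Set.mem_setOf_eq] at hp
  have hsum : (0:ℤ) ≤ ∑ i, |p.2 i| := Finset.sum_nonneg fun i _ => abs_nonneg _
  constructor
  · exact Set.mem_Icc.2 (abs_le.mp (by linarith [abs_nonneg p.1]))
  · simp only [Set.mem_pi, Set.mem_univ, Set.mem_Icc, forall_true_left]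
    intro i
    have h1 : |p.2 i| ≤ ∑ j, |p.2 j| :=
      Finset.single_le_sum (fun j _ => abs_nonneg (p.2 j)) (Finset.mem_univ i)
    exact abs_le.mp (by linarith [abs_nonneg p.1])

private lemma cons_sum (n : ℕ) (a : ℤ) (y : Fin n → ℤ) :
    (∑ i, |Fin.cons a y i|) = |a| + ∑ i, |y i| := by
  rw [Fin.sum_univ_succ]
  simp

private lemma sphere_eq_image (n : ℕ) (s : ℤ) :
    {x : Fin (n+1) → ℤ | (∑ i, |x i|) ≤ s} =
      (fun p : ℤ × (Fin n → ℤ) => Fin.cons p.1 p.2) ''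
        {p : ℤ × (Fin n → ℤ) | |p.1| + ∑ i, |p.2 i| ≤ s} := by
  ext x
  simp only [Set.mem_setOf_eq, Set.mem_image]
  constructor
  · intro hx
    refine ⟨(x 0, Fin.tail x), ?_, ?_⟩
    · simpa [← cons_sum n (x 0) (Fin.tail x), Fin.cons_self_tail] using hx
    · exact Fin.cons_self_tail x
  · rintro ⟨p, hp, rfl⟩
    rw [cons_sum]
    exact hp

private lemma cons_injective (n : ℕ) :
    Function.Injective (fun p : ℤ × (Fin n → ℤ) => Fin.cons p.1 p.2 : _ → Fin (n+1) → ℤ) := by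
  rintro ⟨a, y⟩ ⟨b, z⟩ h
  simp only at h
  have h0 : a = b := by
    have := congrFun h 0
    simpa using this
  have h1 : y = z := by
    funext i
    have := congrFun h i.succ
    simpa using this
  simp [h0, h1]

private lemma sphere_ncard_eq_pair (n : ℕ) (s : ℤ) :
    Set.ncard {x : Fin (n+1) → ℤ | (∑ i, |x i|) ≤ s} =
      Set.ncard {p : ℤ × (Fin n → ℤ) | |p.1| + ∑ i, |p.2 i| ≤ s} := by
  rw [sphere_eq_image, Set.ncard_image_of_injective _ (cons_injective n)]

private lemma sphere_rec (n r : ℕ) :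
    Set.ncard {x : Fin (n+1) → ℤ | (∑ i, |x i|) ≤ ((r:ℤ)+1)} =
    Set.ncard {x : Fin n → ℤ | (∑ i, |x i|) ≤ ((r:ℤ)+1)} +
    Set.ncard {x : Fin (n+1) → ℤ | (∑ i, |x i|) ≤ (r:ℤ)} +
    Set.ncard {x : Fin n → ℤ | (∑ i, |x i|) ≤ (r:ℤ)} := by
  classical
  set Q : ℤ → Set (ℤ × (Fin n → ℤ)) := fun s => {p | |p.1| + ∑ i, |p.2 i| ≤ s} with hQ
  -- subsets with sign conditions
  set Q0 : ℤ → Set (ℤ × (Fin n → ℤ)) := fun s => {p | (|p.1| + ∑ i, |p.2 i| ≤ s) ∧ p.1 = 0} with hQ0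
  set Qp : ℤ → Set (ℤ × (Fin n → ℤ)) := fun s => {p | (|p.1| + ∑ i, |p.2 i| ≤ s) ∧ 0 < p.1} with hQp
  set Qm : ℤ → Set (ℤ × (Fin n → ℤ)) := fun s => {p | (|p.1| + ∑ i, |p.2 i| ≤ s) ∧ p.1 < 0} with hQm
  set Qge : ℤ → Set (ℤ × (Fin n → ℤ)) := fun s => {p | (|p.1| + ∑ i, |p.2 i| ≤ s) ∧ 0 ≤ p.1} with hQge
  set Qle : ℤ → Set (ℤ × (Fin n → ℤ)) := fun s => {p | (|p.1| + ∑ i, |p.2 i| ≤ s) ∧ p.1 ≤ 0} with hQle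
  have hfin : ∀ s : ℤ, (Q s).Finite := fun s => pairQ_finite n s
  have hsub0 : ∀ s, Q0 s ⊆ Q s := fun s p hp => hp.1
  have hsubp : ∀ s, Qp s ⊆ Q s := fun s p hp => hp.1
  have hsubm : ∀ s, Qm s ⊆ Q s := fun s p hp => hp.1
  have hsubge : ∀ s, Qge s ⊆ Q s := fun s p hp => hp.1
  have hsuble : ∀ s, Qle s ⊆ Q s := fun s p hp => hp.1
  -- partition of Q (r+1)
  have hpart : Set.ncard (Q ((r:ℤ)+1)) =
      Set.ncard (Q0 ((r:ℤ)+1)) + Set.ncard (Qp ((r:ℤ)+1)) + Set.ncard (Qm ((r:ℤ)+1)) := by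
    have hU1 : Q0 ((r:ℤ)+1) ∪ Qp ((r:ℤ)+1) ∪ Qm ((r:ℤ)+1) = Q ((r:ℤ)+1) := by
      ext p
      simp only [Set.mem_union, hQ0, hQp, hQm, hQ, Set.mem_setOf_eq]
      constructor
      · rintro ((h | h) | h) <;> exact h.1
      · intro h
        rcases lt_trichotomy p.1 0 with hc | hc | hc
        · exact Or.inr ⟨h, hc⟩
        · exact Or.inl (Or.inl ⟨h, hc⟩)
        · exact Or.inl (Or.inr ⟨h, hc⟩)
    have hd1 : Disjoint (Q0 ((r:ℤ)+1)) (Qp ((r:ℤ)+1)) := by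
      rw [Set.disjoint_left]
      rintro p ⟨_, h0⟩ ⟨_, hp⟩
      omega
    have hd2 : Disjoint (Q0 ((r:ℤ)+1) ∪ Qp ((r:ℤ)+1)) (Qm ((r:ℤ)+1)) := by
      rw [Set.disjoint_left]
      rintro p (⟨_, h0⟩ | ⟨_, h0⟩) ⟨_, hm⟩ <;> omega
    rw [← hU1, Set.ncard_union_eq hd2 (((hfin _).subset (hsub0 _)).union ((hfin _).subset (hsubp _)))
        ((hfin _).subset (hsubm _)),
      Set.ncard_union_eq hd1 ((hfin _).subset (hsub0 _)) ((hfin _).subset (hsubp _))]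
  -- shift bijections
  have hshiftp : Set.ncard (Qp ((r:ℤ)+1)) = Set.ncard (Qge (r:ℤ)) := by
    have him : Qp ((r:ℤ)+1) = (fun p : ℤ × (Fin n → ℤ) => (p.1 + 1, p.2)) '' Qge (r:ℤ) := by
      ext p
      simp only [hQp, hQge, Set.mem_setOf_eq, Set.mem_image, Prod.ext_iff]
      constructor
      · rintro ⟨hle, hpos⟩
        refine ⟨(p.1 - 1, p.2), ⟨?_, by omega⟩, by simp, rfl⟩
        have : |p.1 - 1| = |p.1| - 1 := by rw [abs_of_pos hpos, abs_of_nonneg (by omega)]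
        rw [this]; simp only []; linarith
      · rintro ⟨q, ⟨hle, hpos⟩, h1, h2⟩
        have : |q.1 + 1| = |q.1| + 1 := by
          rw [abs_of_nonneg hpos, abs_of_nonneg (by omega)]
        constructor
        · rw [← h1, ← h2, this]; linarith
        · omega
    rw [him]
    apply Set.ncard_image_of_injective
    rintro ⟨a, y⟩ ⟨b, z⟩ h
    simp only [Prod.ext_iff] at h ⊢
    exact ⟨by omega, h.2⟩
  have hshiftm : Set.ncard (Qm ((r:ℤ)+1)) = Set.ncard (Qle (r:ℤ)) := by
    have him : Qm ((r:ℤ)+1) = (fun p : ℤ × (Fin n → ℤ) => (p.1 - 1, p.2)) '' Qle (r:ℤ) := by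
      ext p
      simp only [hQm, hQle, Set.mem_setOf_eq, Set.mem_image, Prod.ext_iff]
      constructor
      · rintro ⟨hle, hneg⟩
        refine ⟨(p.1 + 1, p.2), ⟨?_, by omega⟩, by simp, rfl⟩
        have : |p.1 + 1| = |p.1| - 1 := by rw [abs_of_neg hneg, abs_of_nonpos (by omega)]; ring
        rw [this]; linarith
      · rintro ⟨q, ⟨hle, hneg⟩, h1, h2⟩
        have : |q.1 - 1| = |q.1| + 1 := by
          rw [abs_of_nonpos hneg, abs_of_nonpos (by omega)]; ring
        constructor
        · rw [← h1, ← h2, this]; linarith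
        · omega
    rw [him]
    apply Set.ncard_image_of_injective
    rintro ⟨a, y⟩ ⟨b, z⟩ h
    simp only [Prod.ext_iff] at h ⊢
    exact ⟨by omega, h.2⟩
  -- union/inter for Qge Qle
  have hunion : Set.ncard (Qge (r:ℤ)) + Set.ncard (Qle (r:ℤ)) =
      Set.ncard (Q (r:ℤ)) + Set.ncard (Q0 (r:ℤ)) := by
    have hU : Qge (r:ℤ) ∪ Qle (r:ℤ) = Q (r:ℤ) := by
      ext p
      simp only [Set.mem_union, hQge, hQle, hQ, Set.mem_setOf_eq]
      constructor
      · rintro (h | h) <;> exact h.1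
      · intro h
        rcases le_total 0 p.1 with hc | hc
        · exact Or.inl ⟨h, hc⟩
        · exact Or.inr ⟨h, hc⟩
    have hI : Qge (r:ℤ) ∩ Qle (r:ℤ) = Q0 (r:ℤ) := by
      ext p
      simp only [Set.mem_inter_iff, hQge, hQle, hQ0, Set.mem_setOf_eq]
      constructor
      · rintro ⟨⟨h1, h2⟩, ⟨_, h3⟩⟩
        exact ⟨h1, le_antisymm h3 h2⟩
      · rintro ⟨h1, h2⟩
        exact ⟨⟨h1, le_of_eq h2.symm⟩, ⟨h1, le_of_eq h2⟩⟩
    rw [← Set.ncard_union_add_ncard_inter _ _ ((hfin _).subset (hsubge _))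
      ((hfin _).subset (hsuble _)), hU, hI]
  -- Q0 equals lower-dimensional sphere
  have hQ0card : ∀ s : ℤ, Set.ncard (Q0 s) = Set.ncard {y : Fin n → ℤ | (∑ i, |y i|) ≤ s} := by
    intro s
    have him : Q0 s = (fun y : Fin n → ℤ => ((0:ℤ), y)) '' {y | (∑ i, |y i|) ≤ s} := by
      ext p
      simp only [hQ0, Set.mem_setOf_eq, Set.mem_image, Prod.ext_iff]
      constructor
      · rintro ⟨hle, h0⟩
        exact ⟨p.2, by simpa [h0] using hle, h0.symm, rfl⟩
      · rintro ⟨y, hy, h1, h2⟩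
        rw [← h1, ← h2]
        simpa using hy
    rw [him]
    apply Set.ncard_image_of_injective
    intro a b h
    simpa [Prod.ext_iff] using h
  rw [sphere_ncard_eq_pair n ((r:ℤ)+1), sphere_ncard_eq_pair n (r:ℤ)]
  have e1 : {p : ℤ × (Fin n → ℤ) | |p.1| + ∑ i, |p.2 i| ≤ (r:ℤ)+1} = Q ((r:ℤ)+1) := rfl
  have e2 : {p : ℤ × (Fin n → ℤ) | |p.1| + ∑ i, |p.2 i| ≤ (r:ℤ)} = Q (r:ℤ) := rfl
  rw [e1, e2, hpart, hshiftp, hshiftm, hQ0card ((r:ℤ)+1)]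
  have h6 := hQ0card (r:ℤ)
  linarith [hunion, h6]

private lemma sphere_zero_radius (n : ℕ) :
    Set.ncard {x : Fin n → ℤ | (∑ i, |x i|) ≤ (0:ℤ)} = 1 := by
  have h : {x : Fin n → ℤ | (∑ i, |x i|) ≤ (0:ℤ)} = {0} := by
    ext x
    simp only [Set.mem_setOf_eq, Set.mem_singleton_iff]
    constructor
    · intro hx
      funext i
      have h0 : (∑ i, |x i|) = 0 :=
        le_antisymm hx (Finset.sum_nonneg fun i _ => abs_nonneg _)
      have := (Finset.sum_eq_zero_iff_of_nonneg (fun i _ => abs_nonneg (x i))).mp h0 i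
        (Finset.mem_univ i)
      simpa [abs_eq_zero] using this
    · rintro rfl
      simp
  rw [h, Set.ncard_singleton]

private lemma lee_main (n r : ℕ) :
    Set.ncard {x : Fin n → ℤ | (∑ i, |x i|) ≤ (r:ℤ)} = leeA n r := by
  induction n generalizing r with
  | zero =>
    have h : {x : Fin 0 → ℤ | (∑ i, |x i|) ≤ (r:ℤ)} = Set.univ := by
      ext x
      simp [Finset.univ_eq_empty]
    rw [h, Set.ncard_univ, Nat.card_unique, leeA_zero_left]
  | succ n ih =>
    induction r with
    | zero =>
      rw [leeA_zero_right]
      exact_mod_cast sphere_zero_radius (n+1)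
    | succ r ihr =>
      have hc : ((r+1 : ℕ) : ℤ) = (r:ℤ) + 1 := by push_cast; ring
      rw [hc, sphere_rec n r, leeA_rec]
      rw [ihr]
      have h1 := ih (r+1)
      rw [hc] at h1
      rw [h1, ih r]

theorem lee_sphere_card (n r : ℕ) (hn : 0 < n) (hr : 0 < r) :
    Set.ncard {x : Fin n → ℤ | (∑ i, |x i|) ≤ (r : ℤ)} =
      ∑ i ∈ Finset.range (min n r + 1), 2 ^ i * n.choose i * r.choose i := by
  rw [lee_main n r, leeA]
  refine (Finset.sum_subset (Finset.range_subset_range.2 (by omega)) ?_).symm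
  intro i hi hni
  simp only [Finset.mem_range, not_lt] at hi hni
  rw [Nat.choose_eq_zero_of_lt (show r < i by omega)]
  ring
end

section
/- Let G be a finite abelian group of order 2n²+2n+1 and T ⊆ G with |T| = 2n+1 satisfying conditions (a) e ∈ T, (b) T = T⁻¹, (c) T² = 2G − T^(2) + 2n in the group ring ℤ[G]. Write T^(2) = {a₀ = e, a₁, ..., a_{2n}}. Then for 0 = i < j ≤ 2n, |a_iT ∩ a_jT| = 1, and for 0 < i < j ≤ 2n, |a_iT ∩ a_jT| = 2. -/
open scoped Pointwise

lemma inv_mem_of_mem' {G : Type*} [CommGroup G] [DecidableEq G] {T : Finset G}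
    (hinv : T = T⁻¹) {t : G} (ht : t ∈ T) : t⁻¹ ∈ T := by
  rw [hinv]; exact Finset.inv_mem_inv ht

lemma key_count {G : Type*} [CommGroup G] [DecidableEq G] (T : Finset G)
    (hinv : T = T⁻¹) (a b : G) :
    ((T ×ˢ T).filter (fun p => p.1 * p.2 = a⁻¹ * b)).card =
      ((T.image fun t => a * t) ∩ (T.image fun t => b * t)).card := by
  apply Finset.card_bij (fun p _ => a * p.1)
  · intro p hp
    simp only [Finset.mem_filter, Finset.mem_product] at hp
    obtain ⟨⟨hp1, hp2⟩, hp3⟩ := hp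
    simp only [Finset.mem_inter, Finset.mem_image]
    refine ⟨⟨p.1, hp1, rfl⟩, ⟨p.2⁻¹, inv_mem_of_mem' hinv hp2, ?_⟩⟩
    have hb : b = a * (p.1 * p.2) := by rw [hp3]; group
    rw [hb]; group
  · intro p hp q hq h
    simp only [Finset.mem_filter, Finset.mem_product] at hp hq
    have h1 : p.1 = q.1 := mul_left_cancel h
    have h2 : p.2 = q.2 := by
      have := hp.2.trans hq.2.symm
      rw [h1] at this
      exact mul_left_cancel this
    exact Prod.ext h1 h2
  · intro x hx
    simp only [Finset.mem_inter, Finset.mem_image] at hx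
    obtain ⟨⟨t1, ht1, he1⟩, ⟨t2, ht2, he2⟩⟩ := hx
    refine ⟨(t1, t2⁻¹), ?_, he1⟩
    simp only [Finset.mem_filter, Finset.mem_product]
    refine ⟨⟨ht1, inv_mem_of_mem' hinv ht2⟩, ?_⟩
    have : a * t1 = b * t2 := he1.trans he2.symm
    have hb : t1 = a⁻¹ * (b * t2) := by rw [← this]; group
    rw [hb]; group

lemma sq_inj' {G : Type*} [CommGroup G] [Fintype G] (n : ℕ)
    (hG : Fintype.card G = 2 * n ^ 2 + 2 * n + 1) {x y : G} (h : x ^ 2 = y ^ 2) :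
    x = y := by
  have hz : (x * y⁻¹) ^ 2 = 1 := by rw [mul_pow, h]; group
  have h2 : orderOf (x * y⁻¹) ∣ 2 := orderOf_dvd_of_pow_eq_one hz
  have hc : orderOf (x * y⁻¹) ∣ 2 * n ^ 2 + 2 * n + 1 := hG ▸ orderOf_dvd_card
  rcases (Nat.dvd_prime Nat.prime_two).mp h2 with h' | h'
  · have : x * y⁻¹ = 1 := orderOf_eq_one_iff.mp h'
    have := mul_inv_eq_one.mp this
    exact this
  · rw [h'] at hc
    omega

theorem translates_inter_card
    {G : Type*} [CommGroup G] [Fintype G] [DecidableEq G] (n : ℕ) (hn : 2 ≤ n)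
    (hG : Fintype.card G = 2 * n ^ 2 + 2 * n + 1)
    (T : Finset G) (hT : T.card = 2 * n + 1)
    (h1 : (1 : G) ∈ T) (hinv : T = T⁻¹)
    (hcount : ∀ g : G, g ≠ 1 →
      ((T ×ˢ T).filter (fun p => p.1 * p.2 = g)).card =
        if g ∈ T.image (· ^ 2) then 1 else 2)
    : (∀ b ∈ T.image (· ^ 2), b ≠ 1 →
        (T ∩ (T.image fun t => b * t)).card = 1) ∧
      (∀ a ∈ T.image (· ^ 2), ∀ b ∈ T.image (· ^ 2), a ≠ 1 → b ≠ 1 → a ≠ b →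
        ((T.image fun t => a * t) ∩ (T.image fun t => b * t)).card = 2) := by
  constructor
  · intro b hb hbne
    have h1T : (T.image fun t => (1 : G) * t) = T := by
      simp
    have := key_count T hinv 1 b
    rw [h1T, inv_one, one_mul] at this
    rw [← this, hcount b hbne, if_pos hb]
  · intro a ha b hb hane hbne hab
    have hgne : a⁻¹ * b ≠ 1 := by
      intro h
      exact hab (by rw [← inv_mul_eq_one.mp h])
    rw [← key_count T hinv a b, hcount _ hgne, if_neg]
    intro hmem
    -- a = s^2, b = t^2, a⁻¹ b = u^2
    simp only [Finset.mem_image] at ha hb hmem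
    obtain ⟨s, hs, hsa⟩ := ha
    obtain ⟨t, ht, htb⟩ := hb
    obtain ⟨u, hu, hug⟩ := hmem
    have htsu : t = s * u := by
      apply sq_inj' n hG
      rw [mul_pow, hsa, hug, htb]
      group
    have hs1 : s ≠ 1 := by
      rintro rfl; exact hane (by rw [← hsa]; group)
    have hu1 : u ≠ 1 := by
      rintro rfl
      apply hab
      have : a⁻¹ * b = 1 := by rw [← hug]; group
      rw [← inv_mul_eq_one.mp this]
    have ht1 : t ≠ 1 := by
      rintro rfl; exact hbne (by rw [← htb]; group)
    -- three distinct pairs with product t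
    have hsub : ({((1 : G), t), (t, 1), (s, u)} : Finset (G × G)) ⊆
        (T ×ˢ T).filter (fun p => p.1 * p.2 = t) := by
      intro p hp
      simp only [Finset.mem_insert, Finset.mem_singleton] at hp
      simp only [Finset.mem_filter, Finset.mem_product]
      rcases hp with rfl | rfl | rfl
      · exact ⟨⟨h1, ht⟩, by simp⟩
      · exact ⟨⟨ht, h1⟩, by simp⟩
      · exact ⟨⟨hs, hu⟩, htsu.symm⟩
    have hne1 : ((1 : G), t) ∉ ({(t, 1), (s, u)} : Finset (G × G)) := by
      simp only [Finset.mem_insert, Finset.mem_singleton, Prod.mk.injEq, not_or]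
      exact ⟨fun h => ht1 h.1.symm, fun h => hs1 h.1.symm⟩
    have hne2 : ((t : G), 1) ∉ ({(s, u)} : Finset (G × G)) := by
      simp only [Finset.mem_singleton, Prod.mk.injEq]
      intro h; exact hu1 h.2.symm
    have hcard3 : ({((1 : G), t), (t, 1), (s, u)} : Finset (G × G)).card = 3 := by
      rw [Finset.card_insert_of_notMem hne1, Finset.card_insert_of_notMem hne2,
        Finset.card_singleton]
    have hle := Finset.card_le_card hsub
    rw [hcard3, hcount t ht1] at hle
    split at hle <;> omega
end

section
/- Let G be a finite abelian group of order 2n²+2n+1 and T a subset satisfying conditions (a)-(c) of the lattice tiling group ring equations. Write T^(2)T = ∑_{i=0}^N i·X_i where X_i is the set of elements of G occurring with multiplicity exactly i in the multiset product T^(2)·T. Then ∑_{i=1}^N |X_i| = 4n + 1 + ∑_{s=3}^N ((s−1)(s−2)/2)·|X_s|. -/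
open scoped Pointwise

private lemma cg_aux1 {G : Type*} [CommGroup G] {a b c d : G} (h : a * b = c * d) :
    d * b⁻¹ = a * c⁻¹ := by
  have h1 : d / b = a / c := div_eq_div_iff_mul_eq_mul.mpr (by rw [mul_comm]; exact h.symm)
  rwa [div_eq_mul_inv, div_eq_mul_inv] at h1

private lemma cg_aux2 {G : Type*} [CommGroup G] {a b c d h : G}
    (h1 : a * b⁻¹ = h) (h2 : d * c⁻¹ = h) : a * c = b * d := by
  have h3 : a / b = d / c := by rw [div_eq_mul_inv, div_eq_mul_inv, h1, h2]
  have := div_eq_div_iff_mul_eq_mul.mp h3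
  rw [this, mul_comm]

private lemma nat_aux1 (m : ℕ) : m * m = m + 2 * (m - 1) + (m - 1) * (m - 2) := by
  match m with
  | 0 => rfl
  | 1 => rfl
  | (j+2) =>
    have h1 : j + 2 - 1 = j + 1 := rfl
    have h2 : j + 2 - 2 = j := rfl
    rw [h1, h2]; ring

private lemma nat_aux2 (m : ℕ) : (m - 1) * (m - 2) / 2 * 2 = (m - 1) * (m - 2) := by
  apply Nat.div_mul_cancel
  match m with
  | 0 => simp
  | 1 => simp
  | (j+2) =>
    have h1 : j + 2 - 1 = j + 1 := rfl
    have h2 : j + 2 - 2 = j := rfl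
    rw [h1, h2, mul_comm]
    exact (Nat.even_mul_succ_self j).two_dvd

theorem sum_card_X_eq
    {G : Type*} [CommGroup G] [Fintype G] [DecidableEq G] (n : ℕ) (hn : 2 ≤ n)
    (hG : Fintype.card G = 2 * n ^ 2 + 2 * n + 1)
    (T : Finset G) (hT : T.card = 2 * n + 1)
    (h1 : (1 : G) ∈ T) (hinv : T = T⁻¹)
    (hcount : ∀ g : G, g ≠ 1 →
      ((T ×ˢ T).filter (fun p => p.1 * p.2 = g)).card =
        if g ∈ T.image (· ^ 2) then 1 else 2)
    (X : ℕ → Finset G)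
    (hX : ∀ i, X i = Finset.univ.filter (fun g =>
      (((T.image (· ^ 2)) ×ˢ T).filter (fun p => p.1 * p.2 = g)).card = i))
    : ∑ i ∈ Finset.Icc 1 (2 * n + 1), (X i).card =
      4 * n + 1 + ∑ s ∈ Finset.Icc 3 (2 * n + 1), (s - 1) * (s - 2) / 2 * (X s).card := by
  classical
  set S : Finset G := T.image (· ^ 2) with hSdef
  -- squaring is injective
  have hodd : ¬ (2 ∣ Fintype.card G) := by rw [hG]; omega
  have hsq_inj : Function.Injective (fun g : G => g ^ 2) := by
    intro x y hxy
    simp only at hxy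
    have h2 : (x * y⁻¹) ^ 2 = 1 := by
      rw [mul_pow, hxy, inv_pow, mul_inv_cancel]
    have hdvd : orderOf (x * y⁻¹) ∣ 2 := orderOf_dvd_of_pow_eq_one h2
    have hcd : orderOf (x * y⁻¹) ∣ Fintype.card G := orderOf_dvd_card
    have ho1 : orderOf (x * y⁻¹) = 1 := by
      rcases (Nat.dvd_prime Nat.prime_two).mp hdvd with h | h
      · exact h
      · exact absurd (h ▸ hcd) hodd
    exact mul_inv_eq_one.mp (orderOf_eq_one_iff.mp ho1)
  have hsq_bij : Function.Bijective (fun g : G => g ^ 2) :=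
    Finite.injective_iff_bijective.mp hsq_inj
  set e : G ≃ G := Equiv.ofBijective _ hsq_bij with he
  have he_app : ∀ x : G, e x = x ^ 2 := fun _ => rfl
  have hsymm_sq : ∀ h : G, (e.symm h) ^ 2 = h := fun h => e.apply_symm_apply h
  have hScard : S.card = 2 * n + 1 := by
    rw [hSdef, Finset.card_image_of_injective _ hsq_inj, hT]
  have h1S : (1 : G) ∈ S := Finset.mem_image.mpr ⟨1, h1, one_pow 2⟩
  have hmemT_inv : ∀ x ∈ T, x⁻¹ ∈ T := by
    intro x hx
    rw [hinv]
    exact Finset.mem_inv'.mpr (by simpa using hx)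
  have hsymm_mem : ∀ u ∈ S, e.symm u ∈ T := by
    intro u hu
    obtain ⟨t, ht, ht2⟩ := Finset.mem_image.mp hu
    have : e t = u := ht2
    rw [← this, e.symm_apply_apply]; exact ht
  -- T ∩ S = {1}
  have hTS : ∀ t ∈ T, t ∈ S → t = 1 := by
    intro t ht hts
    by_contra hne
    have hc := hcount t hne
    rw [if_pos hts] at hc
    have hsub : ({((t : G), (1 : G)), ((1 : G), t)} : Finset (G × G)) ⊆
        (T ×ˢ T).filter fun p => p.1 * p.2 = t := by
      intro p hp
      simp only [Finset.mem_insert, Finset.mem_singleton] at hp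
      rcases hp with rfl | rfl <;>
        simp [Finset.mem_filter, Finset.mem_product, ht, h1]
    have h2le : 2 ≤ ((T ×ˢ T).filter fun p => p.1 * p.2 = t).card := by
      have hcc := Finset.card_le_card hsub
      rwa [Finset.card_insert_of_notMem (by simp [Prod.ext_iff, hne]),
        Finset.card_singleton] at hcc
    omega
  -- multiplicity function
  set m : G → ℕ := fun g => ((S ×ˢ T).filter fun p : G × G => p.1 * p.2 = g).card with hm
  have hX' : ∀ i, X i = Finset.univ.filter fun g => m g = i := hX
  have hmle : ∀ g : G, m g ≤ 2 * n + 1 := by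
    intro g
    rw [← hScard]
    apply Finset.card_le_card_of_injOn (fun p => p.1)
    · intro p hp
      simp only [Finset.mem_coe, Finset.mem_filter, Finset.mem_product] at hp
      exact hp.1.1
    · intro p hp q hq hpq
      simp only [Finset.coe_filter, Finset.mem_product, Set.mem_setOf_eq] at hp hq
      have h12 : p.1 * p.2 = q.1 * q.2 := hp.2.trans hq.2.symm
      simp only at hpq
      rw [hpq] at h12
      exact Prod.ext hpq (mul_left_cancel h12)
  have hsum1 : ∑ g : G, m g = (2 * n + 1) * (2 * n + 1) := by
    have hfib := Finset.card_eq_sum_card_fiberwise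
      (f := fun p : G × G => p.1 * p.2) (s := S ×ˢ T) (t := Finset.univ)
      (fun x _ => Finset.mem_univ _)
    rw [Finset.card_product, hScard, hT] at hfib
    exact hfib.symm
  -- representation functions
  set b : G → ℕ := fun h => ((T ×ˢ T).filter fun p : G × G => p.2 * p.1⁻¹ = h).card with hbdef
  set a : G → ℕ := fun h => ((S ×ˢ S).filter fun p : G × G => p.1 * p.2⁻¹ = h).card with hadef
  have hb1 : b 1 = 2 * n + 1 := by
    have hset : ((T ×ˢ T).filter fun p : G × G => p.2 * p.1⁻¹ = 1) =
        T.image (fun t => (t, t)) := by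
      ext p
      simp only [Finset.mem_filter, Finset.mem_product, Finset.mem_image, mul_inv_eq_one]
      constructor
      · rintro ⟨⟨hp1, hp2⟩, hp3⟩
        exact ⟨p.1, hp1, Prod.ext rfl hp3.symm⟩
      · rintro ⟨t, ht, rfl⟩
        exact ⟨⟨ht, ht⟩, rfl⟩
    rw [hbdef]
    simp only
    rw [hset, Finset.card_image_of_injective _ (fun x y hxy => (Prod.ext_iff.mp hxy).1), hT]
  have hbne : ∀ h : G, h ≠ 1 → b h = if h ∈ S then 1 else 2 := by
    intro h hne
    rw [← hcount h hne, hbdef]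
    simp only
    refine Finset.card_bij' (fun p _ => (p.2, p.1⁻¹)) (fun p _ => (p.2⁻¹, p.1)) ?_ ?_ ?_ ?_
    · intro p hp
      simp only [Finset.mem_filter, Finset.mem_product] at hp ⊢
      exact ⟨⟨hp.1.2, hmemT_inv _ hp.1.1⟩, hp.2⟩
    · intro p hp
      simp only [Finset.mem_filter, Finset.mem_product] at hp ⊢
      refine ⟨⟨hmemT_inv _ hp.1.2, hp.1.1⟩, ?_⟩
      simpa [mul_comm] using hp.2
    · intro p hp; simp
    · intro p hp; simp
  have ha_eq : ∀ h : G, a h = b (e.symm h) := by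
    intro h
    rw [hadef, hbdef]
    simp only
    refine Finset.card_bij' (fun p _ => (e.symm p.2, e.symm p.1))
      (fun p _ => (p.2 ^ 2, p.1 ^ 2)) ?_ ?_ ?_ ?_
    · intro p hp
      simp only [Finset.mem_filter, Finset.mem_product] at hp ⊢
      refine ⟨⟨hsymm_mem _ hp.1.2, hsymm_mem _ hp.1.1⟩, ?_⟩
      apply hsq_inj
      simp only
      rw [mul_pow, inv_pow, hsymm_sq, hsymm_sq, hsymm_sq]
      exact hp.2
    · intro p hp
      simp only [Finset.mem_filter, Finset.mem_product] at hp ⊢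
      refine ⟨⟨Finset.mem_image_of_mem _ hp.1.2, Finset.mem_image_of_mem _ hp.1.1⟩, ?_⟩
      rw [← hsymm_sq h, ← inv_pow, ← mul_pow]
      exact congrArg (· ^ 2) hp.2
    · intro p hp
      simp only [Finset.mem_filter, Finset.mem_product] at hp
      have e1 : (e.symm p.1) ^ 2 = p.1 := hsymm_sq _
      have e2 : (e.symm p.2) ^ 2 = p.2 := hsymm_sq _
      simp only
      rw [e1, e2]
    · intro p hp
      simp only
      have e1 : e.symm (p.1 ^ 2) = p.1 := e.symm_apply_apply p.1
      have e2 : e.symm (p.2 ^ 2) = p.2 := e.symm_apply_apply p.2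
      rw [e1, e2]
  set S2 : Finset G := S.image (· ^ 2) with hS2def
  have hS2card : S2.card = 2 * n + 1 := by
    rw [hS2def, Finset.card_image_of_injective _ hsq_inj, hScard]
  have h1S2 : (1 : G) ∈ S2 := Finset.mem_image.mpr ⟨1, h1S, one_pow 2⟩
  have hSS2 : ∀ h : G, h ∈ S → h ∈ S2 → h = 1 := by
    intro h hS hS2
    obtain ⟨t, ht, ht2⟩ := Finset.mem_image.mp hS
    obtain ⟨u, hu, hu2⟩ := Finset.mem_image.mp hS2
    have : t = u := hsq_inj (ht2.trans hu2.symm)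
    have ht1 : t = 1 := hTS t ht (this ▸ hu)
    rw [← ht2, ht1, one_pow]
  have ha1 : a 1 = 2 * n + 1 := by
    rw [ha_eq]
    have : e.symm 1 = 1 := by
      apply hsq_inj
      simp only
      rw [hsymm_sq, one_pow]
    rw [this, hb1]
  have hane : ∀ h : G, h ≠ 1 → a h = if h ∈ S2 then 1 else 2 := by
    intro h hne
    have hk : e.symm h ≠ 1 := by
      intro hk1
      apply hne
      rw [← hsymm_sq h, hk1, one_pow]
    rw [ha_eq, hbne _ hk]
    congr 1
    rw [eq_iff_iff]
    constructor
    · intro hkS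
      rw [hS2def]
      exact Finset.mem_image.mpr ⟨e.symm h, hkS, hsymm_sq h⟩
    · intro hS2m
      obtain ⟨u, hu, hu2⟩ := Finset.mem_image.mp hS2m
      have : u = e.symm h := hsq_inj (hu2.trans (hsymm_sq h).symm)
      exact this ▸ hu
  -- sum of a * b
  have hsum_ab : ∑ h : G, a h * b h = (2 * n + 1) * (2 * n + 1) + 8 * n ^ 2 := by
    rw [← Finset.sum_erase_add _ _ (Finset.mem_univ (1 : G)), ha1, hb1]
    have hE : (Finset.univ.erase (1 : G)).card = 2 * n ^ 2 + 2 * n := by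
      rw [Finset.card_erase_of_mem (Finset.mem_univ _), Finset.card_univ, hG]
      exact Nat.add_sub_cancel _ _
    have hpoint : ∀ h ∈ Finset.univ.erase (1 : G),
        a h * b h + (2 * (if h ∈ S2 then 1 else 0) + 2 * (if h ∈ S then 1 else 0)) = 4 := by
      intro h hh
      have hne : h ≠ 1 := Finset.ne_of_mem_erase hh
      rw [hane h hne, hbne h hne]
      by_cases h2 : h ∈ S2 <;> by_cases hS : h ∈ S
      · exact absurd (hSS2 h hS h2) hne
      · simp [h2, hS]
      · simp [h2, hS]
      · simp [h2, hS]
    have hsum4 : ∑ h ∈ Finset.univ.erase (1 : G),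
        (a h * b h + (2 * (if h ∈ S2 then 1 else 0) + 2 * (if h ∈ S then 1 else 0))) =
        4 * (2 * n ^ 2 + 2 * n) := by
      rw [Finset.sum_congr rfl hpoint, Finset.sum_const, hE, smul_eq_mul, mul_comm]
    rw [Finset.sum_add_distrib, Finset.sum_add_distrib, ← Finset.mul_sum, ← Finset.mul_sum]
      at hsum4
    have hindS : ∑ h ∈ Finset.univ.erase (1 : G), (if h ∈ S then 1 else 0) = 2 * n := by
      rw [← Finset.card_filter]
      have : (Finset.univ.erase (1 : G)).filter (· ∈ S) = S.erase 1 := by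
        ext x
        simp only [Finset.mem_filter, Finset.mem_erase, Finset.mem_univ, true_and, and_comm]
      rw [this, Finset.card_erase_of_mem h1S, hScard]
      exact Nat.add_sub_cancel _ _
    have hindS2 : ∑ h ∈ Finset.univ.erase (1 : G), (if h ∈ S2 then 1 else 0) = 2 * n := by
      rw [← Finset.card_filter]
      have : (Finset.univ.erase (1 : G)).filter (· ∈ S2) = S2.erase 1 := by
        ext x
        simp only [Finset.mem_filter, Finset.mem_erase, Finset.mem_univ, true_and, and_comm]
      rw [this, Finset.card_erase_of_mem h1S2, hS2card]
      exact Nat.add_sub_cancel _ _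
    rw [hindS, hindS2] at hsum4
    have hp : ∃ p, p = n ^ 2 := ⟨_, rfl⟩
    obtain ⟨p, hpe⟩ := hp
    rw [← hpe] at hsum4 ⊢
    have hexp : (2 * n + 1) * (2 * n + 1) = 4 * p + 4 * n + 1 := by rw [hpe]; ring
    rw [hexp]
    omega
  -- sum of squares of multiplicities
  have hQ1 : (((S ×ˢ T) ×ˢ (S ×ˢ T)).filter
      fun pq : (G × G) × (G × G) => pq.1.1 * pq.1.2 = pq.2.1 * pq.2.2).card =
      ∑ g : G, m g * m g := by
    rw [Finset.card_eq_sum_card_fiberwise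
      (f := fun pq : (G × G) × (G × G) => pq.1.1 * pq.1.2)
      (t := Finset.univ) (fun x _ => Finset.mem_univ _)]
    apply Finset.sum_congr rfl
    intro g _
    have hfe : ((((S ×ˢ T) ×ˢ (S ×ˢ T)).filter
        fun pq : (G × G) × (G × G) => pq.1.1 * pq.1.2 = pq.2.1 * pq.2.2).filter
        fun pq => pq.1.1 * pq.1.2 = g) =
        ((S ×ˢ T).filter fun p : G × G => p.1 * p.2 = g) ×ˢ
        ((S ×ˢ T).filter fun p : G × G => p.1 * p.2 = g) := by
      ext pq
      simp only [Finset.mem_filter, Finset.mem_product]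
      constructor
      · rintro ⟨⟨⟨hp, hq⟩, heq⟩, hg⟩
        exact ⟨⟨hp, hg⟩, hq, heq.symm.trans hg⟩
      · rintro ⟨⟨hp, hg1⟩, hq, hg2⟩
        exact ⟨⟨⟨hp, hq⟩, hg1.trans hg2.symm⟩, hg1⟩
    rw [hfe, Finset.card_product]
  have hQ2 : (((S ×ˢ T) ×ˢ (S ×ˢ T)).filter
      fun pq : (G × G) × (G × G) => pq.1.1 * pq.1.2 = pq.2.1 * pq.2.2).card =
      ∑ h : G, a h * b h := by
    rw [Finset.card_eq_sum_card_fiberwise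
      (f := fun pq : (G × G) × (G × G) => pq.1.1 * pq.2.1⁻¹)
      (t := Finset.univ) (fun x _ => Finset.mem_univ _)]
    apply Finset.sum_congr rfl
    intro h _
    rw [hadef, hbdef]
    simp only
    rw [← Finset.card_product]
    refine Finset.card_bij' (fun pq _ => ((pq.1.1, pq.2.1), (pq.1.2, pq.2.2)))
      (fun uv _ => ((uv.1.1, uv.2.1), (uv.1.2, uv.2.2))) ?_ ?_ ?_ ?_
    · intro pq hpq
      simp only [Finset.mem_filter, Finset.mem_product] at hpq ⊢
      obtain ⟨⟨⟨⟨hs, ht⟩, hs', ht'⟩, heq⟩, hfib⟩ := hpq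
      exact ⟨⟨⟨hs, hs'⟩, hfib⟩, ⟨ht, ht'⟩, (cg_aux1 heq).trans hfib⟩
    · intro uv huv
      simp only [Finset.mem_filter, Finset.mem_product] at huv ⊢
      obtain ⟨⟨⟨hu, hu'⟩, hueq⟩, ⟨ht, ht'⟩, hteq⟩ := huv
      exact ⟨⟨⟨⟨hu, ht⟩, hu', ht'⟩, cg_aux2 hueq hteq⟩, hueq⟩
    · intro pq hpq; rfl
    · intro uv huv; rfl
  have hsum2 : ∑ g : G, m g * m g = (2 * n + 1) * (2 * n + 1) + 8 * n ^ 2 := by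
    rw [← hQ1, hQ2, hsum_ab]
  -- final bookkeeping
  have hLHS : ∑ i ∈ Finset.Icc 1 (2 * n + 1), (X i).card =
      (Finset.univ.filter fun g : G => m g ≠ 0).card := by
    simp only [hX']
    rw [Finset.sum_card_fiberwise_eq_card_filter]
    congr 1
    ext g
    simp only [Finset.mem_filter, Finset.mem_univ, true_and, Finset.mem_Icc]
    have := hmle g
    omega
  have hRHS : ∑ s ∈ Finset.Icc 3 (2 * n + 1), (s - 1) * (s - 2) / 2 * (X s).card =
      ∑ g : G, (m g - 1) * (m g - 2) / 2 := by
    simp only [hX']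
    have hstep : ∀ s ∈ Finset.Icc 3 (2 * n + 1),
        (s - 1) * (s - 2) / 2 * (Finset.univ.filter fun g : G => m g = s).card =
        ∑ g ∈ Finset.univ.filter (fun g : G => m g = s), (s - 1) * (s - 2) / 2 := by
      intro s _
      rw [Finset.sum_const, smul_eq_mul, mul_comm]
    rw [Finset.sum_congr rfl hstep,
      Finset.sum_fiberwise_eq_sum_filter' Finset.univ (Finset.Icc 3 (2 * n + 1))
        (fun g => m g) (fun s => (s - 1) * (s - 2) / 2)]
    rw [Finset.sum_filter]
    apply Finset.sum_congr rfl
    intro g _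
    by_cases hmem : m g ∈ Finset.Icc 3 (2 * n + 1)
    · rw [if_pos hmem]
    · rw [if_neg hmem]
      have h2 : m g ≤ 2 := by
        have := hmle g
        simp only [Finset.mem_Icc] at hmem
        omega
      have : m g - 2 = 0 := by omega
      rw [this, mul_zero, Nat.zero_div]
  rw [hLHS, hRHS]
  -- arithmetic conclusion
  have hptw : ∀ g : G, m g * m g =
      m g + 2 * (m g - 1) + 2 * ((m g - 1) * (m g - 2) / 2) := by
    intro g
    rw [nat_aux1 (m g)]
    have := nat_aux2 (m g)
    omega
  have hsplit : ∑ g : G, m g * m g =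
      ∑ g : G, m g + 2 * (∑ g : G, (m g - 1)) + 2 * ∑ g : G, (m g - 1) * (m g - 2) / 2 := by
    rw [Finset.mul_sum, Finset.mul_sum, ← Finset.sum_add_distrib, ← Finset.sum_add_distrib]
    exact Finset.sum_congr rfl fun g _ => hptw g
  have hKD : ∑ g : G, (m g - 1) + (Finset.univ.filter fun g : G => m g ≠ 0).card =
      ∑ g : G, m g := by
    rw [Finset.card_filter, ← Finset.sum_add_distrib]
    apply Finset.sum_congr rfl
    intro g _
    by_cases h0 : m g = 0
    · simp [h0]
    · rw [if_pos h0]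
      omega
  have hp : ∃ p, p = n ^ 2 := ⟨_, rfl⟩
  obtain ⟨p, hpe⟩ := hp
  have hexp : (2 * n + 1) * (2 * n + 1) = 4 * p + 4 * n + 1 := by rw [hpe]; ring
  rw [hexp] at hsum1 hsum2
  rw [← hpe] at hsum2
  omega
end

section
/- Let G be a finite abelian group of odd order and T ⊆ G with e ∈ T, T = T⁻¹, satisfying the group ring equation T² = 2G − T^(2) + 2n with |T| = 2n+1. Then T ∩ T^(3) = {e}, where T^(3) = {t³ : t ∈ T}. -/
open scoped Pointwise

theorem inter_cube_eq_one
    {G : Type*} [CommGroup G] [Fintype G] [DecidableEq G] (n : ℕ) (hn : 2 ≤ n)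
    (hG : Fintype.card G = 2 * n ^ 2 + 2 * n + 1)
    (T : Finset G) (hT : T.card = 2 * n + 1)
    (h1 : (1 : G) ∈ T) (hinv : T = T⁻¹)
    (hcount : ∀ g : G, g ≠ 1 →
      ((T ×ˢ T).filter (fun p => p.1 * p.2 = g)).card =
        if g ∈ T.image (· ^ 2) then 1 else 2)
    : T ∩ T.image (· ^ 3) = {1} := by
  have hsq : ∀ x : G, x ^ 2 = 1 → x = 1 := by
    intro x hx
    have h2 : orderOf x ∣ 2 := orderOf_dvd_of_pow_eq_one hx
    have hc : orderOf x ∣ Fintype.card G := orderOf_dvd_card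
    have hodd : ¬ (2 ∣ Fintype.card G) := by
      rw [hG]; omega
    have : orderOf x ∣ Nat.gcd 2 (Fintype.card G) := Nat.dvd_gcd h2 hc
    have hg1 : Nat.gcd 2 (Fintype.card G) = 1 := by
      rcases (Nat.dvd_prime Nat.prime_two).mp (Nat.gcd_dvd_left 2 (Fintype.card G)) with h | h
      · exact h
      · exact absurd (h ▸ Nat.gcd_dvd_right 2 (Fintype.card G)) hodd
    rw [hg1, Nat.dvd_one] at this
    exact orderOf_eq_one_iff.mp this
  ext g
  simp only [Finset.mem_inter, Finset.mem_image, Finset.mem_singleton]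
  constructor
  · rintro ⟨hgT, s, hsT, rfl⟩
    by_contra hne
    have hs1 : s ≠ 1 := by rintro rfl; simp at hne
    have hs2 : s ^ 2 ≠ 1 := fun h => hs1 (hsq s h)
    have hkey := hcount (s ^ 2) hs2
    rw [if_pos (Finset.mem_image.mpr ⟨s, hsT, rfl⟩)] at hkey
    have hmem1 : (s, s) ∈ (T ×ˢ T).filter (fun p => p.1 * p.2 = s ^ 2) := by
      simp [Finset.mem_filter, Finset.mem_product, hsT, sq]
    have hsinv : s⁻¹ ∈ T := by
      rw [hinv]; exact Finset.inv_mem_inv hsT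
    have hmem2 : (s ^ 3, s⁻¹) ∈ (T ×ˢ T).filter (fun p => p.1 * p.2 = s ^ 2) := by
      simp only [Finset.mem_filter, Finset.mem_product]
      refine ⟨⟨hgT, hsinv⟩, ?_⟩
      group
    have := Finset.card_le_one.mp (le_of_eq hkey) _ hmem1 _ hmem2
    have h2 : s = s⁻¹ := congrArg Prod.snd this
    have : s ^ 2 = 1 := by
      rw [sq]; nth_rewrite 2 [h2]; exact mul_inv_cancel s
    exact hs2 this
  · rintro rfl
    exact ⟨h1, 1, h1, one_pow 3⟩
end

section
/- Suppose n ≡ 1 (mod 3) and G, T satisfy the lattice tiling group ring conditions (|G| = 2n²+2n+1, |T| = 2n+1, e ∈ T, T = T⁻¹, T² = 2G − T^(2) + 2n). Let X_i be the set of elements of G with multiplicity exactly i in T^(2)T. Then X_i = ∅ for all i ≥ 4, and |X_3| = 4n(n−1)/3, |X_0| = 2n(n−1)/3, |X_2| = 4n, |X_1| = 1. -/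
open scoped Pointwise
open Finset

section Aux
variable {G : Type*} [CommGroup G] [DecidableEq G]

lemma cardProd (A B : Finset G) (g : G) :
    ((A ×ˢ B).filter (fun p => p.1 * p.2 = g)).card = (A.filter (fun a => a⁻¹ * g ∈ B)).card := by
  apply Finset.card_nbij' (fun p => p.1) (fun a => (a, a⁻¹ * g))
  · rintro ⟨a, b⟩ hp
    simp only [mem_coe, mem_filter, mem_product] at hp ⊢
    obtain ⟨⟨ha, hb⟩, he⟩ := hp
    refine ⟨ha, ?_⟩
    rw [← he]; simpa using hb
  · intro a ha
    simp only [mem_coe, mem_filter, mem_product] at ha ⊢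
    exact ⟨⟨ha.1, ha.2⟩, by group⟩
  · rintro ⟨a, b⟩ hp
    simp only [mem_coe, mem_filter, mem_product] at hp
    simp [← hp.2]
  · intro a ha; simp

lemma card_filter_product {α β : Type*} [DecidableEq α] [DecidableEq β]
    (A : Finset α) (B : Finset β) (P : α × β → Prop) [DecidablePred P] :
    ((A ×ˢ B).filter P).card = ∑ a ∈ A, (B.filter (fun b => P (a, b))).card := by
  simp only [Finset.card_filter]
  rw [Finset.sum_product]

end Aux

lemma card_mod_three {α : Type*} [DecidableEq α] (A : Finset α) :
    ∀ (f : α → α), (∀ x ∈ A, f x ∈ A) → (∀ x ∈ A, f (f (f x)) = x) →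
    A.card % 3 = (A.filter fun x => f x = x).card % 3 := by
  induction A using Finset.strongInduction with
  | _ A ih =>
    intro f hmem h3
    by_cases hall : ∀ x ∈ A, f x = x
    · rw [Finset.filter_true_of_mem hall]
    · push_neg at hall
      obtain ⟨x, hx, hfx⟩ := hall
      have k : f (f (f x)) = x := h3 x hx
      have hxy : x ≠ f x := fun h => hfx h.symm
      have hxz : x ≠ f (f x) := fun h => hfx ((congrArg f h).trans k)
      have hyz : f x ≠ f (f x) := fun h => hxz ((congrArg f h).trans k).symm
      set O : Finset α := {x, f x, f (f x)} with hO
      have hyA : f x ∈ A := hmem x hx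
      have hzA : f (f x) ∈ A := hmem _ hyA
      have hOsub : O ⊆ A := by
        intro w hw
        simp only [hO, mem_insert, mem_singleton] at hw
        rcases hw with h | h | h <;> subst h <;> assumption
      have hOcard : O.card = 3 := by
        rw [hO, card_insert_of_notMem (by simp [hxy, hxz]),
          card_insert_of_notMem (by simp [hyz]), card_singleton]
      have hnofix : ∀ w ∈ O, f w ≠ w := by
        intro w hw
        simp only [hO, mem_insert, mem_singleton] at hw
        rcases hw with h | h | h <;> subst h
        · exact hfx
        · exact fun h => hxz (k.symm.trans (congrArg f h))
        · exact fun h => hxz (k.symm.trans h)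
      have hmapsd : ∀ w ∈ A \ O, f w ∈ A \ O := by
        intro w hw
        rw [mem_sdiff] at hw ⊢
        refine ⟨hmem w hw.1, ?_⟩
        intro hfwO
        apply hw.2
        have kw : f (f (f w)) = w := h3 w hw.1
        simp only [hO, mem_insert, mem_singleton] at hfwO ⊢
        rcases hfwO with h | h | h
        · right; right; exact (kw.symm.trans (by rw [h]))
        · left; exact kw.symm.trans (by rw [h]; exact k)
        · right; left; exact kw.symm.trans (by rw [h]; exact congrArg f k)
      have hssub : A \ O ⊂ A := by
        apply Finset.sdiff_ssubset hOsub
        simp [hO]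
      have hcard : A.card = (A \ O).card + 3 := by
        rw [card_sdiff_of_subset hOsub, hOcard]
        have := Finset.card_le_card hOsub
        omega
      have hfilter : A.filter (fun w => f w = w) = (A \ O).filter (fun w => f w = w) := by
        ext w
        simp only [mem_filter, mem_sdiff]
        constructor
        · rintro ⟨hwA, hfw⟩
          exact ⟨⟨hwA, fun hwO => hnofix w hwO hfw⟩, hfw⟩
        · rintro ⟨⟨hwA, _⟩, hfw⟩
          exact ⟨hwA, hfw⟩
      have := ih (A \ O) hssub f hmapsd (fun w hw => h3 w (mem_sdiff.mp hw).1)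
      rw [hfilter, hcard]
      omega

set_option maxHeartbeats 4000000 in
theorem X_values_of_n_mod_three_eq_one
    {G : Type*} [CommGroup G] [Fintype G] [DecidableEq G] (n : ℕ) (hn : 2 ≤ n)
    (hG : Fintype.card G = 2 * n ^ 2 + 2 * n + 1)
    (T : Finset G) (hT : T.card = 2 * n + 1)
    (h1 : (1 : G) ∈ T) (hinv : T = T⁻¹)
    (hcount : ∀ g : G, g ≠ 1 →
      ((T ×ˢ T).filter (fun p => p.1 * p.2 = g)).card =
        if g ∈ T.image (· ^ 2) then 1 else 2)
    (hmod : n % 3 = 1)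
    (X : ℕ → Finset G)
    (hX : ∀ i, X i = Finset.univ.filter (fun g =>
      (((T.image (· ^ 2)) ×ˢ T).filter (fun p => p.1 * p.2 = g)).card = i))
    : (∀ i, 4 ≤ i → X i = ∅) ∧
      3 * (X 3).card = 4 * n * (n - 1) ∧
      3 * (X 0).card = 2 * n * (n - 1) ∧
      (X 2).card = 4 * n ∧
      (X 1).card = 1 := by
  classical
  set Sq : Finset G := T.image (· ^ 2) with hSq
  set C3 : Finset G := T.image (· ^ 3) with hC3
  set M : G → ℕ := fun g => (Sq.filter (fun a => a⁻¹ * g ∈ T)).card with hM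
  -- rewrite X in terms of M
  have hXM : ∀ i, X i = Finset.univ.filter (fun g => M g = i) := by
    intro i
    rw [hX i]
    apply Finset.filter_congr
    intro g _
    rw [cardProd]
  -- symmetry of T
  have hTinv : ∀ a : G, a ∈ T ↔ a⁻¹ ∈ T := by
    intro a
    constructor
    · intro ha; rw [hinv]; exact Finset.inv_mem_inv ha
    · intro ha
      have := Finset.inv_mem_inv ha
      rw [inv_inv, ← hinv] at this; exact this
  -- injectivity of squaring and cubing
  have hodd : ¬ (2 ∣ Nat.card G) := by
    rw [Nat.card_eq_fintype_card, hG]; omega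
  have hthree : ¬ (3 ∣ Nat.card G) := by
    rw [Nat.card_eq_fintype_card, hG]
    obtain ⟨k, rfl⟩ : ∃ k, n = 3 * k + 1 := ⟨n / 3, by omega⟩
    have : 2 * (3 * k + 1) ^ 2 + 2 * (3 * k + 1) + 1 = 3 * (6 * k ^ 2 + 6 * k + 1) + 2 := by ring
    rw [this]; omega
  have h2inj : ∀ a b : G, a ^ 2 = b ^ 2 → a = b := by
    have h := Nat.Coprime.pow_left_bijective
      (G := G) (n := 2) (Nat.Coprime.symm ((Nat.prime_two.coprime_iff_not_dvd).mpr hodd))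
    exact fun a b hab => h.injective hab
  have h3inj : ∀ a b : G, a ^ 3 = b ^ 3 → a = b := by
    have h := Nat.Coprime.pow_left_bijective
      (G := G) (n := 3) (Nat.Coprime.symm ((Nat.prime_three.coprime_iff_not_dvd).mpr hthree))
    exact fun a b hab => h.injective hab
  have hScard : Sq.card = 2 * n + 1 := by
    rw [hSq, Finset.card_image_of_injective _ (fun a b hab => h2inj a b hab), hT]
  have hCcard : C3.card = 2 * n + 1 := by
    rw [hC3, Finset.card_image_of_injective _ (fun a b hab => h3inj a b hab), hT]
  have h1S : (1 : G) ∈ Sq := Finset.mem_image.mpr ⟨1, h1, one_pow 2⟩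
  have h1C : (1 : G) ∈ C3 := Finset.mem_image.mpr ⟨1, h1, one_pow 3⟩
  have hSinv : ∀ a : G, a ∈ Sq ↔ a⁻¹ ∈ Sq := by
    intro a
    simp only [hSq, Finset.mem_image]
    constructor
    · rintro ⟨t, ht, rfl⟩
      exact ⟨t⁻¹, (hTinv t).mp ht, by rw [inv_pow]⟩
    · rintro ⟨t, ht, he⟩
      exact ⟨t⁻¹, (hTinv t).mp ht, by rw [inv_pow, he, inv_inv]⟩
  -- the T*T convolution values
  set c2 : G → ℕ := fun h => (T.filter (fun t => t⁻¹ * h ∈ T)).card with hc2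
  have c2val : ∀ h : G, c2 h = (if h ∈ Sq then 1 else 2) + (if h = 1 then 2 * n else 0) := by
    intro h
    by_cases hh : h = 1
    · subst hh
      have : c2 1 = T.card := by
        rw [hc2]
        simp only [mul_one]
        rw [Finset.filter_true_of_mem (fun t ht => (hTinv t).mp ht)]
      rw [this, hT, if_pos h1S, if_pos rfl]
      omega
    · have hcc := hcount h hh
      rw [cardProd] at hcc
      rw [hc2]
      simp only []
      rw [hcc, if_neg hh, add_zero]
  have hc2' : ∀ h : G, (T.filter (fun t => h * t ∈ T)).card = c2 h := by
    intro h
    apply Finset.card_nbij' (fun t => t⁻¹) (fun t => t⁻¹)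
    · intro t ht
      simp only [mem_coe, mem_filter] at ht ⊢
      refine ⟨(hTinv t).mp ht.1, ?_⟩
      rw [inv_inv, mul_comm]
      exact ht.2
    · intro t ht
      simp only [mem_coe, mem_filter] at ht ⊢
      refine ⟨(hTinv t).mp ht.1, ?_⟩
      rw [mul_comm]
      exact ht.2
    · intro t _; simp
    · intro t _; simp
  have hfibT : ∀ a : G, (T.filter (fun g => a⁻¹ * g ∈ T)).card = c2 a := by
    intro a
    apply Finset.card_nbij' (fun g => a * g⁻¹) (fun t => a * t⁻¹)
    · intro g hg
      simp only [mem_coe, mem_filter] at hg ⊢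
      constructor
      · rw [hTinv, show (a * g⁻¹)⁻¹ = a⁻¹ * g by rw [mul_inv, inv_inv]]
        exact hg.2
      · rw [show (a * g⁻¹)⁻¹ * a = g by
          rw [mul_inv, inv_inv, mul_comm a⁻¹ g, mul_assoc, inv_mul_cancel, mul_one]]
        exact hg.1
    · intro t ht
      simp only [mem_coe, mem_filter] at ht ⊢
      constructor
      · rw [mul_comm]
        exact ht.2
      · rw [show a⁻¹ * (a * t⁻¹) = t⁻¹ by rw [inv_mul_cancel_left]]
        exact (hTinv t).mp ht.1
    · intro g _; simp
    · intro t _; simp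
  -- basic sum: total mass
  have E1 : ∑ g : G, M g = (2 * n + 1) ^ 2 := by
    have : ∀ g : G, M g = ∑ a ∈ Sq, (if a⁻¹ * g ∈ T then 1 else 0) := by
      intro g; rw [hM]; simp only []; rw [Finset.card_filter]
    rw [Finset.sum_congr rfl (fun g _ => this g), Finset.sum_comm]
    have inner : ∀ a : G, ∑ g : G, (if a⁻¹ * g ∈ T then (1:ℕ) else 0) = T.card := by
      intro a
      rw [Fintype.sum_equiv (Equiv.mulLeft a⁻¹) _ (fun g => if g ∈ T then (1:ℕ) else 0)
        (by intro x; simp; congr)]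
      simp [← Finset.card_filter]
    rw [Finset.sum_congr rfl (fun a _ => inner a), Finset.sum_const, hScard, hT, smul_eq_mul]
    ring
  -- sum over T
  have E2 : ∑ g ∈ T, M g = 4 * n + 1 := by
    have : ∀ g : G, M g = ∑ a ∈ Sq, (if a⁻¹ * g ∈ T then 1 else 0) := by
      intro g; rw [hM]; simp only []; rw [Finset.card_filter]
    rw [Finset.sum_congr rfl (fun g _ => this g), Finset.sum_comm]
    have inner : ∀ a ∈ Sq, ∑ g ∈ T, (if a⁻¹ * g ∈ T then (1:ℕ) else 0) = c2 a := by
      intro a _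
      rw [← Finset.card_filter]
      exact hfibT a
    rw [Finset.sum_congr rfl inner]
    have : ∀ a ∈ Sq, c2 a = 1 + (if a = 1 then 2 * n else 0) := by
      intro a ha
      rw [c2val a, if_pos ha]
    rw [Finset.sum_congr rfl this, Finset.sum_add_distrib, Finset.sum_const,
      Finset.sum_ite_eq' Sq 1 (fun _ => 2 * n), if_pos h1S, hScard, smul_eq_mul]
    ring
  -- second moment
  have hM1 : (T.filter (· ∈ Sq)).card = M 1 := by
    rw [hM]
    simp only [mul_one]
    rw [Finset.filter_congr (fun a (_ : a ∈ Sq) => by rw [← hTinv a] : ∀ a ∈ Sq, (a⁻¹ ∈ T ↔ a ∈ T)),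
      Finset.filter_mem_eq_inter, Finset.filter_mem_eq_inter, Finset.inter_comm]
  have Qdef : ∑ s ∈ T, (T.filter (fun t => s * t ∈ T)).card + M 1 = 6 * n + 2 := by
    rw [Finset.sum_congr rfl (fun s (_ : s ∈ T) => hc2' s),
      Finset.sum_congr rfl (fun s (_ : s ∈ T) => c2val s), Finset.sum_add_distrib,
      Finset.sum_ite_eq' T 1 (fun _ => 2 * n), if_pos h1]
    have key : ∑ s ∈ T, (if s ∈ Sq then 1 else 2) + (T.filter (· ∈ Sq)).card = 2 * T.card := by
      rw [Finset.card_filter, ← Finset.sum_add_distrib]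
      rw [Finset.sum_congr rfl (fun s (_ : s ∈ T) => by
        split_ifs <;> rfl :
        ∀ s ∈ T, ((if s ∈ Sq then 1 else 2) + (if s ∈ Sq then 1 else 0)) = 2),
        Finset.sum_const, smul_eq_mul, mul_comm]
    rw [hM1] at key
    rw [hT] at key
    omega
  have E3 : ∑ g : G, (M g) ^ 2 + (6 * n + 2) = 12 * n ^ 2 + 4 * n + M 1 + (6 * n + 2) := by
    have sq_expand : ∀ g : G, (M g) ^ 2 =
        ∑ a ∈ Sq, ∑ b ∈ Sq, (if a⁻¹ * g ∈ T ∧ b⁻¹ * g ∈ T then 1 else 0) := by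
      intro g
      rw [hM]
      simp only []
      rw [Finset.card_filter, pow_two, Finset.sum_mul_sum]
      apply Finset.sum_congr rfl
      intro a _
      apply Finset.sum_congr rfl
      intro b _
      by_cases hq1 : a⁻¹ * g ∈ T <;> by_cases hq2 : b⁻¹ * g ∈ T <;> simp [hq1, hq2]
    have step1 : ∑ g : G, (M g) ^ 2 = ∑ a ∈ Sq, ∑ b ∈ Sq, c2 (a * b) := by
      rw [Finset.sum_congr rfl (fun g (_ : g ∈ univ) => sq_expand g), Finset.sum_comm]
      apply Finset.sum_congr rfl
      intro a _
      rw [Finset.sum_comm]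
      -- reindex b ↦ b⁻¹
      apply Finset.sum_nbij' (fun b => b⁻¹) (fun b => b⁻¹)
        (fun b hb => (hSinv b).mp hb) (fun b hb => (hSinv b).mp hb)
        (fun b _ => inv_inv b) (fun b _ => inv_inv b)
      intro b _
      -- ∑ g, ite (a⁻¹g∈T ∧ b⁻¹g∈T) 1 0 = c2 (a * b⁻¹)... careful direction
      -- goal : ∑ g, (if a⁻¹*g∈T ∧ b⁻¹*g∈T then 1 else 0) = c2 (a * b⁻¹)
      rw [Fintype.sum_equiv (Equiv.mulLeft a⁻¹) _
        (fun t => if t ∈ T ∧ (a * b⁻¹) * t ∈ T then (1:ℕ) else 0) ?_]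
      · rw [← Finset.card_filter]
        rw [show (univ.filter (fun t => t ∈ T ∧ (a * b⁻¹) * t ∈ T)) =
            (T.filter (fun t => (a * b⁻¹) * t ∈ T)) by
          ext t; simp [Finset.mem_filter, and_comm]]
        exact hc2' (a * b⁻¹)
      · intro x
        simp only [Equiv.coe_mulLeft]
        have e : a * b⁻¹ * (a⁻¹ * x) = b⁻¹ * x := by
          rw [mul_comm a b⁻¹, mul_assoc, mul_inv_cancel_left]
        simp only [e]
    have step2 : ∑ a ∈ Sq, ∑ b ∈ Sq, c2 (a * b) =
        (∑ a ∈ Sq, ∑ b ∈ Sq, (if a * b ∈ Sq then 1 else 2)) +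
        (∑ a ∈ Sq, ∑ b ∈ Sq, (if a * b = 1 then 2 * n else 0)) := by
      rw [← Finset.sum_add_distrib]
      apply Finset.sum_congr rfl
      intro a _
      rw [← Finset.sum_add_distrib]
      exact Finset.sum_congr rfl fun b _ => c2val (a * b)
    have step3 : ∑ a ∈ Sq, ∑ b ∈ Sq, (if a * b = 1 then 2 * n else 0) = 4 * n ^ 2 + 2 * n := by
      have inner : ∀ a ∈ Sq, ∑ b ∈ Sq, (if a * b = 1 then 2 * n else 0) = 2 * n := by
        intro a ha
        have : ∀ b ∈ Sq, (if a * b = 1 then 2 * n else 0) = (if b = a⁻¹ then 2 * n else 0) := by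
          intro b _
          congr 1
          apply propext
          constructor
          · intro h; exact (eq_inv_of_mul_eq_one_right h).symm ▸ rfl
          · intro h; rw [h, mul_inv_cancel]
        rw [Finset.sum_congr rfl this, Finset.sum_ite_eq' Sq a⁻¹ (fun _ => 2 * n),
          if_pos ((hSinv a).mp ha)]
      rw [Finset.sum_congr rfl inner, Finset.sum_const, hScard, smul_eq_mul]
      ring
    have step4 : (∑ a ∈ Sq, ∑ b ∈ Sq, (if a * b ∈ Sq then 1 else 2)) +
        (∑ a ∈ Sq, ∑ b ∈ Sq, (if a * b ∈ Sq then 1 else 0)) = 8 * n ^ 2 + 8 * n + 2 := by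
      rw [← Finset.sum_add_distrib]
      have : ∀ a ∈ Sq, (∑ b ∈ Sq, (if a * b ∈ Sq then 1 else 2)) +
          (∑ b ∈ Sq, (if a * b ∈ Sq then 1 else 0)) = 2 * (2 * n + 1) := by
        intro a _
        rw [← Finset.sum_add_distrib]
        rw [Finset.sum_congr rfl (fun b (_ : b ∈ Sq) => by
          split_ifs <;> rfl :
          ∀ b ∈ Sq, ((if a * b ∈ Sq then 1 else 2) + (if a * b ∈ Sq then 1 else 0)) = 2),
          Finset.sum_const, hScard, smul_eq_mul]
        ring
      rw [Finset.sum_congr rfl this, Finset.sum_const, hScard, smul_eq_mul]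
      ring
    have step5 : ∑ a ∈ Sq, ∑ b ∈ Sq, (if a * b ∈ Sq then (1:ℕ) else 0) =
        ∑ s ∈ T, ∑ t ∈ T, (if s * t ∈ T then (1:ℕ) else 0) := by
      have l : ∑ a ∈ Sq, ∑ b ∈ Sq, (if a * b ∈ Sq then (1:ℕ) else 0) =
          ((Sq ×ˢ Sq).filter (fun p => p.1 * p.2 ∈ Sq)).card := by
        rw [card_filter_product]
        exact Finset.sum_congr rfl fun a _ => by rw [Finset.card_filter]
      have r : ∑ s ∈ T, ∑ t ∈ T, (if s * t ∈ T then (1:ℕ) else 0) =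
          ((T ×ˢ T).filter (fun p => p.1 * p.2 ∈ T)).card := by
        rw [card_filter_product]
        exact Finset.sum_congr rfl fun a _ => by rw [Finset.card_filter]
      rw [l, r]
      symm
      apply Finset.card_nbij (fun p => (p.1 ^ 2, p.2 ^ 2))
      · rintro ⟨s, t⟩ hp
        simp only [Finset.mem_coe, Finset.mem_filter, Finset.mem_product] at hp ⊢
        refine ⟨⟨Finset.mem_image_of_mem _ hp.1.1, Finset.mem_image_of_mem _ hp.1.2⟩, ?_⟩
        rw [← mul_pow]
        exact Finset.mem_image_of_mem _ hp.2
      · rintro ⟨s, t⟩ hp ⟨s', t'⟩ hp' he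
        simp only [Prod.mk.injEq] at he
        exact Prod.ext (h2inj _ _ he.1) (h2inj _ _ he.2)
      · rintro ⟨x, y⟩ hq
        simp only [Finset.coe_filter, Finset.mem_product, Set.mem_setOf_eq] at hq
        obtain ⟨⟨hx, hy⟩, hxy⟩ := hq
        obtain ⟨s, hs, rfl⟩ := Finset.mem_image.mp hx
        obtain ⟨t, ht, rfl⟩ := Finset.mem_image.mp hy
        obtain ⟨w, hw, hww⟩ := Finset.mem_image.mp (by rwa [← mul_pow] at hxy)
        have hst : s * t ∈ T := by
          rw [← h2inj w (s * t) hww]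
          exact hw
        refine ⟨(s, t), ?_, rfl⟩
        simp only [Finset.coe_filter, Finset.mem_product, Set.mem_setOf_eq]
        exact ⟨⟨hs, ht⟩, hst⟩
    have step6 : ∑ s ∈ T, ∑ t ∈ T, (if s * t ∈ T then (1:ℕ) else 0) + M 1 = 6 * n + 2 := by
      rw [Finset.sum_congr rfl (fun s (_ : s ∈ T) => by rw [← Finset.card_filter] :
        ∀ s ∈ T, ∑ t ∈ T, (if s * t ∈ T then (1:ℕ) else 0) = (T.filter (fun t => s * t ∈ T)).card)]
      exact Qdef
    have e1' : (2 * n + 1) ^ 2 = 4 * n ^ 2 + 4 * n + 1 := by ring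
    omega
  -- mod 3 values
  have hMmod : ∀ g : G, M g % 3 =
      ((if g ∈ T then 2 else 0) + (if g ∈ C3 then 2 else 0)) % 3 := by
    intro g
    set Ng := ∑ a ∈ T, c2 (a⁻¹ * g) with hNg
    have hsum : Ng + M g = 2 * (2 * n + 1) + (if g ∈ T then 2 * n else 0) := by
      have hc : ∀ a ∈ T, c2 (a⁻¹ * g) =
          (if a⁻¹ * g ∈ Sq then 1 else 2) + (if a = g then 2 * n else 0) := by
        intro a _
        rw [c2val]
        congr 1
        exact if_congr inv_mul_eq_one rfl rfl
      rw [hNg, Finset.sum_congr rfl hc, Finset.sum_add_distrib,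
        Finset.sum_ite_eq' T g (fun _ => 2 * n)]
      have hMg : (T.filter (fun a => a⁻¹ * g ∈ Sq)).card = M g := by
        apply Finset.card_nbij' (fun a => a⁻¹ * g) (fun b => b⁻¹ * g)
        · intro a ha
          simp only [mem_coe, mem_filter] at ha ⊢
          refine ⟨ha.2, ?_⟩
          rw [show (a⁻¹ * g)⁻¹ * g = a by rw [mul_inv, inv_inv, inv_mul_cancel_right]]
          exact ha.1
        · intro b hb
          simp only [mem_coe, mem_filter] at hb ⊢
          refine ⟨hb.2, ?_⟩
          rw [show (b⁻¹ * g)⁻¹ * g = b by rw [mul_inv, inv_inv, inv_mul_cancel_right]]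
          exact hb.1
        · intro a _
          dsimp only
          rw [mul_inv, inv_inv, inv_mul_cancel_right]
        · intro b _
          dsimp only
          rw [mul_inv, inv_inv, inv_mul_cancel_right]
      have htwo : ∑ a ∈ T, (if a⁻¹ * g ∈ Sq then 1 else 2) +
          (T.filter (fun a => a⁻¹ * g ∈ Sq)).card = 2 * T.card := by
        rw [Finset.card_filter, ← Finset.sum_add_distrib]
        rw [Finset.sum_congr rfl (fun a (_ : a ∈ T) => by
          split_ifs <;> rfl :
          ∀ a ∈ T, ((if a⁻¹ * g ∈ Sq then 1 else 2) + (if a⁻¹ * g ∈ Sq then 1 else 0)) = 2),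
          Finset.sum_const, smul_eq_mul, mul_comm]
      rw [hMg] at htwo
      rw [hT] at htwo
      omega
    have hNmod : Ng % 3 = (if g ∈ C3 then 1 else 0) := by
      set A : Finset (G × (G × G)) :=
        (T ×ˢ (T ×ˢ T)).filter (fun q => q.1 * (q.2.1 * q.2.2) = g) with hA
      have hAcard : A.card = Ng := by
        rw [hA, card_filter_product, hNg]
        apply Finset.sum_congr rfl
        intro a _
        have : (Finset.filter (fun b : G × G => (a, b).1 * ((a, b).2.1 * (a, b).2.2) = g) (T ×ˢ T))
            = (T ×ˢ T).filter (fun p => p.1 * p.2 = a⁻¹ * g) := by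
          apply Finset.filter_congr
          intro p _
          show a * (p.1 * p.2) = g ↔ p.1 * p.2 = a⁻¹ * g
          exact eq_inv_mul_iff_mul_eq.symm
        rw [this, cardProd]
      have hmod3 := card_mod_three A (fun q => (q.2.1, (q.2.2, q.1)))
        (by
          rintro ⟨a, b, c⟩ hq
          simp only [hA, mem_filter, mem_product] at hq ⊢
          exact ⟨⟨hq.1.2.1, hq.1.2.2, hq.1.1⟩, by rw [← hq.2]; ac_rfl⟩)
        (by rintro ⟨a, b, c⟩ _; rfl)
      have hfix : (A.filter (fun q => (q.2.1, (q.2.2, q.1)) = q)).card =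
          (T.filter (fun a => a * (a * a) = g)).card := by
        apply Finset.card_nbij' (fun q => q.1) (fun a => (a, (a, a)))
        · rintro ⟨a, b, c⟩ hq
          simp only [hA, mem_coe, mem_filter, mem_product, Prod.mk.injEq] at hq ⊢
          obtain ⟨⟨⟨ha, hb, hc⟩, he⟩, hba, hcb, hac⟩ := hq
          subst hba; subst hcb
          exact ⟨ha, he⟩
        · intro a ha
          simp only [mem_coe, mem_filter] at ha
          refine Finset.mem_filter.mpr ⟨Finset.mem_filter.mpr ⟨?_, ?_⟩, ?_⟩
          · exact Finset.mem_product.mpr ⟨ha.1, Finset.mem_product.mpr ⟨ha.1, ha.1⟩⟩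
          · exact ha.2
          · rfl
        · rintro ⟨a, b, c⟩ hq
          simp only [hA, mem_coe, mem_filter, mem_product, Prod.mk.injEq] at hq
          obtain ⟨-, hba, hcb, hac⟩ := hq
          subst hba; subst hcb; rfl
        · intro a _; rfl
      have hcube : (T.filter (fun a => a * (a * a) = g)).card = (if g ∈ C3 then 1 else 0) := by
        have hpred : ∀ a : G, (a * (a * a) = g) ↔ (a ^ 3 = g) := fun a => by rw [pow_three]
        by_cases hg : g ∈ C3
        · rw [hC3] at hg
          obtain ⟨c, hcT, hcg⟩ := Finset.mem_image.mp hg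
          rw [← hC3] at hg
          have : T.filter (fun a => a * (a * a) = g) = {c} := by
            ext x
            simp only [mem_filter, Finset.mem_singleton]
            constructor
            · rintro ⟨hx, he⟩
              exact h3inj x c (((hpred x).mp he).trans hcg.symm)
            · rintro rfl
              exact ⟨hcT, (hpred _).mpr hcg⟩
          rw [this, Finset.card_singleton, if_pos hg]
        · rw [Finset.filter_false_of_mem, Finset.card_empty, if_neg hg]
          intro a ha hcon
          exact hg (Finset.mem_image.mpr ⟨a, ha, (hpred a).mp hcon⟩)
      rw [hAcard, hfix, hcube] at hmod3
      split_ifs at hmod3 ⊢ <;> omega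
    by_cases hgT : g ∈ T <;> by_cases hgC : g ∈ C3 <;>
      simp only [hgT, hgC, if_true, if_false] at hsum hNmod ⊢ <;> omega
  -- assembly
  set u : ℕ := (T ∩ C3).card with hu
  have h1TC : (1 : G) ∈ T ∩ C3 := Finset.mem_inter.mpr ⟨h1, h1C⟩
  have hu1 : 1 ≤ u := Finset.card_pos.mpr ⟨1, h1TC⟩
  set ρ : G → ℤ := fun g =>
    if g ∈ T then (if g ∈ C3 then 1 else 2) else (if g ∈ C3 then 2 else 0) with hρ
  set d : G → ℤ := fun g => (M g : ℤ) - ρ g with hd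
  have hdM : ∀ g : G, (M g : ℤ) = ρ g + d g := by intro g; rw [hd]; ring
  -- pointwise facts
  have hd0 : ∀ g : G, 0 ≤ d g := by
    intro g
    have hm := hMmod g
    rw [hd, hρ]
    by_cases hgT : g ∈ T <;> by_cases hgC : g ∈ C3 <;>
      simp only [hgT, hgC, if_true, if_false] at hm ⊢ <;> omega
  have hd3 : ∀ g : G, (3 : ℤ) ∣ d g := by
    intro g
    have hm := hMmod g
    rw [hd, hρ]
    by_cases hgT : g ∈ T <;> by_cases hgC : g ∈ C3 <;>
      simp only [hgT, hgC, if_true, if_false] at hm ⊢ <;> omega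
  have hd03 : ∀ g : G, d g = 0 ∨ 3 ≤ d g := by
    intro g
    have h1' := hd0 g
    have h2' := hd3 g
    omega
  have hdd3 : ∀ g : G, 3 * d g ≤ d g * d g := by
    intro g
    rcases hd03 g with h | h
    · rw [h]; simp
    · exact mul_le_mul_of_nonneg_right h (hd0 g)
  have hrd0 : ∀ g : G, 0 ≤ ρ g * d g := by
    intro g
    apply mul_nonneg _ (hd0 g)
    rw [hρ]
    by_cases hgT : g ∈ T <;> by_cases hgC : g ∈ C3 <;>
      simp only [hgT, hgC, if_true, if_false] <;> norm_num
  -- indicator sums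
  have sT : ∑ g : G, (if g ∈ T then (1:ℤ) else 0) = (2 * n + 1 : ℤ) := by
    rw [Finset.sum_ite_mem, Finset.univ_inter, Finset.sum_const, hT]
    simp
  have sC : ∑ g : G, (if g ∈ C3 then (1:ℤ) else 0) = (2 * n + 1 : ℤ) := by
    rw [Finset.sum_ite_mem, Finset.univ_inter, Finset.sum_const, hCcard]
    simp
  have sTC : ∑ g : G, (if g ∈ T ∩ C3 then (1:ℤ) else 0) = (u : ℤ) := by
    rw [Finset.sum_ite_mem, Finset.univ_inter, Finset.sum_const, hu]
    simp
  have hρeq : ∀ g : G, ρ g = 2 * (if g ∈ T then (1:ℤ) else 0) +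
      2 * (if g ∈ C3 then (1:ℤ) else 0) - 3 * (if g ∈ T ∩ C3 then (1:ℤ) else 0) := by
    intro g
    rw [hρ]
    by_cases hgT : g ∈ T <;> by_cases hgC : g ∈ C3 <;>
      simp [hgT, hgC, Finset.mem_inter] <;> norm_num
  have hρsq : ∀ g : G, ρ g * ρ g = 4 * (if g ∈ T then (1:ℤ) else 0) +
      4 * (if g ∈ C3 then (1:ℤ) else 0) - 7 * (if g ∈ T ∩ C3 then (1:ℤ) else 0) := by
    intro g
    rw [hρ]
    by_cases hgT : g ∈ T <;> by_cases hgC : g ∈ C3 <;>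
      simp [hgT, hgC, Finset.mem_inter] <;> norm_num
  have Srho : ∑ g : G, ρ g = (8 * n + 4 : ℤ) - 3 * u := by
    rw [Finset.sum_congr rfl (fun g _ => hρeq g)]
    rw [Finset.sum_sub_distrib, Finset.sum_add_distrib, ← Finset.mul_sum, ← Finset.mul_sum,
      ← Finset.mul_sum, sT, sC, sTC]
    ring
  have Srho2 : ∑ g : G, ρ g * ρ g = (16 * n + 8 : ℤ) - 7 * u := by
    rw [Finset.sum_congr rfl (fun g _ => hρsq g)]
    rw [Finset.sum_sub_distrib, Finset.sum_add_distrib, ← Finset.mul_sum, ← Finset.mul_sum,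
      ← Finset.mul_sum, sT, sC, sTC]
    ring
  have SrhoT : ∑ g ∈ T, ρ g = (2 * (2 * n + 1) : ℤ) - u := by
    have : ∀ g ∈ T, ρ g = 2 - (if g ∈ C3 then (1:ℤ) else 0) := by
      intro g hg
      rw [hρ]
      by_cases hgC : g ∈ C3 <;> simp [hg, hgC]
    rw [Finset.sum_congr rfl this, Finset.sum_sub_distrib, Finset.sum_const,
      Finset.sum_ite_mem, Finset.sum_const, hT]
    rw [hu, Finset.inter_comm]
    simp
    ring
  have SM : ∑ g : G, (M g : ℤ) = ((2 * n + 1 : ℤ)) ^ 2 := by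
    exact_mod_cast congrArg (Nat.cast : ℕ → ℤ) E1
  have SMT : ∑ g ∈ T, (M g : ℤ) = (4 * n + 1 : ℤ) := by
    exact_mod_cast congrArg (Nat.cast : ℕ → ℤ) E2
  have E3' : ∑ g : G, (M g) ^ 2 = 12 * n ^ 2 + 4 * n + M 1 := by omega
  have SM2 : ∑ g : G, (M g : ℤ) ^ 2 = 12 * (n:ℤ) ^ 2 + 4 * n + (M 1 : ℤ) := by
    exact_mod_cast congrArg (Nat.cast : ℕ → ℤ) E3'
  -- derived sums
  have Sd : ∑ g : G, d g = (4 * (n:ℤ) ^ 2 - 4 * n - 3) + 3 * u := by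
    have : ∑ g : G, d g = ∑ g : G, (M g : ℤ) - ∑ g : G, ρ g := by
      rw [← Finset.sum_sub_distrib]
    rw [this, SM, Srho]
    ring
  have SdT : ∑ g ∈ T, d g = (u : ℤ) - 1 := by
    have : ∑ g ∈ T, d g = ∑ g ∈ T, (M g : ℤ) - ∑ g ∈ T, ρ g := by
      rw [← Finset.sum_sub_distrib]
    rw [this, SMT, SrhoT]
    ring
  have Sprod : 2 * (∑ g : G, ρ g * d g) + (∑ g : G, d g * d g) =
      (12 * (n:ℤ) ^ 2 - 12 * n - 8) + (M 1 : ℤ) + 7 * u := by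
    have hsq : ∀ g : G, (M g : ℤ) ^ 2 = ρ g * ρ g + (2 * (ρ g * d g) + d g * d g) := by
      intro g
      rw [hdM g]
      ring
    have := SM2
    rw [Finset.sum_congr rfl (fun g _ => hsq g), Finset.sum_add_distrib,
      Finset.sum_add_distrib, ← Finset.mul_sum, Srho2] at this
    linarith
  -- inequalities
  have A1 : (u : ℤ) - 1 ≤ ∑ g : G, ρ g * d g := by
    have step_a : ∑ g ∈ T, d g ≤ ∑ g ∈ T, ρ g * d g := by
      apply Finset.sum_le_sum
      intro g hg
      have hρ1 : (1:ℤ) ≤ ρ g := by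
        rw [hρ]
        by_cases hgC : g ∈ C3 <;> simp [hg, hgC]
      calc d g = 1 * d g := by ring
        _ ≤ ρ g * d g := mul_le_mul_of_nonneg_right hρ1 (hd0 g)
    have step_b : ∑ g ∈ T, ρ g * d g ≤ ∑ g : G, ρ g * d g :=
      Finset.sum_le_sum_of_subset_of_nonneg (Finset.subset_univ T)
        (fun g _ _ => hrd0 g)
    rw [← SdT]
    exact le_trans step_a step_b
  have A2 : 3 * ((4 * (n:ℤ) ^ 2 - 4 * n - 3) + 3 * u) ≤ ∑ g : G, d g * d g := by
    rw [← Sd, Finset.mul_sum]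
    exact Finset.sum_le_sum (fun g _ => hdd3 g)
  have hd1T : d 1 ≤ ∑ g ∈ T, d g := Finset.single_le_sum (fun g _ => hd0 g) h1
  have hd1T' : d 1 ≤ (u : ℤ) - 1 := by rw [← SdT]; exact hd1T
  have hM1d : (M 1 : ℤ) = 1 + d 1 := by
    have : ρ 1 = 1 := by rw [hρ]; simp [h1, h1C]
    rw [hdM 1, this]
  -- conclude u = 1
  have huZ : (u : ℤ) = 1 := by
    have h4 : (0:ℤ) ≤ d 1 := hd0 1
    have : (u:ℤ) ≤ 1 := by linarith
    have : (1:ℤ) ≤ u := by exact_mod_cast hu1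
    linarith [hd1T', h4]
  have hueq : u = 1 := by exact_mod_cast huZ
  have hd1 : d 1 = 0 := by
    have := hd0 1
    rw [huZ] at hd1T'
    linarith
  have hM1val : M 1 = 1 := by
    have : (M 1 : ℤ) = 1 := by rw [hM1d, hd1]; ring
    exact_mod_cast this
  -- equality cases
  have hR0 : ∑ g : G, ρ g * d g = 0 := by
    have hRn : 0 ≤ ∑ g : G, ρ g * d g := Finset.sum_nonneg (fun g _ => hrd0 g)
    rw [huZ, hM1val] at Sprod
    rw [huZ] at A2
    push_cast at Sprod
    linarith
  have hQ3 : ∑ g : G, d g * d g = 3 * ∑ g : G, d g := by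
    rw [Sd, huZ]
    rw [huZ, hM1val] at Sprod
    rw [huZ] at A2
    push_cast at Sprod
    linarith
  have hrdz : ∀ g : G, ρ g * d g = 0 := by
    have := (Finset.sum_eq_zero_iff_of_nonneg (fun g (_ : g ∈ univ) => hrd0 g)).mp hR0
    exact fun g => this g (Finset.mem_univ g)
  have hddz : ∀ g : G, d g * (d g - 3) = 0 := by
    have hz : ∑ g : G, (d g * d g - 3 * d g) = 0 := by
      rw [Finset.sum_sub_distrib, ← Finset.mul_sum, hQ3]
      ring
    have := (Finset.sum_eq_zero_iff_of_nonneg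
      (fun g (_ : g ∈ univ) => sub_nonneg.mpr (hdd3 g))).mp hz
    intro g
    have h := this g (Finset.mem_univ g)
    have : d g * (d g - 3) = d g * d g - 3 * d g := by ring
    rw [this, h]
  -- T ∩ C3 = {1}
  have hTC1 : T ∩ C3 = {1} := by
    obtain ⟨a, ha⟩ := Finset.card_eq_one.mp hueq
    rw [ha] at h1TC
    rw [ha, Finset.mem_singleton.mp h1TC]
  -- classification
  have hcls2 : ∀ g : G, g ≠ 1 → (g ∈ T ∨ g ∈ C3) → M g = 2 := by
    intro g hg1 hgm
    have hρ2 : ρ g = 2 := by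
      have hnboth : ¬ (g ∈ T ∧ g ∈ C3) := by
        rintro ⟨hgT, hgC⟩
        exact hg1 (Finset.mem_singleton.mp (hTC1 ▸ Finset.mem_inter.mpr ⟨hgT, hgC⟩))
      rw [hρ]
      rcases hgm with h | h
      · have : g ∉ C3 := fun hc => hnboth ⟨h, hc⟩
        simp [h, this]
      · have : g ∉ T := fun hc => hnboth ⟨hc, h⟩
        simp [h, this]
    have hdz : d g = 0 := by
      have := hrdz g
      rw [hρ2] at this
      linarith
    have : (M g : ℤ) = 2 := by rw [hdM g, hρ2, hdz]; ring
    exact_mod_cast this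
  have hcls0 : ∀ g : G, g ∉ T → g ∉ C3 → M g = 0 ∨ M g = 3 := by
    intro g hgT hgC
    have hρ0 : ρ g = 0 := by rw [hρ]; simp [hgT, hgC]
    have hMd : (M g : ℤ) = d g := by rw [hdM g, hρ0]; ring
    rcases mul_eq_zero.mp (hddz g) with h | h
    · left
      have : (M g : ℤ) = 0 := by rw [hMd, h]
      exact_mod_cast this
    · right
      have : (M g : ℤ) = 3 := by rw [hMd]; linarith
      exact_mod_cast this
  have hle : ∀ g : G, M g ≤ 3 := by
    intro g
    by_cases hg1 : g = 1
    · rw [hg1, hM1val]; omega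
    · by_cases hgm : g ∈ T ∨ g ∈ C3
      · rw [hcls2 g hg1 hgm]; omega
      · push_neg at hgm
        rcases hcls0 g hgm.1 hgm.2 with h | h <;> omega
  -- count X 1
  have hX1 : Finset.univ.filter (fun g => M g = 1) = {1} := by
    ext g
    simp only [Finset.mem_filter, Finset.mem_univ, true_and, Finset.mem_singleton]
    constructor
    · intro hM1'
      by_contra hg1
      by_cases hgm : g ∈ T ∨ g ∈ C3
      · rw [hcls2 g hg1 hgm] at hM1'; omega
      · push_neg at hgm
        rcases hcls0 g hgm.1 hgm.2 with h | h <;> omega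
    · rintro rfl
      exact hM1val
  -- count X 2
  have hX2 : Finset.univ.filter (fun g => M g = 2) = (T ∪ C3).erase 1 := by
    ext g
    simp only [Finset.mem_filter, Finset.mem_univ, true_and, Finset.mem_erase,
      Finset.mem_union]
    constructor
    · intro hM2
      have hg1 : g ≠ 1 := by
        rintro rfl
        rw [hM1val] at hM2
        omega
      refine ⟨hg1, ?_⟩
      by_contra hgm
      push_neg at hgm
      rcases hcls0 g hgm.1 hgm.2 with h | h <;> omega
    · rintro ⟨hg1, hgm⟩
      exact hcls2 g hg1 hgm
  have hX2card : ((T ∪ C3).erase 1).card = 4 * n := by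
    have hun : (T ∪ C3).card + (T ∩ C3).card = T.card + C3.card :=
      Finset.card_union_add_card_inter T C3
    rw [← hu, hueq, hT, hCcard] at hun
    rw [Finset.card_erase_of_mem (Finset.mem_union_left _ h1)]
    omega
  -- count X 3
  have hdval : ∀ g : G, d g = if M g = 3 then (3:ℤ) else 0 := by
    intro g
    by_cases hg1 : g = 1
    · rw [hg1, hd1, if_neg (by rw [hM1val]; omega)]
    · by_cases hgm : g ∈ T ∨ g ∈ C3
      · have hm2 := hcls2 g hg1 hgm
        have hρ2 : (M g : ℤ) - ρ g = d g := by rw [hd]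
        rcases mul_eq_zero.mp (hddz g) with h | h
        · rw [h, if_neg (by omega)]
        · exfalso
          have hd3' : d g = 3 := by linarith
          have hMeq : (M g : ℤ) = ρ g + d g := hdM g
          rw [hm2, hd3'] at hMeq
          have h0 : 0 ≤ ρ g := by
            rw [hρ]
            by_cases hgT : g ∈ T <;> by_cases hgC : g ∈ C3 <;>
              simp [hgT, hgC] <;> norm_num
          push_cast at hMeq
          linarith
      · push_neg at hgm
        have hρ0 : ρ g = 0 := by rw [hρ]; simp [hgm.1, hgm.2]
        have hMd : (M g : ℤ) = d g := by rw [hdM g, hρ0]; ring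
        rcases hcls0 g hgm.1 hgm.2 with h | h
        · rw [if_neg (by omega)]
          rw [h] at hMd
          push_cast at hMd
          linarith
        · rw [if_pos h]
          rw [h] at hMd
          push_cast at hMd
          linarith
  have hX3card : 3 * ((Finset.univ.filter (fun g => M g = 3)).card) + 4 * n = 4 * n ^ 2 := by
    have hsd : ∑ g : G, d g = 3 * ((Finset.univ.filter (fun g => M g = 3)).card : ℤ) := by
      rw [Finset.sum_congr rfl (fun g _ => hdval g), ← Finset.sum_filter,
        Finset.sum_const, nsmul_eq_mul]
      push_cast
      ring
    rw [Sd, huZ] at hsd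
    have : 3 * (((Finset.univ.filter (fun g => M g = 3)).card : ℤ)) + 4 * n = 4 * (n:ℤ)^2 := by
      linarith
    exact_mod_cast this
  -- partition
  have hpart : (Finset.univ.filter (fun g => M g = 0)).card +
      (Finset.univ.filter (fun g => M g = 1)).card +
      (Finset.univ.filter (fun g => M g = 2)).card +
      (Finset.univ.filter (fun g => M g = 3)).card = 2 * n ^ 2 + 2 * n + 1 := by
    have hone : ∀ g : G, (if M g = 0 then 1 else 0) + (if M g = 1 then 1 else 0) +
        (if M g = 2 then 1 else 0) + (if M g = 3 then 1 else 0) = 1 := by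
      intro g
      have := hle g
      split_ifs <;> omega
    have : ∑ g : G, ((if M g = 0 then 1 else 0) + (if M g = 1 then 1 else 0) +
        (if M g = 2 then 1 else 0) + (if M g = 3 then 1 else 0)) = Fintype.card G := by
      rw [Finset.sum_congr rfl (fun g _ => hone g), Finset.sum_const, Finset.card_univ,
        smul_eq_mul, mul_one]
    rw [Finset.sum_add_distrib, Finset.sum_add_distrib, Finset.sum_add_distrib] at this
    simp only [← Finset.card_filter] at this
    rw [hG] at this
    exact this
  -- final goals
  refine ⟨?_, ?_, ?_, ?_, ?_⟩
  · intro i hi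
    rw [hXM i]
    rw [Finset.filter_false_of_mem]
    intro g _
    have := hle g
    omega
  · rw [hXM 3]
    have e2 : 4 * n * (n - 1) + 4 * n = 4 * n ^ 2 := by
      obtain ⟨m, rfl⟩ : ∃ m, n = m + 1 := ⟨n - 1, by omega⟩
      simp [Nat.add_sub_cancel]
      ring
    omega
  · rw [hXM 0]
    have e3 : 2 * n * (n - 1) + 2 * n = 2 * n ^ 2 := by
      obtain ⟨m, rfl⟩ : ∃ m, n = m + 1 := ⟨n - 1, by omega⟩
      simp [Nat.add_sub_cancel]
      ring
    have hx1 : (Finset.univ.filter (fun g => M g = 1)).card = 1 := by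
      rw [hX1]; rfl
    have hx2 : (Finset.univ.filter (fun g => M g = 2)).card = 4 * n := by
      rw [hX2]; exact hX2card
    omega
  · rw [hXM 2, hX2]
    exact hX2card
  · rw [hXM 1, hX1]
    rfl
end

section
/- Suppose n ≡ 2 (mod 3) and G, T satisfy the lattice tiling group ring conditions (|G| = 2n²+2n+1, |T| = 2n+1, e ∈ T, T = T⁻¹, T² = 2G − T^(2) + 2n). Let X_i be the set of elements of G with multiplicity exactly i in T^(2)T. Then X_i = ∅ for all i ≥ 5 and for i = 0, and |X_1| = (4n²−2n+3)/3, |X_2| = |X_3| = 2n, |X_4| = (2n²−4n)/3. -/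
open Finset
open scoped Pointwise

lemma card_modEq_three' {α : Type*} [DecidableEq α] (f : α → α) :
    ∀ (s : Finset α), (∀ x ∈ s, f x ∈ s) → (∀ x ∈ s, f (f (f x)) = x) →
    s.card % 3 = (s.filter (fun x => f x = x)).card % 3 := by
  intro s
  induction s using Finset.strongInductionOn with
  | _ s ih =>
    intro hmaps h3
    by_cases hfix : ∀ x ∈ s, f x = x
    · rw [Finset.filter_true_of_mem hfix]
    · push_neg at hfix
      obtain ⟨x, hx, hne⟩ := hfix
      have hfx : f x ∈ s := hmaps x hx
      have hffx : f (f x) ∈ s := hmaps _ hfx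
      have h1 : f (f x) ≠ x := by
        intro h
        apply hne
        have := h3 x hx
        rw [h] at this
        exact this
      have h2 : f (f x) ≠ f x := by
        intro h
        apply hne
        have := h3 x hx
        rw [h] at this
        nth_rewrite 2 [← this]
        rw [h]
      -- triple
      set t := s \ {x, f x, f (f x)} with ht
      have hsub : {x, f x, f (f x)} ⊆ s := by
        intro y hy
        simp only [Finset.mem_insert, Finset.mem_singleton] at hy
        rcases hy with rfl | rfl | rfl <;> assumption
      have hcard3 : ({x, f x, f (f x)} : Finset α).card = 3 := by
        rw [Finset.card_insert_of_notMem, Finset.card_insert_of_notMem, Finset.card_singleton]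
        · simp [h2.symm]
        · simp [Ne.symm hne, Ne.symm h1]
      have htcard : t.card = s.card - 3 := by
        rw [ht, Finset.card_sdiff_of_subset hsub, hcard3]
      have hts : t ⊂ s := by
        rw [ht]
        refine Finset.sdiff_ssubset hsub ?_
        exact ⟨x, by simp⟩
      -- f maps triple to triple (as a cycle); f maps t to t
      have hmapt : ∀ y ∈ t, f y ∈ t := by
        intro y hy
        rw [ht, Finset.mem_sdiff] at hy ⊢
        obtain ⟨hys, hynot⟩ := hy
        refine ⟨hmaps y hys, ?_⟩
        simp only [Finset.mem_insert, Finset.mem_singleton] at hynot ⊢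
        push_neg at hynot ⊢
        obtain ⟨n1, n2, n3⟩ := hynot
        refine ⟨?_, ?_, ?_⟩
        · intro h
          apply n3
          have := h3 y hys
          rw [h] at this
          rw [← this]
        · intro h
          apply n1
          have hy3 := h3 y hys
          have hx3 := h3 x hx
          calc y = f (f (f y)) := (h3 y hys).symm
          _ = f (f (f x)) := by rw [h]
          _ = x := h3 x hx
        · intro h
          apply n2
          calc y = f (f (f y)) := (h3 y hys).symm
          _ = f (f (f (f x))) := by rw [h]
          _ = f x := by rw [h3 x hx]
      have h3t : ∀ y ∈ t, f (f (f y)) = y := fun y hy => h3 y (Finset.mem_sdiff.1 hy).1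
      have hrec := ih t hts hmapt h3t
      -- filter t = filter s
      have hfilter : t.filter (fun y => f y = y) = s.filter (fun y => f y = y) := by
        rw [ht]
        ext y
        simp only [Finset.mem_filter, Finset.mem_sdiff, Finset.mem_insert, Finset.mem_singleton]
        constructor
        · rintro ⟨⟨hys, -⟩, hfy⟩; exact ⟨hys, hfy⟩
        · rintro ⟨hys, hfy⟩
          refine ⟨⟨hys, ?_⟩, hfy⟩
          push_neg
          refine ⟨?_, ?_, ?_⟩
          · rintro rfl; exact hne hfy
          · rintro rfl
            apply h2
            rw [hfy]
          · rintro rfl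
            have h3x := h3 x hx
            rw [hfy] at h3x
            exact h1 h3x
      rw [hfilter] at hrec
      have hge : 3 ≤ s.card := by
        calc 3 = ({x, f x, f (f x)} : Finset α).card := hcard3.symm
        _ ≤ s.card := Finset.card_le_card hsub
      omega

lemma pow_inj_of_not_dvd {G : Type*} [CommGroup G] [Fintype G] {k : ℕ} (hp : k.Prime)
    (h : ¬ (k ∣ Fintype.card G)) {x y : G} (h2 : x ^ k = y ^ k) : x = y := by
  have hxy : (x * y⁻¹) ^ k = 1 := by
    rw [mul_pow, inv_pow, h2, mul_inv_cancel]
  have hdvd : orderOf (x * y⁻¹) ∣ k := orderOf_dvd_of_pow_eq_one hxy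
  rcases (Nat.dvd_prime hp).1 hdvd with h1 | hk
  · have : x * y⁻¹ = 1 := orderOf_eq_one_iff.1 h1
    have := mul_eq_one_iff_eq_inv.1 this
    simpa using this
  · exfalso
    exact h (hk ▸ orderOf_dvd_card)

set_option maxHeartbeats 4000000 in
theorem X_values_of_n_mod_three_eq_two
    {G : Type*} [CommGroup G] [Fintype G] [DecidableEq G] (n : ℕ) (hn : 2 ≤ n)
    (hG : Fintype.card G = 2 * n ^ 2 + 2 * n + 1)
    (T : Finset G) (hT : T.card = 2 * n + 1)
    (h1 : (1 : G) ∈ T) (hinv : T = T⁻¹)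
    (hcount : ∀ g : G, g ≠ 1 →
      ((T ×ˢ T).filter (fun p => p.1 * p.2 = g)).card =
        if g ∈ T.image (· ^ 2) then 1 else 2)
    (hmod : n % 3 = 2)
    (X : ℕ → Finset G)
    (hX : ∀ i, X i = Finset.univ.filter (fun g =>
      (((T.image (· ^ 2)) ×ˢ T).filter (fun p => p.1 * p.2 = g)).card = i))
    : (∀ i, 5 ≤ i → X i = ∅) ∧ X 0 = ∅ ∧
      3 * (X 1).card = 4 * n ^ 2 - 2 * n + 3 ∧
      (X 2).card = 2 * n ∧
      (X 3).card = 2 * n ∧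
      3 * (X 4).card = 2 * n ^ 2 - 4 * n := by
  have hcard2 : Fintype.card G % 2 = 1 := by rw [hG]; omega
  have hcard3 : Fintype.card G % 3 = 1 := by
    obtain ⟨q, rfl⟩ : ∃ q, n = 3 * q + 2 := ⟨n / 3, by omega⟩
    rw [hG]; ring_nf; omega
  have sq_inj : ∀ x y : G, x ^ 2 = y ^ 2 → x = y := by
    intro x y h
    exact pow_inj_of_not_dvd Nat.prime_two (by omega) h
  have cube_inj : ∀ x y : G, x ^ 3 = y ^ 3 → x = y := by
    intro x y h
    exact pow_inj_of_not_dvd Nat.prime_three (by omega) h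
  have hinv' : ∀ a : G, a ∈ T ↔ a⁻¹ ∈ T := by
    intro a
    constructor <;> intro ha
    · rw [hinv]; exact Finset.inv_mem_inv ha
    · rw [hinv] at ha; simpa using ha
  set Q := T.image (· ^ 2) with hQdef
  set D := T.image (· ^ 3) with hDdef
  have h1Q : (1 : G) ∈ Q := by
    rw [hQdef]; exact Finset.mem_image.2 ⟨1, h1, one_pow 2⟩
  have h1D : (1 : G) ∈ D := by
    rw [hDdef]; exact Finset.mem_image.2 ⟨1, h1, one_pow 3⟩
  have hQcard : Q.card = 2 * n + 1 := by
    rw [hQdef, Finset.card_image_of_injective _ (fun x y => sq_inj x y), hT]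
  have hDcard : D.card = 2 * n + 1 := by
    rw [hDdef, Finset.card_image_of_injective _ (fun x y => cube_inj x y), hT]
  have hrQ : ∀ g : G, g ≠ 1 → g ∈ Q →
      ((T ×ˢ T).filter (fun p => p.1 * p.2 = g)).card = 1 := by
    intro g hg hgQ
    simpa [hgQ] using hcount g hg
  have hrN : ∀ g : G, g ≠ 1 → g ∉ Q →
      ((T ×ˢ T).filter (fun p => p.1 * p.2 = g)).card = 2 := by
    intro g hg hgQ
    simpa [hgQ] using hcount g hg
  have hr1 : ((T ×ˢ T).filter (fun p => p.1 * p.2 = 1)).card = 2 * n + 1 := by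
    rw [← hT]
    apply Finset.card_bij (fun (p : G × G) _ => p.1)
    · rintro ⟨a, b⟩ hp
      simp only [Finset.mem_filter, Finset.mem_product] at hp
      exact hp.1.1
    · rintro ⟨a, b⟩ ha ⟨a2, b2⟩ ha2 h
      simp only [Finset.mem_filter, Finset.mem_product] at ha ha2
      dsimp at h
      subst h
      have : b = b2 := by
        have hb : a * b = 1 := ha.2
        have hb2 : a * b2 = 1 := ha2.2
        exact mul_left_cancel (hb.trans hb2.symm)
      simp [this]
    · intro t ht
      refine ⟨(t, t⁻¹), ?_, rfl⟩
      simp only [Finset.mem_filter, Finset.mem_product]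
      exact ⟨⟨ht, (hinv' t).1 ht⟩, mul_inv_cancel t⟩
  have hS2 : ∀ a b : G, a ∈ T → b ∈ T → a * b ∈ T → a * b ≠ 1 → a = 1 ∨ b = 1 := by
    intro a b haT hbT habT hab1
    by_contra hcon
    push_neg at hcon
    obtain ⟨ha1, hb1⟩ := hcon
    have hmem1 : ((1 : G), a * b) ∈ (T ×ˢ T).filter (fun p => p.1 * p.2 = a * b) := by
      simp only [Finset.mem_filter, Finset.mem_product]
      exact ⟨⟨h1, habT⟩, one_mul _⟩
    have hmem2 : (a * b, (1 : G)) ∈ (T ×ˢ T).filter (fun p => p.1 * p.2 = a * b) := by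
      simp only [Finset.mem_filter, Finset.mem_product]
      exact ⟨⟨habT, h1⟩, mul_one _⟩
    have hmem3 : (a, b) ∈ (T ×ˢ T).filter (fun p => p.1 * p.2 = a * b) :=
      Finset.mem_filter.2 ⟨Finset.mem_product.2 ⟨haT, hbT⟩, rfl⟩
    have hne12 : ((1 : G), a * b) ≠ (a * b, (1 : G)) := by
      intro h
      exact hab1 (congrArg Prod.fst h).symm
    have hne13 : ((1 : G), a * b) ≠ (a, b) := by
      intro h
      exact ha1 (congrArg Prod.fst h).symm
    have hne23 : (a * b, (1 : G)) ≠ (a, b) := by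
      intro h
      exact hb1 (congrArg Prod.snd h).symm
    have hsub : ({((1 : G), a * b), (a * b, (1 : G)), (a, b)} : Finset (G × G)) ⊆
        (T ×ˢ T).filter (fun p => p.1 * p.2 = a * b) := by
      intro p hp
      simp only [Finset.mem_insert, Finset.mem_singleton] at hp
      rcases hp with rfl | rfl | rfl <;> assumption
    have hcard3 : ({((1 : G), a * b), (a * b, (1 : G)), (a, b)} : Finset (G × G)).card = 3 := by
      rw [Finset.card_insert_of_notMem, Finset.card_insert_of_notMem, Finset.card_singleton]
      · simp [hne23]
      · simp [hne12, hne13]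
    have hge := Finset.card_le_card hsub
    rw [hcard3] at hge
    by_cases hQm : a * b ∈ Q
    · rw [hrQ _ hab1 hQm] at hge; omega
    · rw [hrN _ hab1 hQm] at hge; omega
  have hTQ : ∀ a : G, a ∈ T → a ∈ Q → a = 1 := by
    intro a haT haQ
    rw [hQdef] at haQ
    obtain ⟨u, huT, hu⟩ := Finset.mem_image.1 haQ
    by_cases ha1 : a = 1
    · exact ha1
    · have huu : u * u = a := by rw [← hu, pow_two]
      rcases hS2 u u huT huT (huu ▸ haT) (huu.symm ▸ ha1) with h | h <;>
        rw [← hu, h, one_pow]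
  have hT3T : ∀ t : G, t ∈ T → t ^ 3 ∈ T → t = 1 := by
    intro t htT ht3T
    by_contra ht1
    have ht2 : t ^ 2 ≠ 1 := by
      intro h
      exact ht1 (sq_inj t 1 (by rw [h, one_pow]))
    have ht2Q : t ^ 2 ∈ Q := hQdef ▸ Finset.mem_image.2 ⟨t, htT, rfl⟩
    have hr := hrQ _ ht2 ht2Q
    have hmem1 : (t, t) ∈ (T ×ˢ T).filter (fun p => p.1 * p.2 = t ^ 2) := by
      simp only [Finset.mem_filter, Finset.mem_product]
      exact ⟨⟨htT, htT⟩, (sq t).symm⟩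
    have hmem2 : (t ^ 3, t⁻¹) ∈ (T ×ˢ T).filter (fun p => p.1 * p.2 = t ^ 2) := by
      simp only [Finset.mem_filter, Finset.mem_product]
      refine ⟨⟨ht3T, (hinv' t).1 htT⟩, ?_⟩
      group
    have := Finset.card_le_one.1 (le_of_eq hr) _ hmem2 _ hmem1
    simp only [Prod.ext_iff] at this
    obtain ⟨h3, hinvt⟩ := this
    apply ht2
    rw [pow_two]
    nth_rewrite 2 [← hinvt]
    exact mul_inv_cancel t
  have hTD : ∀ g : G, g ∈ T → g ∈ D → g = 1 := by
    intro g hgT hgD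
    rw [hDdef] at hgD
    obtain ⟨t, htT, ht⟩ := Finset.mem_image.1 hgD
    rw [← ht, hT3T t htT (ht ▸ hgT), one_pow]
  have hm1 : ((Q ×ˢ T).filter (fun p => p.1 * p.2 = (1 : G))).card = 1 := by
    have : (Q ×ˢ T).filter (fun p => p.1 * p.2 = 1) = {((1 : G), (1 : G))} := by
      ext ⟨a, t⟩
      simp only [Finset.mem_filter, Finset.mem_product, Finset.mem_singleton, Prod.mk.injEq]
      constructor
      · rintro ⟨⟨haQ, htT⟩, hprod⟩
        have hat : a = t⁻¹ := by
          rw [eq_inv_iff_mul_eq_one]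
          exact hprod
        have haT : a ∈ T := by rw [hat]; exact (hinv' t).1 htT
        have ha1 : a = 1 := hTQ a haT haQ
        refine ⟨ha1, ?_⟩
        rw [ha1, one_mul] at hprod
        exact hprod
      · rintro ⟨rfl, rfl⟩
        exact ⟨⟨h1Q, h1⟩, one_mul 1⟩
    rw [this, Finset.card_singleton]
  have hmT : ∀ g : G, g ∈ T → g ≠ 1 →
      ((Q ×ˢ T).filter (fun p => p.1 * p.2 = g)).card = 2 := by
    intro g hgT hg1
    have hkey : (Q ×ˢ T).filter (fun p => p.1 * p.2 = g) = {((1 : G), g), (g ^ 2, g⁻¹)} := by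
      ext ⟨a, t⟩
      simp only [Finset.mem_filter, Finset.mem_product, Finset.mem_insert, Finset.mem_singleton,
        Prod.mk.injEq]
      constructor
      · rintro ⟨⟨haQ, htT⟩, hprod⟩
        rw [hQdef] at haQ
        obtain ⟨u, huT, hu⟩ := Finset.mem_image.1 haQ
        by_cases hu1 : u = 1
        · left
          rw [hu1, one_pow] at hu
          subst hu
          constructor
          · rfl
          · rw [← hprod, one_mul]
        · right
          have hu2ne : u ^ 2 ≠ 1 := fun h => hu1 (sq_inj u 1 (by rw [h, one_pow]))
          have hu2Q : u ^ 2 ∈ Q := hQdef ▸ Finset.mem_image.2 ⟨u, huT, rfl⟩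
          have hr := hrQ _ hu2ne hu2Q
          have hmemuu : (u, u) ∈ (T ×ˢ T).filter (fun p => p.1 * p.2 = u ^ 2) :=
            Finset.mem_filter.2 ⟨Finset.mem_product.2 ⟨huT, huT⟩, (pow_two u).symm⟩
          have hmemgt : (g, t⁻¹) ∈ (T ×ˢ T).filter (fun p => p.1 * p.2 = u ^ 2) := by
            refine Finset.mem_filter.2 ⟨Finset.mem_product.2 ⟨hgT, (hinv' t).1 htT⟩, ?_⟩
            rw [hu, ← hprod]
            group
          have heq := Finset.card_le_one.1 (le_of_eq hr) _ hmemgt _ hmemuu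
          have hgu : g = u := congrArg Prod.fst heq
          have htu : t⁻¹ = u := congrArg Prod.snd heq
          constructor
          · rw [← hu, hgu]
          · rw [← inv_inv t, htu, hgu]
      · rintro (⟨ha, ht⟩ | ⟨ha, ht⟩) <;> rw [ha, ht]
        · exact ⟨⟨h1Q, hgT⟩, one_mul g⟩
        · refine ⟨⟨by rw [hQdef]; exact Finset.mem_image.2 ⟨g, hgT, rfl⟩, (hinv' g).1 hgT⟩, ?_⟩
          group
    rw [hkey]
    rw [Finset.card_insert_of_notMem, Finset.card_singleton]
    simp only [Finset.mem_singleton, Prod.mk.injEq, not_and]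
    intro h
    exact absurd (sq_inj 1 g (by rw [← h, one_pow])).symm hg1
  have hmD : ∀ g : G, g ∈ T.image (· ^ 3) →
      1 ≤ ((Q ×ˢ T).filter (fun p => p.1 * p.2 = g)).card := by
    intro g hgD
    obtain ⟨t, htT, ht⟩ := Finset.mem_image.1 hgD
    refine Finset.card_pos.2 ⟨(t ^ 2, t), ?_⟩
    refine Finset.mem_filter.2 ⟨Finset.mem_product.2 ⟨hQdef ▸ Finset.mem_image.2 ⟨t, htT, rfl⟩, htT⟩, ?_⟩
    rw [← ht]
    group
  have hmc : ∀ g : G, ((Q ×ˢ T).filter (fun p => p.1 * p.2 = g)).card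
      + ((T ×ˢ (T ×ˢ T)).filter (fun p => p.1 * (p.2.1 * p.2.2) = g)).card
      = (4 * n + 2) + (if g ∈ T then 2 * n else 0) := by
    intro g
    have hmg : ((Q ×ˢ T).filter (fun p => p.1 * p.2 = g)).card
        = (T.filter (fun a => g * a⁻¹ ∈ Q)).card := by
      apply Finset.card_bij (fun (p : G × G) _ => p.2)
      · rintro ⟨a, t⟩ hp
        simp only [Finset.mem_filter, Finset.mem_product] at hp ⊢
        refine ⟨hp.1.2, ?_⟩
        rw [← hp.2]
        simpa using hp.1.1
      · rintro ⟨a, t⟩ ha ⟨a2, t2⟩ ha2 h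
        simp only [Finset.mem_filter, Finset.mem_product] at ha ha2
        dsimp at h
        subst h
        have : a = a2 := mul_right_cancel (ha.2.trans ha2.2.symm)
        rw [this]
      · intro a haf
        simp only [Finset.mem_filter] at haf
        refine ⟨(g * a⁻¹, a), ?_, rfl⟩
        simp only [Finset.mem_filter, Finset.mem_product]
        exact ⟨⟨haf.2, haf.1⟩, by group⟩
    have hcg : ((T ×ˢ (T ×ˢ T)).filter (fun p => p.1 * (p.2.1 * p.2.2) = g)).card
        = ∑ a ∈ T, ((T ×ˢ T).filter (fun p => p.1 * p.2 = g * a⁻¹)).card := by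
      rw [Finset.card_eq_sum_card_fiberwise (f := fun p : G × G × G => p.2.2) (t := T)
        (fun p hp => by
          simp only [Finset.mem_coe, Finset.mem_filter, Finset.mem_product] at hp
          exact hp.1.2.2)]
      apply Finset.sum_congr rfl
      intro a haT
      apply Finset.card_bij (fun (p : G × G × G) _ => (p.1, p.2.1))
      · rintro ⟨x, y, z⟩ hp
        simp only [Finset.mem_filter, Finset.mem_product] at hp ⊢
        obtain ⟨⟨⟨hx, hy, hz⟩, hprod⟩, hza⟩ := hp
        refine ⟨⟨hx, hy⟩, ?_⟩
        subst hza
        rw [← hprod]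
        group
      · rintro ⟨x, y, z⟩ hp ⟨x2, y2, z2⟩ hp2 h
        simp only [Finset.mem_filter, Finset.mem_product] at hp hp2
        have h1' : x = x2 := congrArg Prod.fst h
        have h2' : y = y2 := congrArg Prod.snd h
        have h3' : z = z2 := hp.2.trans hp2.2.symm
        simp [h1', h2', h3']
      · rintro ⟨x, y⟩ hxy
        simp only [Finset.mem_filter, Finset.mem_product] at hxy
        refine ⟨(x, y, a), ?_, rfl⟩
        refine Finset.mem_filter.2 ⟨Finset.mem_filter.2 ⟨Finset.mem_product.2
          ⟨hxy.1.1, Finset.mem_product.2 ⟨hxy.1.2, haT⟩⟩, ?_⟩, rfl⟩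
        show x * (y * a) = g
        rw [← mul_assoc, hxy.2]
        group
    have hpt : ∀ a ∈ T, (if g * a⁻¹ ∈ Q then 1 else 0)
        + ((T ×ˢ T).filter (fun p => p.1 * p.2 = g * a⁻¹)).card
        = 2 + (if a = g then 2 * n else 0) := by
      intro a haT
      by_cases hag : a = g
      · subst hag
        rw [mul_inv_cancel, if_pos h1Q, hr1, if_pos rfl]
        ring
      · have hne : g * a⁻¹ ≠ 1 := by
          intro h
          exact hag (by rwa [mul_inv_eq_one, eq_comm] at h)
        rw [if_neg hag]
        by_cases hQm : g * a⁻¹ ∈ Q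
        · rw [if_pos hQm, hrQ _ hne hQm]
        · rw [if_neg hQm, hrN _ hne hQm]
    rw [hmg, hcg, Finset.card_filter, ← Finset.sum_add_distrib]
    rw [Finset.sum_congr rfl hpt, Finset.sum_add_distrib, Finset.sum_const, hT,
      Finset.sum_ite_eq' T g (fun _ => 2 * n)]
    simp only [smul_eq_mul]
    by_cases hgT : g ∈ T <;> simp [hgT] <;> ring
  have hcmod : ∀ g : G, ((T ×ˢ (T ×ˢ T)).filter (fun p => p.1 * (p.2.1 * p.2.2) = g)).card % 3
      = (if g ∈ D then 1 else 0) % 3 := by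
    intro g
    have hrot := card_modEq_three' (fun p : G × G × G => (p.2.1, p.2.2, p.1))
        ((T ×ˢ (T ×ˢ T)).filter (fun p => p.1 * (p.2.1 * p.2.2) = g))
        (by
          rintro ⟨x, y, z⟩ hp
          simp only [Finset.mem_filter, Finset.mem_product] at hp ⊢
          obtain ⟨⟨hx, hy, hz⟩, hprod⟩ := hp
          refine ⟨⟨hy, hz, hx⟩, ?_⟩
          rw [← hprod, ← mul_assoc]
          exact mul_comm _ _)
        (fun x _ => rfl)
    rw [hrot]
    congr 1
    have hfix : (((T ×ˢ (T ×ˢ T)).filter (fun p => p.1 * (p.2.1 * p.2.2) = g)).filter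
        (fun p : G × G × G => (p.2.1, p.2.2, p.1) = p)).card
        = (T.filter (fun t => t ^ 3 = g)).card := by
      apply Finset.card_bij (fun (p : G × G × G) _ => p.1)
      · rintro ⟨x, y, z⟩ hp
        simp only [Finset.mem_filter, Finset.mem_product, Prod.mk.injEq] at hp ⊢
        obtain ⟨⟨⟨hx, hy, hz⟩, hprod⟩, hyx, hzy, hxz⟩ := hp
        refine ⟨hx, ?_⟩
        subst hyx
        subst hzy
        rw [← hprod, ← mul_assoc, ← pow_two, ← pow_succ]
      · rintro ⟨x, y, z⟩ hp ⟨x2, y2, z2⟩ hp2 h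
        simp only [Finset.mem_filter, Finset.mem_product, Prod.mk.injEq] at hp hp2
        dsimp at h
        obtain ⟨⟨-, -⟩, hyx, hzy, -⟩ := hp
        obtain ⟨⟨-, -⟩, hyx2, hzy2, -⟩ := hp2
        subst h
        have hy' : y = y2 := by rw [hyx, hyx2]
        have hz' : z = z2 := by rw [hzy, hyx, hzy2, hyx2]
        rw [hy', hz']
      · intro t htf
        simp only [Finset.mem_filter] at htf
        refine ⟨(t, t, t), ?_, rfl⟩
        refine Finset.mem_filter.2 ⟨Finset.mem_filter.2 ⟨Finset.mem_product.2
          ⟨htf.1, Finset.mem_product.2 ⟨htf.1, htf.1⟩⟩, ?_⟩, rfl⟩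
        show t * (t * t) = g
        rw [← htf.2, ← mul_assoc, ← pow_two, ← pow_succ]
    rw [hfix]
    by_cases hgD : g ∈ D
    · rw [if_pos hgD]
      rw [hDdef] at hgD
      obtain ⟨t0, ht0T, ht0⟩ := Finset.mem_image.1 hgD
      have : T.filter (fun t => t ^ 3 = g) = {t0} := by
        ext t
        simp only [Finset.mem_filter, Finset.mem_singleton]
        constructor
        · rintro ⟨htT, ht3⟩
          exact cube_inj t t0 (ht3.trans ht0.symm)
        · rintro rfl
          exact ⟨ht0T, ht0⟩
      rw [this, Finset.card_singleton]
    · rw [if_neg hgD]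
      rw [Finset.card_eq_zero]
      rw [Finset.filter_eq_empty_iff]
      intro t htT ht3
      exact hgD (hDdef ▸ Finset.mem_image.2 ⟨t, htT, ht3⟩)
  have hmod3a : ∀ g : G, g ∉ T → g ∈ D →
      ((Q ×ˢ T).filter (fun p => p.1 * p.2 = g)).card % 3 = 0 := by
    intro g hgT hgD
    have ha := hmc g
    have hb := hcmod g
    rw [if_neg hgT] at ha
    rw [if_pos hgD] at hb
    omega
  have hmod3b : ∀ g : G, g ∉ T → g ∉ D →
      ((Q ×ˢ T).filter (fun p => p.1 * p.2 = g)).card % 3 = 1 := by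
    intro g hgT hgD
    have ha := hmc g
    have hb := hcmod g
    rw [if_neg hgT] at ha
    rw [if_neg hgD] at hb
    omega
  have hsum1 : ∑ g : G, ((Q ×ˢ T).filter (fun p => p.1 * p.2 = g)).card
      = (2 * n + 1) * (2 * n + 1) := by
    have hfib := Finset.card_eq_sum_card_fiberwise (f := fun p : G × G => p.1 * p.2)
      (s := Q ×ˢ T) (t := univ) (fun x _ => Finset.mem_univ _)
    rw [Finset.card_product, hQcard, hT] at hfib
    exact hfib.symm
  have hsum2 : ∑ g : G, ((Q ×ˢ T).filter (fun p => p.1 * p.2 = g)).card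
      * ((Q ×ˢ T).filter (fun p => p.1 * p.2 = g)).card = 12 * n ^ 2 + 4 * n + 1 := by
    set W2 := ((Q ×ˢ T) ×ˢ (Q ×ˢ T)).filter
      (fun q : (G × G) × (G × G) => q.1.1 * q.1.2 = q.2.1 * q.2.2) with hW2
    -- step 1
    have e1 : ∑ g : G, ((Q ×ˢ T).filter (fun p => p.1 * p.2 = g)).card
        * ((Q ×ˢ T).filter (fun p => p.1 * p.2 = g)).card = W2.card := by
      rw [Finset.card_eq_sum_card_fiberwise (f := fun q : (G × G) × (G × G) => q.1.1 * q.1.2)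
        (s := W2) (t := univ) (fun x _ => Finset.mem_univ _)]
      apply Finset.sum_congr rfl
      intro g _
      have : W2.filter (fun q => q.1.1 * q.1.2 = g)
          = ((Q ×ˢ T).filter (fun p => p.1 * p.2 = g)) ×ˢ ((Q ×ˢ T).filter (fun p => p.1 * p.2 = g)) := by
        ext ⟨⟨a, t⟩, ⟨b, u⟩⟩
        simp only [hW2, Finset.mem_filter, Finset.mem_product]
        constructor
        · rintro ⟨⟨⟨h1', h2'⟩, h3'⟩, h4'⟩
          exact ⟨⟨h1', h4'⟩, ⟨h2', by rw [← h3', h4']⟩⟩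
        · rintro ⟨⟨h1', h4'⟩, ⟨h2', h5'⟩⟩
          exact ⟨⟨⟨h1', h2'⟩, by rw [h4', h5']⟩, h4'⟩
      rw [this, Finset.card_product]
    -- step 2: fiber over first components
    have e2 : W2.card = ∑ p ∈ Q ×ˢ Q, ((T ×ˢ T).filter
        (fun q => q.1 * q.2 = p.1⁻¹ * p.2)).card := by
      rw [Finset.card_eq_sum_card_fiberwise (f := fun q : (G × G) × (G × G) => (q.1.1, q.2.1))
        (s := W2) (t := Q ×ˢ Q) (fun x hx => by
          simp only [hW2, Finset.mem_coe, Finset.mem_filter, Finset.mem_product] at hx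
          exact Finset.mem_product.2 ⟨hx.1.1.1, hx.1.2.1⟩)]
      apply Finset.sum_congr rfl
      rintro ⟨a, b⟩ hab
      simp only [Finset.mem_product] at hab
      apply Finset.card_bij (fun (q : (G × G) × (G × G)) _ => (q.1.2, q.2.2⁻¹))
      · rintro ⟨⟨a', x⟩, ⟨b', y⟩⟩ hq
        simp only [hW2, Finset.mem_filter, Finset.mem_product, Prod.mk.injEq] at hq
        obtain ⟨⟨⟨⟨haQ, hxT⟩, hbQ, hyT⟩, hprod⟩, ha', hb'⟩ := hq
        refine Finset.mem_filter.2 ⟨Finset.mem_product.2 ⟨hxT, (hinv' y).1 hyT⟩, ?_⟩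
        show x * y⁻¹ = a⁻¹ * b
        rw [← ha', ← hb']
        have hb : a' * (x * y⁻¹) = b' := by
          rw [← mul_assoc, hprod]
          exact mul_inv_cancel_right b' y
        rw [← hb, inv_mul_cancel_left]
      · rintro ⟨⟨a1, x⟩, ⟨b1, y⟩⟩ hq ⟨⟨a2, x2⟩, ⟨b2, y2⟩⟩ hq2 h
        simp only [hW2, Finset.mem_filter, Finset.mem_product, Prod.mk.injEq] at hq hq2
        obtain ⟨-, ha1, hb1⟩ := hq
        obtain ⟨-, ha2, hb2⟩ := hq2
        have hx : x = x2 := congrArg Prod.fst h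
        have hy : y = y2 := inv_injective (congrArg Prod.snd h)
        rw [ha1, hb1, ha2, hb2, hx, hy]
      · rintro ⟨u, v⟩ huv
        simp only [Finset.mem_filter, Finset.mem_product] at huv
        obtain ⟨⟨huT, hvT⟩, hprod⟩ := huv
        refine ⟨((a, u), (b, v⁻¹)), Finset.mem_filter.2 ⟨?_, rfl⟩, by simp⟩
        rw [hW2]
        refine Finset.mem_filter.2 ⟨Finset.mem_product.2 ⟨Finset.mem_product.2 ⟨hab.1, huT⟩,
          Finset.mem_product.2 ⟨hab.2, (hinv' v).1 hvT⟩⟩, ?_⟩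
        show a * u = b * v⁻¹
        have : a * (u * v) = b := by
          rw [hprod, ← mul_assoc, mul_inv_cancel, one_mul]
        rw [← this]
        group
    -- step 3: reindex Q ×ˢ Q by T ×ˢ T
    have e3 : ∑ p ∈ Q ×ˢ Q, ((T ×ˢ T).filter (fun q => q.1 * q.2 = p.1⁻¹ * p.2)).card
        = ∑ p ∈ T ×ˢ T, ((T ×ˢ T).filter (fun q => q.1 * q.2 = (p.1⁻¹ * p.2) ^ 2)).card := by
      symm
      apply Finset.sum_bij (fun (p : G × G) _ => (p.1 ^ 2, p.2 ^ 2))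
      · rintro ⟨s, t⟩ hp
        simp only [Finset.mem_product] at hp ⊢
        rw [hQdef]
        exact ⟨Finset.mem_image.2 ⟨s, hp.1, rfl⟩, Finset.mem_image.2 ⟨t, hp.2, rfl⟩⟩
      · rintro ⟨s, t⟩ hp ⟨s2, t2⟩ hp2 h
        have h1' : s = s2 := sq_inj _ _ (congrArg Prod.fst h)
        have h2' : t = t2 := sq_inj _ _ (congrArg Prod.snd h)
        rw [h1', h2']
      · rintro ⟨a, b⟩ hab
        simp only [Finset.mem_product, hQdef] at hab
        obtain ⟨s, hsT, hs⟩ := Finset.mem_image.1 hab.1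
        obtain ⟨t, htT, ht⟩ := Finset.mem_image.1 hab.2
        exact ⟨(s, t), Finset.mem_product.2 ⟨hsT, htT⟩, by rw [← hs, ← ht]⟩
      · rintro ⟨s, t⟩ hp
        dsimp only
        rw [show (s⁻¹ * t) ^ 2 = (s ^ 2)⁻¹ * t ^ 2 by rw [mul_pow, inv_pow]]
    -- step 4: evaluate
    have e4 : ∑ p ∈ T ×ˢ T, ((T ×ˢ T).filter (fun q => q.1 * q.2 = (p.1⁻¹ * p.2) ^ 2)).card
        = 12 * n ^ 2 + 4 * n + 1 := by
      rw [← Finset.sum_filter_add_sum_filter_not (T ×ˢ T) (fun p => p.1 = p.2)]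
      have hdiagval : ∀ p ∈ (T ×ˢ T).filter (fun p : G × G => p.1 = p.2),
          ((T ×ˢ T).filter (fun q => q.1 * q.2 = (p.1⁻¹ * p.2) ^ 2)).card = 2 * n + 1 := by
        rintro ⟨s, t⟩ hp
        simp only [Finset.mem_filter, Finset.mem_product] at hp
        have : (s⁻¹ * t) ^ 2 = 1 := by rw [← hp.2, inv_mul_cancel, one_pow]
        rw [show ((s, t) : G × G).1⁻¹ * (s, t).2 = s⁻¹ * t from rfl, this]
        exact hr1
      have hdiagcard : ((T ×ˢ T).filter (fun p : G × G => p.1 = p.2)).card = 2 * n + 1 := by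
        rw [← hT]
        apply Finset.card_bij (fun (p : G × G) _ => p.1)
        · rintro ⟨s, t⟩ hp
          simp only [Finset.mem_filter, Finset.mem_product] at hp
          exact hp.1.1
        · rintro ⟨s, t⟩ hp ⟨s2, t2⟩ hp2 h
          simp only [Finset.mem_filter, Finset.mem_product] at hp hp2
          dsimp at h
          rw [Prod.mk.injEq]
          exact ⟨h, by rw [← hp.2, ← hp2.2, h]⟩
        · intro t ht
          exact ⟨(t, t), Finset.mem_filter.2 ⟨Finset.mem_product.2 ⟨ht, ht⟩, rfl⟩, rfl⟩
      rw [Finset.sum_congr rfl hdiagval, Finset.sum_const, hdiagcard, smul_eq_mul]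
      -- off-diagonal split
      rw [← Finset.sum_filter_add_sum_filter_not ((T ×ˢ T).filter (fun p : G × G => ¬ p.1 = p.2))
        (fun p => p.1 = 1 ∨ p.2 = 1)]
      have hAval : ∀ p ∈ ((T ×ˢ T).filter (fun p : G × G => ¬ p.1 = p.2)).filter
          (fun p : G × G => p.1 = 1 ∨ p.2 = 1),
          ((T ×ˢ T).filter (fun q => q.1 * q.2 = (p.1⁻¹ * p.2) ^ 2)).card = 1 := by
        rintro ⟨s, t⟩ hp
        simp only [Finset.mem_filter, Finset.mem_product] at hp
        obtain ⟨⟨⟨hsT, htT⟩, hne⟩, hor⟩ := hp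
        dsimp at hne hor ⊢
        rcases hor with rfl | rfl
        · have ht1 : t ≠ 1 := fun h => hne h.symm
          have : (1 : G)⁻¹ * t = t := by rw [inv_one, one_mul]
          rw [this]
          apply hrQ
          · intro h
            exact ht1 (sq_inj t 1 (by rw [h, one_pow]))
          · rw [hQdef]
            exact Finset.mem_image.2 ⟨t, htT, rfl⟩
        · have hs1 : s ≠ 1 := hne
          have : s⁻¹ * 1 = s⁻¹ := by rw [mul_one]
          rw [this]
          apply hrQ
          · intro h
            apply hs1
            have := sq_inj s⁻¹ 1 (by rw [h, one_pow])
            rwa [inv_eq_one] at this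
          · rw [hQdef]
            exact Finset.mem_image.2 ⟨s⁻¹, (hinv' s).1 hsT, rfl⟩
      have hBval : ∀ p ∈ ((T ×ˢ T).filter (fun p : G × G => ¬ p.1 = p.2)).filter
          (fun p : G × G => ¬ (p.1 = 1 ∨ p.2 = 1)),
          ((T ×ˢ T).filter (fun q => q.1 * q.2 = (p.1⁻¹ * p.2) ^ 2)).card = 2 := by
        rintro ⟨s, t⟩ hp
        simp only [Finset.mem_filter, Finset.mem_product, not_or] at hp
        obtain ⟨⟨⟨hsT, htT⟩, hne⟩, hs1, ht1⟩ := hp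
        dsimp at hne hs1 ht1 ⊢
        apply hrN
        · intro h
          have := sq_inj (s⁻¹ * t) 1 (by rw [h, one_pow])
          rw [inv_mul_eq_one] at this
          exact hne this
        · intro hQm
          rw [hQdef] at hQm
          obtain ⟨u, huT, hu⟩ := Finset.mem_image.1 hQm
          have hust : u = s⁻¹ * t := sq_inj _ _ hu
          have htsu : s * u = t := by rw [hust, ← mul_assoc, mul_inv_cancel, one_mul]
          rcases hS2 s u hsT huT (htsu ▸ htT) (htsu.symm ▸ ht1) with h | h
          · exact hs1 h
          · rw [h, mul_one] at htsu
            exact hne htsu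
      rw [Finset.sum_congr rfl hAval, Finset.sum_congr rfl hBval, Finset.sum_const,
        Finset.sum_const, smul_eq_mul, smul_eq_mul]
      -- cardinalities
      have hAcard : (((T ×ˢ T).filter (fun p : G × G => ¬ p.1 = p.2)).filter
          (fun p : G × G => p.1 = 1 ∨ p.2 = 1)).card = 4 * n := by
        have hset : ((T ×ˢ T).filter (fun p : G × G => ¬ p.1 = p.2)).filter
            (fun p : G × G => p.1 = 1 ∨ p.2 = 1)
            = ({1} ×ˢ T.erase 1) ∪ (T.erase 1 ×ˢ {1}) := by
          ext ⟨s, t⟩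
          simp only [Finset.mem_filter, Finset.mem_product, Finset.mem_union, Finset.mem_erase,
            Finset.mem_singleton]
          constructor
          · rintro ⟨⟨⟨hsT, htT⟩, hne⟩, hor⟩
            rcases hor with rfl | rfl
            · exact Or.inl ⟨rfl, fun h => hne h.symm, htT⟩
            · exact Or.inr ⟨⟨hne, hsT⟩, rfl⟩
          · rintro (⟨rfl, ht1, htT⟩ | ⟨⟨hs1, hsT⟩, rfl⟩)
            · exact ⟨⟨⟨h1, htT⟩, fun h => ht1 h.symm⟩, Or.inl rfl⟩
            · exact ⟨⟨⟨hsT, h1⟩, hs1⟩, Or.inr rfl⟩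
        rw [hset, Finset.card_union_of_disjoint, Finset.card_product, Finset.card_product,
          Finset.card_singleton, Finset.card_erase_of_mem h1, hT]
        · omega
        · rw [Finset.disjoint_left]
          rintro ⟨s, t⟩ hp hp2
          simp only [Finset.mem_product, Finset.mem_erase, Finset.mem_singleton] at hp hp2
          exact hp2.1.1 hp.1
      have htotal : ((T ×ˢ T).filter (fun p : G × G => p.1 = p.2)).card
          + ((T ×ˢ T).filter (fun p : G × G => ¬ p.1 = p.2)).card = (2 * n + 1) * (2 * n + 1) := by
        rw [Finset.card_filter_add_card_filter_not, Finset.card_product, hT]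
      have hoff : (((T ×ˢ T).filter (fun p : G × G => ¬ p.1 = p.2)).filter
          (fun p : G × G => p.1 = 1 ∨ p.2 = 1)).card
          + (((T ×ˢ T).filter (fun p : G × G => ¬ p.1 = p.2)).filter
          (fun p : G × G => ¬ (p.1 = 1 ∨ p.2 = 1))).card
          = ((T ×ˢ T).filter (fun p : G × G => ¬ p.1 = p.2)).card := by
        rw [Finset.card_filter_add_card_filter_not]
      have hsq : (2 * n + 1) * (2 * n + 1) = 4 * n ^ 2 + 4 * n + 1 := by ring
      omega
    rw [e1, e2, e3, e4]
  -- abbreviate the multiplicity function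
  obtain ⟨F, hFdef⟩ : ∃ F : G → ℕ,
      F = fun g : G => ((Q ×ˢ T).filter (fun p => p.1 * p.2 = g)).card := ⟨_, rfl⟩
  have hXm : ∀ i, X i = univ.filter (fun g => F g = i) := by
    intro i
    rw [hX i]
    simp only [hFdef]
  have hm1' : F 1 = 1 := by simp only [hFdef]; exact hm1
  have hmT' : ∀ g : G, g ∈ T → g ≠ 1 → F g = 2 := by
    intro g hg hg1
    simp only [hFdef]
    exact hmT g hg hg1
  have hmD' : ∀ g : G, g ∈ D → 1 ≤ F g := by
    intro g hg
    simp only [hFdef]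
    exact hmD g (by rwa [← hDdef])
  have h3a : ∀ g : G, g ∉ T → g ∈ D → F g % 3 = 0 := by
    intro g h h'
    simp only [hFdef]
    exact hmod3a g h h'
  have h3b : ∀ g : G, g ∉ T → g ∉ D → F g % 3 = 1 := by
    intro g h h'
    simp only [hFdef]
    exact hmod3b g h h'
  have hs1 : ∑ g : G, (F g : ℤ) = (2 * n + 1) * (2 * n + 1) := by
    simp only [hFdef]
    exact_mod_cast hsum1
  have hs2 : ∑ g : G, (F g : ℤ) * (F g : ℤ) = 12 * n ^ 2 + 4 * n + 1 := by
    simp only [hFdef]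
    exact_mod_cast hsum2
  -- partition of the group
  have hTDset : T ∩ D = {1} := by
    ext g
    simp only [Finset.mem_inter, Finset.mem_singleton]
    constructor
    · rintro ⟨hgT, hgD⟩
      exact hTD g hgT hgD
    · rintro rfl
      exact ⟨h1, h1D⟩
  have hLcard : (T ∪ D).card = 4 * n + 1 := by
    have := Finset.card_union_add_card_inter T D
    rw [hTDset, Finset.card_singleton, hT, hDcard] at this
    omega
  have hB2card : (T.erase 1).card = 2 * n := by
    rw [Finset.card_erase_of_mem h1, hT]
    omega
  have hB3card : (D.erase 1).card = 2 * n := by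
    rw [Finset.card_erase_of_mem h1D, hDcard]
    omega
  have hB4card : (univ \ (T ∪ D)).card + (4 * n + 1) = 2 * n ^ 2 + 2 * n + 1 := by
    have h' := Finset.card_sdiff_add_card_eq_card (Finset.subset_univ (T ∪ D))
    rw [hLcard, Finset.card_univ, hG] at h'
    exact h'
  have hcB4 : (((univ \ (T ∪ D)).card : ℤ)) = 2 * n ^ 2 - 2 * n := by
    have h' := congrArg (Nat.cast : ℕ → ℤ) hB4card
    push_cast at h'
    linarith
  -- splitting sums over the partition
  have hsplit : ∀ f : G → ℤ, ∑ g : G, f g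
      = (∑ g ∈ univ \ (T ∪ D), f g)
        + ((f 1 + ∑ g ∈ T.erase 1, f g) + (f 1 + ∑ g ∈ D.erase 1, f g) - f 1) := by
    intro f
    have h4 : (∑ g ∈ univ \ (T ∪ D), f g) + ∑ g ∈ (T ∪ D), f g = ∑ g : G, f g :=
      Finset.sum_sdiff (Finset.subset_univ _)
    have h5 : (∑ g ∈ (T ∪ D), f g) + ∑ g ∈ (T ∩ D), f g
        = (∑ g ∈ T, f g) + ∑ g ∈ D, f g := Finset.sum_union_inter
    rw [hTDset, Finset.sum_singleton] at h5
    have h6 : f 1 + ∑ g ∈ T.erase 1, f g = ∑ g ∈ T, f g := Finset.add_sum_erase T f h1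
    have h7 : f 1 + ∑ g ∈ D.erase 1, f g = ∑ g ∈ D, f g := Finset.add_sum_erase D f h1D
    linarith
  have hF1 : ((F 1 : ℤ)) = 1 := by rw [hm1']; norm_num
  have hTsum : ∑ g ∈ T.erase 1, (F g : ℤ) = 4 * n := by
    have h' : ∀ g ∈ T.erase 1, (F g : ℤ) = 2 := by
      intro g hg
      rw [hmT' g (Finset.mem_of_mem_erase hg) (Finset.ne_of_mem_erase hg)]
      norm_num
    rw [Finset.sum_congr rfl h', Finset.sum_const, hB2card]
    push_cast
    ring
  have hTsumsq : ∑ g ∈ T.erase 1, ((F g : ℤ) * (F g : ℤ)) = 8 * n := by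
    have h' : ∀ g ∈ T.erase 1, (F g : ℤ) * (F g : ℤ) = 4 := by
      intro g hg
      rw [hmT' g (Finset.mem_of_mem_erase hg) (Finset.ne_of_mem_erase hg)]
      norm_num
    rw [Finset.sum_congr rfl h', Finset.sum_const, hB2card]
    push_cast
    ring
  have hexp : ((2 * n + 1) * (2 * n + 1) : ℤ) = 4 * n ^ 2 + 4 * n + 1 := by ring
  have hMsum : (∑ g ∈ univ \ (T ∪ D), (F g : ℤ)) + (∑ g ∈ D.erase 1, (F g : ℤ))
      = 4 * n ^ 2 := by
    have hsp := hsplit (fun g => (F g : ℤ))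
    rw [hs1] at hsp
    rw [hTsum, hF1] at hsp
    linarith
  have hMsumsq : (∑ g ∈ univ \ (T ∪ D), (F g : ℤ) * (F g : ℤ))
      + (∑ g ∈ D.erase 1, (F g : ℤ) * (F g : ℤ)) = 12 * n ^ 2 - 4 * n := by
    have hsp := hsplit (fun g => (F g : ℤ) * (F g : ℤ))
    rw [hs2] at hsp
    rw [hTsumsq, hF1] at hsp
    linarith
  -- pointwise estimates
  have hB3ge : ∀ g ∈ D.erase 1, (3 : ℤ) ≤ (F g : ℤ) := by
    intro g hg
    obtain ⟨hg1, hgD⟩ := Finset.mem_erase.1 hg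
    have hgT : g ∉ T := fun h' => hg1 (hTD g h' hgD)
    have h0 := h3a g hgT hgD
    have hpos := hmD' g hgD
    have h3' : 3 ≤ F g := by omega
    exact_mod_cast h3'
  have hB4mod : ∀ g ∈ univ \ (T ∪ D), F g % 3 = 1 := by
    intro g hg
    obtain ⟨-, hgL⟩ := Finset.mem_sdiff.1 hg
    exact h3b g (fun h' => hgL (Finset.mem_union_left _ h'))
      (fun h' => hgL (Finset.mem_union_right _ h'))
  have hf3 : ∀ g ∈ D.erase 1, (0 : ℤ) ≤ (F g : ℤ) * (F g : ℤ) + 9 - 6 * (F g : ℤ) := by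
    intro g hg
    have hx := sq_nonneg ((F g : ℤ) - 3)
    have hexp' : ((F g : ℤ) - 3) ^ 2 = (F g : ℤ) * (F g : ℤ) + 9 - 6 * (F g : ℤ) := by ring
    linarith only [hx, hexp']
  have hf4 : ∀ g ∈ univ \ (T ∪ D),
      (0 : ℤ) ≤ (F g : ℤ) * (F g : ℤ) + 4 - 5 * (F g : ℤ) := by
    intro g hg
    have h0 := hB4mod g hg
    have hor : F g = 1 ∨ 4 ≤ F g := by omega
    rcases hor with h' | h'
    · rw [h']; norm_num
    · have h'' : (4 : ℤ) ≤ (F g : ℤ) := by exact_mod_cast h'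
      have hx : (0 : ℤ) ≤ ((F g : ℤ) - 1) * ((F g : ℤ) - 4) :=
        mul_nonneg (by linarith only [h'']) (by linarith only [h''])
      have hexp' : ((F g : ℤ) - 1) * ((F g : ℤ) - 4)
          = (F g : ℤ) * (F g : ℤ) + 4 - 5 * (F g : ℤ) := by ring
      linarith only [hx, hexp']
  -- the main tightness identity
  have emain : (∑ g ∈ D.erase 1, ((F g : ℤ) * (F g : ℤ) + 9 - 6 * (F g : ℤ)))
      + (∑ g ∈ univ \ (T ∪ D), ((F g : ℤ) * (F g : ℤ) + 4 - 5 * (F g : ℤ)))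
      = 6 * n - ∑ g ∈ D.erase 1, (F g : ℤ) := by
    have e1 : ∑ g ∈ D.erase 1, ((F g : ℤ) * (F g : ℤ) + 9 - 6 * (F g : ℤ))
        = (∑ g ∈ D.erase 1, (F g : ℤ) * (F g : ℤ)) + (2 * n : ℤ) * 9
          - 6 * ∑ g ∈ D.erase 1, (F g : ℤ) := by
      rw [Finset.sum_sub_distrib, Finset.sum_add_distrib, Finset.sum_const, hB3card,
        ← Finset.mul_sum]
      push_cast
      ring
    have e2 : ∑ g ∈ univ \ (T ∪ D), ((F g : ℤ) * (F g : ℤ) + 4 - 5 * (F g : ℤ))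
        = (∑ g ∈ univ \ (T ∪ D), (F g : ℤ) * (F g : ℤ))
          + ((univ \ (T ∪ D)).card : ℤ) * 4
          - 5 * ∑ g ∈ univ \ (T ∪ D), (F g : ℤ) := by
      rw [Finset.sum_sub_distrib, Finset.sum_add_distrib, Finset.sum_const, ← Finset.mul_sum]
      push_cast
      ring
    rw [e1, e2, hcB4]
    linarith [hMsum, hMsumsq]
  have hn3 : ∑ g ∈ D.erase 1, (F g : ℤ) = 6 * n := by
    have n1 := Finset.sum_nonneg hf3
    have n2 := Finset.sum_nonneg hf4
    have hge : (6 * n : ℤ) ≤ ∑ g ∈ D.erase 1, (F g : ℤ) := by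
      calc (6 * n : ℤ) = ∑ _g ∈ D.erase 1, (3 : ℤ) := by
            rw [Finset.sum_const, hB3card]; push_cast; ring
      _ ≤ _ := Finset.sum_le_sum hB3ge
    linarith [emain]
  have hz3 : ∑ g ∈ D.erase 1, ((F g : ℤ) * (F g : ℤ) + 9 - 6 * (F g : ℤ)) = 0 := by
    have n1 := Finset.sum_nonneg hf3
    have n2 := Finset.sum_nonneg hf4
    linarith [emain, hn3]
  have hz4 : ∑ g ∈ univ \ (T ∪ D), ((F g : ℤ) * (F g : ℤ) + 4 - 5 * (F g : ℤ)) = 0 := by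
    have n1 := Finset.sum_nonneg hf3
    have n2 := Finset.sum_nonneg hf4
    linarith [emain, hn3]
  have hm3eq : ∀ g ∈ D.erase 1, F g = 3 := by
    intro g hg
    have h0 := (Finset.sum_eq_zero_iff_of_nonneg hf3).1 hz3 g hg
    have hsq : ((F g : ℤ) - 3) ^ 2 = 0 := by linear_combination h0
    have h5 : ((F g : ℤ)) - 3 = 0 := by
      exact (pow_eq_zero_iff (by norm_num)).1 hsq
    have h6 : ((F g : ℤ)) = 3 := by linarith
    exact_mod_cast h6
  have hm14 : ∀ g ∈ univ \ (T ∪ D), F g = 1 ∨ F g = 4 := by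
    intro g hg
    have h0 := (Finset.sum_eq_zero_iff_of_nonneg hf4).1 hz4 g hg
    have hfac : ((F g : ℤ) - 1) * ((F g : ℤ) - 4) = 0 := by linear_combination h0
    rcases mul_eq_zero.1 hfac with h' | h'
    · left
      have h6 : ((F g : ℤ)) = 1 := by linarith
      exact_mod_cast h6
    · right
      have h6 : ((F g : ℤ)) = 4 := by linarith
      exact_mod_cast h6
  have hclass : ∀ g : G, F g = 1 ∨ F g = 2 ∨ F g = 3 ∨ F g = 4 := by
    intro g
    by_cases hg1 : g = 1
    · subst hg1; exact Or.inl hm1'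
    · by_cases hgT : g ∈ T
      · exact Or.inr (Or.inl (hmT' g hgT hg1))
      · by_cases hgD : g ∈ D
        · exact Or.inr (Or.inr (Or.inl (hm3eq g (Finset.mem_erase.2 ⟨hg1, hgD⟩))))
        · rcases hm14 g (Finset.mem_sdiff.2 ⟨Finset.mem_univ _, fun h' => by
            rcases Finset.mem_union.1 h' with h'' | h''
            exacts [hgT h'', hgD h'']⟩) with h' | h'
          · exact Or.inl h'
          · exact Or.inr (Or.inr (Or.inr h'))
  have hXmem : ∀ i (g : G), g ∈ X i ↔ F g = i := by
    intro i g
    rw [hXm i]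
    simp
  have hX2 : X 2 = T.erase 1 := by
    ext g
    rw [hXmem]
    constructor
    · intro h2
      by_cases hg1 : g = 1
      · subst hg1; rw [hm1'] at h2; omega
      · by_cases hgT : g ∈ T
        · exact Finset.mem_erase.2 ⟨hg1, hgT⟩
        · exfalso
          by_cases hgD : g ∈ D
          · have := hm3eq g (Finset.mem_erase.2 ⟨hg1, hgD⟩); omega
          · have := hm14 g (Finset.mem_sdiff.2 ⟨Finset.mem_univ _, fun h' => by
              rcases Finset.mem_union.1 h' with h'' | h''
              exacts [hgT h'', hgD h'']⟩)
            omega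
    · intro hg
      exact hmT' g (Finset.mem_of_mem_erase hg) (Finset.ne_of_mem_erase hg)
  have hX3 : X 3 = D.erase 1 := by
    ext g
    rw [hXmem]
    constructor
    · intro h3'
      by_cases hg1 : g = 1
      · subst hg1; rw [hm1'] at h3'; omega
      · by_cases hgD : g ∈ D
        · exact Finset.mem_erase.2 ⟨hg1, hgD⟩
        · exfalso
          by_cases hgT : g ∈ T
          · have := hmT' g hgT hg1; omega
          · have := hm14 g (Finset.mem_sdiff.2 ⟨Finset.mem_univ _, fun h' => by
              rcases Finset.mem_union.1 h' with h'' | h''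
              exacts [hgT h'', hgD h'']⟩)
            omega
    · intro hg
      exact hm3eq g hg
  have hX4 : X 4 = (univ \ (T ∪ D)).filter (fun g => F g = 4) := by
    ext g
    rw [hXmem, Finset.mem_filter, Finset.mem_sdiff]
    constructor
    · intro h4
      refine ⟨⟨Finset.mem_univ _, ?_⟩, h4⟩
      intro hgL
      rcases Finset.mem_union.1 hgL with hgT | hgD
      · by_cases hg1 : g = 1
        · subst hg1; rw [hm1'] at h4; omega
        · have := hmT' g hgT hg1; omega
      · by_cases hg1 : g = 1
        · subst hg1; rw [hm1'] at h4; omega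
        · have := hm3eq g (Finset.mem_erase.2 ⟨hg1, hgD⟩); omega
    · rintro ⟨-, h4⟩
      exact h4
  have hX1 : X 1 = insert 1 ((univ \ (T ∪ D)).filter (fun g => F g = 1)) := by
    ext g
    rw [hXmem, Finset.mem_insert, Finset.mem_filter, Finset.mem_sdiff]
    constructor
    · intro hm'
      by_cases hg1 : g = 1
      · exact Or.inl hg1
      · right
        refine ⟨⟨Finset.mem_univ _, ?_⟩, hm'⟩
        intro hgL
        rcases Finset.mem_union.1 hgL with hgT | hgD
        · have := hmT' g hgT hg1; omega
        · have := hm3eq g (Finset.mem_erase.2 ⟨hg1, hgD⟩); omega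
    · rintro (rfl | ⟨-, hm'⟩)
      · exact hm1'
      · exact hm'
  -- final counting for X 1 and X 4
  have hfneg : (univ \ (T ∪ D)).filter (fun g => ¬ (F g = 1))
      = (univ \ (T ∪ D)).filter (fun g => F g = 4) := by
    apply Finset.filter_congr
    intro g hg
    rcases hm14 g hg with h' | h' <;> simp [h']
  have hpart : ((univ \ (T ∪ D)).filter (fun g => F g = 1)).card
      + ((univ \ (T ∪ D)).filter (fun g => F g = 4)).card
      = (univ \ (T ∪ D)).card := by
    rw [← hfneg]
    exact Finset.card_filter_add_card_filter_not _
  have hU4sum : ∑ g ∈ univ \ (T ∪ D), (F g : ℤ)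
      = (((univ \ (T ∪ D)).filter (fun g => F g = 1)).card : ℤ)
        + 4 * (((univ \ (T ∪ D)).filter (fun g => F g = 4)).card : ℤ) := by
    rw [← Finset.sum_filter_add_sum_filter_not (univ \ (T ∪ D)) (fun g => F g = 1), hfneg]
    have e1 : ∑ g ∈ (univ \ (T ∪ D)).filter (fun g => F g = 1), (F g : ℤ)
        = (((univ \ (T ∪ D)).filter (fun g => F g = 1)).card : ℤ) := by
      have hv : ∀ g ∈ (univ \ (T ∪ D)).filter (fun g => F g = 1), (F g : ℤ) = 1 := by
        intro g hg
        rw [(Finset.mem_filter.1 hg).2]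
        norm_num
      rw [Finset.sum_congr rfl hv, Finset.sum_const]
      push_cast
      ring
    have e2 : ∑ g ∈ (univ \ (T ∪ D)).filter (fun g => F g = 4), (F g : ℤ)
        = 4 * (((univ \ (T ∪ D)).filter (fun g => F g = 4)).card : ℤ) := by
      have hv : ∀ g ∈ (univ \ (T ∪ D)).filter (fun g => F g = 4), (F g : ℤ) = 4 := by
        intro g hg
        rw [(Finset.mem_filter.1 hg).2]
        norm_num
      rw [Finset.sum_congr rfl hv, Finset.sum_const]
      push_cast
      ring
    rw [e1, e2]
  have hU4val : ∑ g ∈ univ \ (T ∪ D), (F g : ℤ) = 4 * n ^ 2 - 6 * n := by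
    linarith [hMsum, hn3]
  have hq1 : ((((univ \ (T ∪ D)).filter (fun g => F g = 1)).card : ℤ))
      + (((univ \ (T ∪ D)).filter (fun g => F g = 4)).card : ℤ) = 2 * n ^ 2 - 2 * n := by
    have h' := congrArg (Nat.cast : ℕ → ℤ) hpart
    push_cast at h'
    linarith [hcB4]
  have hq2 : ((((univ \ (T ∪ D)).filter (fun g => F g = 1)).card : ℤ))
      + 4 * (((univ \ (T ∪ D)).filter (fun g => F g = 4)).card : ℤ) = 4 * n ^ 2 - 6 * n := by
    linarith [hU4sum, hU4val]
  have hX1card : (X 1).card = ((univ \ (T ∪ D)).filter (fun g => F g = 1)).card + 1 := by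
    rw [hX1]
    apply Finset.card_insert_of_notMem
    intro hmem
    obtain ⟨hmem', -⟩ := Finset.mem_filter.1 hmem
    exact (Finset.mem_sdiff.1 hmem').2 (Finset.mem_union_left _ h1)
  set acard := ((univ \ (T ∪ D)).filter (fun g => F g = 1)).card with hacard
  set bcard := ((univ \ (T ∪ D)).filter (fun g => F g = 4)).card with hbcard
  refine ⟨?_, ?_, ?_, ?_, ?_, ?_⟩
  · intro i hi
    rw [Finset.eq_empty_iff_forall_notMem]
    intro g hg
    have h' := (hXmem i g).1 hg
    rcases hclass g with h'' | h'' | h'' | h'' <;> omega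
  · rw [Finset.eq_empty_iff_forall_notMem]
    intro g hg
    have h' := (hXmem 0 g).1 hg
    rcases hclass g with h'' | h'' | h'' | h'' <;> omega
  · rw [hX1card]
    have hle : 2 * n ≤ 4 * n ^ 2 := by
      have hnn : n ≤ n ^ 2 := by
        calc n = n * 1 := (mul_one n).symm
        _ ≤ n * n := Nat.mul_le_mul_left n (by omega)
        _ = n ^ 2 := (sq n).symm
      linarith only [hnn]
    zify [hle]
    linarith [hq1, hq2]
  · rw [hX2]
    exact hB2card
  · rw [hX3]
    exact hB3card
  · rw [hX4, ← hbcard]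
    have hle : 4 * n ≤ 2 * n ^ 2 := by
      have hnn : 2 * n ≤ n ^ 2 := by
        calc 2 * n ≤ n * n := Nat.mul_le_mul_right n hn
        _ = n ^ 2 := (sq n).symm
      linarith only [hnn]
    zify [hle]
    linarith [hq1, hq2]
end

section
/- Suppose n ≡ 0 (mod 3), n ≥ 4, and G, T satisfy the lattice tiling group ring conditions. Let X_i be the multiplicity classes of T^(2)T, with N the maximal occurring multiplicity. Then from ∑ X_{3i} = ∅, ∑_i |X_{3i+1}| = 2n+1, ∑_i |X_{3i+2}| = 2n², and the counting identities, one derives the inequality 2n² − 2n ≤ (n+1)n, a contradiction. Hence no such (G, T) exists for n ≡ 0 (mod 3), n ≥ 4. -/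
open Finset
open scoped Pointwise
set_option linter.unusedSectionVars false

namespace NoTilingAux


lemma add_le_mul_succ (x y : ℕ) (hx : 1 ≤ x) (hy : 1 ≤ y) : x + y ≤ x * y + 1 := by
  rcases Nat.exists_eq_add_of_le hx with ⟨x', rfl⟩
  rcases Nat.exists_eq_add_of_le hy with ⟨y', rfl⟩
  nlinarith [Nat.zero_le (x' * y')]

lemma sum_sq_le_sq_sum {X : Type} (s : Finset X) (f : X → ℕ) :
    ∑ x ∈ s, f x * f x ≤ (∑ x ∈ s, f x) * (∑ x ∈ s, f x) := by
  calc ∑ x ∈ s, f x * f x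
      ≤ ∑ x ∈ s, f x * (∑ y ∈ s, f y) :=
        Finset.sum_le_sum (fun x hx => Nat.mul_le_mul_left _
          (Finset.single_le_sum (fun _ _ => Nat.zero_le _) hx))
    _ = (∑ x ∈ s, f x) * (∑ y ∈ s, f y) := by rw [← Finset.sum_mul]

lemma three_dvd_of_rot {X : Type} [DecidableEq X] :
    ∀ (k : ℕ) (S : Finset X) (f : X → X), S.card = k →
      (∀ x ∈ S, f x ∈ S) → (∀ x ∈ S, f (f (f x)) = x) → (∀ x ∈ S, f x ≠ x) →
      3 ∣ S.card := by
  intro k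
  induction k using Nat.strong_induction_on with
  | _ k ih =>
    intro S f hk hmem h3 hnf
    rcases S.eq_empty_or_nonempty with h | ⟨x, hx⟩
    · simp [h]
    · have hfx : f x ∈ S := hmem x hx
      have hffx : f (f x) ∈ S := hmem _ hfx
      have h1 : f x ≠ x := hnf x hx
      have h2 : f (f x) ≠ f x := hnf _ hfx
      have h4 : f (f x) ≠ x := by
        intro h
        have h5 := h3 x hx
        rw [h] at h5
        exact h1 h5
      set tri : Finset X := {x, f x, f (f x)} with htri
      have htc : tri.card = 3 := by
        rw [htri, card_insert_of_notMem, card_insert_of_notMem, card_singleton]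
        · simp [Ne.symm h2]
        · simp [Ne.symm h1, Ne.symm h4]
      have hsub : tri ⊆ S := by
        intro y hy
        rw [htri] at hy
        simp only [mem_insert, mem_singleton] at hy
        rcases hy with h | h | h <;> subst h <;> assumption
      have hmemtri : ∀ y, y ∈ tri ↔ (y = x ∨ y = f x ∨ y = f (f x)) := by
        intro y; rw [htri]; simp
      set S' := S \ tri with hS'
      have hS'sub : S' ⊆ S := sdiff_subset
      have hclosed : ∀ y ∈ S', f y ∈ S' := by
        intro y hy
        rw [hS', mem_sdiff] at hy ⊢
        obtain ⟨hyS, hyt⟩ := hy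
        refine ⟨hmem y hyS, ?_⟩
        rw [hmemtri] at hyt ⊢
        push_neg at hyt ⊢
        obtain ⟨n1, n2, n3⟩ := hyt
        refine ⟨?_, ?_, ?_⟩
        · intro h
          apply n3
          have := h3 x hx
          have h5 : f (f (f y)) = y := h3 y hyS
          rw [h] at h5
          -- f (f x) = y
          exact h5.symm
        · intro h
          apply n1
          have h5 : f (f (f y)) = y := h3 y hyS
          rw [h, h3 x hx] at h5
          exact h5.symm
        · intro h
          apply n2
          have h5 : f (f (f y)) = y := h3 y hyS
          rw [h] at h5
          have h6 : f (f (f (f x))) = f x := by rw [h3 x hx]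
          rw [h6] at h5
          exact h5.symm
      have hcard3 : 3 ≤ S.card := le_trans (le_of_eq htc.symm) (card_le_card hsub)
      have hcardS' : S'.card = S.card - 3 := by rw [hS', card_sdiff_of_subset hsub, htc]
      have hlt : S'.card < k := by omega
      have hdvd : 3 ∣ S'.card :=
        ih S'.card hlt S' f rfl hclosed (fun y hy => h3 y (hS'sub hy))
          (fun y hy => hnf y (hS'sub hy))
      omega


variable {G : Type} [CommGroup G] [Fintype G] [DecidableEq G]

def Rf (T : Finset G) (g : G) : ℕ := ((T ×ˢ T).filter (fun p => p.1 * p.2 = g)).card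
def mf (T : Finset G) (g : G) : ℕ := ((T ×ˢ T).filter (fun p => p.1 ^ 2 * p.2 = g)).card
def cf (T : Finset G) (g : G) : ℕ :=
  (((T ×ˢ T) ×ˢ T).filter (fun p => p.1.1 * p.1.2 * p.2 = g)).card

lemma inv_mem_of {T : Finset G} (hTi : T = T⁻¹) {a : G} (ha : a ∈ T) : a⁻¹ ∈ T := by
  rw [hTi, mem_inv']
  simpa using ha

lemma Rf_one {T : Finset G} (hTi : T = T⁻¹) : Rf T 1 = T.card := by
  unfold Rf
  refine Finset.card_bij' (i := fun p _ => p.1) (j := fun a _ => (a, a⁻¹)) ?_ ?_ ?_ ?_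
  · intro p hp
    simp only [mem_filter, mem_product] at hp
    exact hp.1.1
  · intro a ha
    simp only [mem_filter, mem_product]
    exact ⟨⟨ha, inv_mem_of hTi ha⟩, by group⟩
  · intro p hp
    simp only [mem_filter, mem_product] at hp
    have h2 : p.2 = p.1⁻¹ := by
      have h := hp.2
      exact eq_inv_of_mul_eq_one_left (by rw [mul_comm]; exact h)
    exact Prod.ext rfl h2.symm
  · intro a ha
    rfl

lemma sum_mf (T : Finset G) : ∑ g, mf T g = T.card * T.card := by
  have h : (T ×ˢ T).card = ∑ g ∈ univ, ((T ×ˢ T).filter (fun p => p.1 ^ 2 * p.2 = g)).card :=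
    Finset.card_eq_sum_card_fiberwise (fun x _ => mem_univ _)
  rw [Finset.card_product] at h
  exact h.symm

lemma card_filter_pow (k : ℕ) (hinj : ∀ x y : G, x ^ k = y ^ k → x = y) (T : Finset G) (y : G) :
    (T.filter (fun a => a ^ k = y)).card = if y ∈ T.image (· ^ k) then 1 else 0 := by
  by_cases h : y ∈ T.image (· ^ k)
  · rw [if_pos h]
    obtain ⟨a, ha, hak⟩ := mem_image.1 h
    rw [card_eq_one]
    refine ⟨a, ?_⟩
    ext b
    simp only [mem_filter, mem_singleton]
    constructor
    · rintro ⟨hb, hbk⟩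
      exact hinj b a (by rw [hbk, hak])
    · rintro rfl
      exact ⟨ha, hak⟩
  · rw [if_neg h, card_eq_zero, filter_eq_empty_iff]
    intro b hb hbk
    exact h (mem_image.2 ⟨b, hb, hbk⟩)

lemma mf_eq_sum (hsq2 : ∀ x y : G, x ^ 2 = y ^ 2 → x = y) (T : Finset G) (g : G) :
    mf T g = ∑ b ∈ T, (if g * b⁻¹ ∈ T.image (· ^ 2) then 1 else 0) := by
  unfold mf
  rw [Finset.card_eq_sum_card_fiberwise (f := fun p => p.2) (t := T)
    (fun p hp => (mem_product.1 (mem_filter.1 hp).1).2)]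
  refine sum_congr rfl fun b hb => ?_
  rw [← card_filter_pow 2 hsq2 T (g * b⁻¹)]
  refine Finset.card_bij' (i := fun p _ => p.1) (j := fun a _ => (a, b)) ?_ ?_ ?_ ?_
  · intro p hp
    simp only [mem_filter, mem_product] at hp
    obtain ⟨⟨⟨h1, h2⟩, h3⟩, h4⟩ := hp
    simp only [mem_filter]
    refine ⟨h1, ?_⟩
    rw [← h3, h4, mul_inv_cancel_right]
  · intro a ha
    simp only [mem_filter] at ha
    refine mem_filter.2 ⟨mem_filter.2 ⟨mem_product.2 ⟨ha.1, hb⟩, ?_⟩, rfl⟩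
    show a ^ 2 * b = g
    rw [ha.2, inv_mul_cancel_right]
  · intro p hp
    simp only [mem_filter, mem_product] at hp
    exact Prod.ext rfl hp.2.symm
  · intro a ha
    rfl

lemma cf_eq_sum (T : Finset G) (g : G) : cf T g = ∑ t ∈ T, Rf T (g * t⁻¹) := by
  unfold cf Rf
  rw [Finset.card_eq_sum_card_fiberwise (f := fun p => p.2) (t := T)
    (fun p hp => (mem_product.1 (mem_filter.1 hp).1).2)]
  refine sum_congr rfl fun t ht => ?_
  refine Finset.card_bij' (i := fun p _ => p.1) (j := fun q _ => (q, t)) ?_ ?_ ?_ ?_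
  · intro p hp
    simp only [mem_filter, mem_product] at hp
    obtain ⟨⟨⟨⟨h1, h2⟩, h3⟩, h4⟩, h5⟩ := hp
    simp only [mem_filter, mem_product]
    refine ⟨⟨h1, h2⟩, ?_⟩
    rw [eq_mul_inv_iff_mul_eq, ← h5]
    exact h4
  · intro q hq
    have h1 := mem_filter.1 hq
    refine mem_filter.2 ⟨mem_filter.2 ⟨mem_product.2 ⟨h1.1, ht⟩, ?_⟩, rfl⟩
    show q.1 * q.2 * t = g
    rw [h1.2, inv_mul_cancel_right]
  · intro p hp
    simp only [mem_filter, mem_product] at hp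
    exact Prod.ext rfl hp.2.symm
  · intro q hq
    rfl

lemma helper1 (a b c d x : G) (h : a^2*b = c^2*d) (hx : a * c⁻¹ = x) : d*b⁻¹ = x^2 := by
  subst hx
  have hd : d = (c^2)⁻¹ * (a^2*b) := by rw [h, inv_mul_cancel_left]
  subst hd
  simp [mul_pow, inv_pow, mul_comm, mul_left_comm, mul_assoc]

lemma helper2 (a u d v x : G) (hau : a*u = x) (hdv : d*v = x^2) : a^2*v⁻¹ = (u⁻¹)^2*d := by
  subst hau
  have hd : d = (a*u)^2 * v⁻¹ := by rw [← hdv, mul_inv_cancel_right]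
  subst hd
  simp [mul_pow, inv_pow, mul_comm, mul_left_comm, mul_assoc]

lemma sum_mf_sq (T : Finset G) (hTi : T = T⁻¹) :
    ∑ g, mf T g * mf T g = ∑ x, Rf T x * Rf T (x ^ 2) := by
  have hQ1 : (((T ×ˢ T) ×ˢ (T ×ˢ T)).filter
      (fun p => p.1.1 ^ 2 * p.1.2 = p.2.1 ^ 2 * p.2.2)).card = ∑ g, mf T g * mf T g := by
    rw [Finset.card_eq_sum_card_fiberwise (f := fun p => p.1.1 ^ 2 * p.1.2) (t := univ)
      (fun x _ => mem_univ _)]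
    refine sum_congr rfl fun g _ => ?_
    have hset : ((((T ×ˢ T) ×ˢ (T ×ˢ T)).filter
        (fun p => p.1.1 ^ 2 * p.1.2 = p.2.1 ^ 2 * p.2.2)).filter
          (fun p => p.1.1 ^ 2 * p.1.2 = g))
        = ((T ×ˢ T).filter (fun q => q.1 ^ 2 * q.2 = g)) ×ˢ
          ((T ×ˢ T).filter (fun q => q.1 ^ 2 * q.2 = g)) := by
      ext p
      simp only [mem_filter, mem_product]
      constructor
      · rintro ⟨⟨⟨hm1, hm2⟩, he⟩, hg⟩
        exact ⟨⟨hm1, hg⟩, hm2, by rw [← he]; exact hg⟩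
      · rintro ⟨⟨hm1, hg1⟩, hm2, hg2⟩
        exact ⟨⟨⟨hm1, hm2⟩, hg1.trans hg2.symm⟩, hg1⟩
    rw [hset, card_product]
    rfl
  have hQ2 : (((T ×ˢ T) ×ˢ (T ×ˢ T)).filter
      (fun p => p.1.1 ^ 2 * p.1.2 = p.2.1 ^ 2 * p.2.2)).card = ∑ x, Rf T x * Rf T (x ^ 2) := by
    rw [Finset.card_eq_sum_card_fiberwise (f := fun p => p.1.1 * p.2.1⁻¹) (t := univ)
      (fun x _ => mem_univ _)]
    refine sum_congr rfl fun x _ => ?_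
    have hcardF : Rf T x * Rf T (x ^ 2) = (((T ×ˢ T).filter (fun q => q.1 * q.2 = x)) ×ˢ
        ((T ×ˢ T).filter (fun q => q.1 * q.2 = x ^ 2))).card := by
      rw [card_product]; rfl
    rw [hcardF]
    refine Finset.card_bij' (i := fun p _ => ((p.1.1, p.2.1⁻¹), (p.2.2, p.1.2⁻¹)))
      (j := fun q _ => ((q.1.1, q.2.2⁻¹), (q.1.2⁻¹, q.2.1))) ?_ ?_ ?_ ?_
    · intro p hp
      simp only [mem_filter, mem_product] at hp
      obtain ⟨⟨⟨⟨ha, hb⟩, hc, hd⟩, he⟩, hx⟩ := hp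
      simp only [mem_filter, mem_product]
      exact ⟨⟨⟨ha, inv_mem_of hTi hc⟩, hx⟩, ⟨hd, inv_mem_of hTi hb⟩,
        helper1 _ _ _ _ _ he hx⟩
    · intro q hq
      simp only [mem_filter, mem_product] at hq
      obtain ⟨⟨⟨ha, hu⟩, hx⟩, ⟨hd, hv⟩, hx2⟩ := hq
      simp only [mem_filter, mem_product]
      refine ⟨⟨⟨⟨ha, inv_mem_of hTi hv⟩, inv_mem_of hTi hu, hd⟩, ?_⟩, ?_⟩
      · exact helper2 _ _ _ _ _ hx hx2
      · rw [inv_inv]; exact hx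
    · intro p hp
      simp
    · intro q hq
      simp
  rw [← hQ1, hQ2]

lemma cf_decomp (T : Finset G) (hc3 : ∀ x y : G, x ^ 3 = y ^ 3 → x = y) (g : G) :
    ∃ k, cf T g = 3 * k + (if g ∈ T.image (· ^ 3) then 1 else 0) := by
  classical
  set B := ((T ×ˢ T) ×ˢ T).filter (fun p => p.1.1 * p.1.2 * p.2 = g) with hB
  have hsplit : (B.filter (fun p => p.1.1 = p.1.2 ∧ p.1.2 = p.2)).card
      + (B.filter (fun p => ¬(p.1.1 = p.1.2 ∧ p.1.2 = p.2))).card = B.card :=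
    Finset.card_filter_add_card_filter_not _
  have hfix : (B.filter (fun p => p.1.1 = p.1.2 ∧ p.1.2 = p.2)).card
      = (if g ∈ T.image (· ^ 3) then 1 else 0) := by
    rw [← card_filter_pow 3 hc3 T g]
    refine Finset.card_bij' (i := fun p _ => p.1.1) (j := fun a _ => ((a, a), a)) ?_ ?_ ?_ ?_
    · intro p hp
      simp only [hB, mem_filter, mem_product] at hp
      obtain ⟨⟨⟨⟨h1, h2⟩, h3⟩, h4⟩, h5, h6⟩ := hp
      refine mem_filter.2 ⟨h1, ?_⟩
      rw [show p.1.1 ^ 3 = p.1.1 * p.1.1 * p.1.1 by rw [pow_succ, pow_succ, pow_one], ← h4]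
      rw [h5, h6]
    · intro a ha
      simp only [mem_filter] at ha
      refine mem_filter.2 ⟨?_, rfl, rfl⟩
      refine mem_filter.2 ⟨mem_product.2 ⟨mem_product.2 ⟨ha.1, ha.1⟩, ha.1⟩, ?_⟩
      show a * a * a = g
      rw [← ha.2, pow_succ, pow_succ, pow_one]
    · intro p hp
      simp only [mem_filter] at hp
      obtain ⟨-, h5, h6⟩ := hp
      exact Prod.ext (Prod.ext rfl h5) (h5.trans h6)
    · intro a ha
      rfl
  have hrot : 3 ∣ (B.filter (fun p => ¬(p.1.1 = p.1.2 ∧ p.1.2 = p.2))).card := by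
    apply three_dvd_of_rot (X := (G × G) × G) _ _ (fun p => ((p.1.2, p.2), p.1.1)) rfl
    · intro p hp
      simp only [hB, mem_filter, mem_product] at hp ⊢
      obtain ⟨⟨⟨⟨h1, h2⟩, h3⟩, h4⟩, h5⟩ := hp
      refine ⟨⟨⟨⟨h2, h3⟩, h1⟩, by rw [← h4]; rw [mul_comm, ← mul_assoc]⟩, ?_⟩
      intro ⟨e1, e2⟩
      exact h5 ⟨e2.symm ▸ e1.symm ▸ rfl, e1.symm ▸ e2.symm ▸ rfl⟩
    · intro p _
      simp
    · intro p hp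
      simp only [hB, mem_filter, mem_product] at hp
      obtain ⟨⟨⟨⟨h1, h2⟩, h3⟩, h4⟩, h5⟩ := hp
      intro he
      have e1 : p.1.2 = p.1.1 := congrArg (fun q => q.1.1) he
      have e2 : p.2 = p.1.2 := congrArg (fun q => q.1.2) he
      exact h5 ⟨e1.symm, e2.symm⟩
  obtain ⟨k, hk⟩ := hrot
  refine ⟨k, ?_⟩
  have : cf T g = B.card := rfl
  omega

end NoTilingAux

theorem no_tiling_of_n_mod_three_eq_zero (n : ℕ) (hmod : n % 3 = 0) (hn : 4 ≤ n) :
    ¬ ∃ (G : Type) (_ : CommGroup G) (_ : Fintype G) (_ : DecidableEq G) (T : Finset G),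
      Fintype.card G = 2 * n ^ 2 + 2 * n + 1 ∧
      T.card = 2 * n + 1 ∧
      (1 : G) ∈ T ∧ T = T⁻¹ ∧
      (∀ g : G, g ≠ 1 →
        ((T ×ˢ T).filter (fun p => p.1 * p.2 = g)).card =
          if g ∈ T.image (· ^ 2) then 1 else 2) := by
  rintro ⟨G, iG, iF, iD, T, hG, hT, h1T, hTi, hcnt⟩
  obtain ⟨w, hw⟩ : ∃ w, n = 3 * w := ⟨n / 3, by omega⟩
  have hw2 : 2 ≤ w := by omega
  -- injectivity of squaring and cubing
  have hsq2 : ∀ x y : G, x ^ 2 = y ^ 2 → x = y := by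
    intro x y h
    have hx : ∀ z : G, (z ^ 2) ^ (n ^ 2 + n + 1) = z := by
      intro z
      rw [← pow_mul]
      have he : 2 * (n ^ 2 + n + 1) = (2 * n ^ 2 + 2 * n + 1) + 1 := by ring
      rw [he, ← hG, pow_succ, pow_card_eq_one, one_mul]
    rw [← hx x, ← hx y, h]
  have hc3 : ∀ x y : G, x ^ 3 = y ^ 3 → x = y := by
    intro x y h
    have hx : ∀ z : G, (z ^ 3) ^ (12 * w ^ 2 + 4 * w + 1) = z := by
      intro z
      rw [← pow_mul]
      have he : 3 * (12 * w ^ 2 + 4 * w + 1) = 2 * (2 * n ^ 2 + 2 * n + 1) + 1 := by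
        subst hw; ring
      rw [he, ← hG, pow_succ, pow_mul, pow_card_eq_one, one_mul]
    rw [← hx x, ← hx y, h]
  set T2 := T.image (· ^ 2) with hT2
  set T3 := T.image (· ^ 3) with hT3
  have hone2 : (1 : G) ∈ T2 := mem_image.2 ⟨1, h1T, one_pow 2⟩
  have hone3 : (1 : G) ∈ T3 := mem_image.2 ⟨1, h1T, one_pow 3⟩
  have hT2card : T2.card = 2 * n + 1 := by
    rw [hT2, card_image_of_injOn (fun x _ y _ h => hsq2 x y h), hT]
  have hT3card : T3.card = 2 * n + 1 := by
    rw [hT3, card_image_of_injOn (fun x _ y _ h => hc3 x y h), hT]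
  have hRf1 : NoTilingAux.Rf T 1 = 2 * n + 1 := by
    rw [NoTilingAux.Rf_one hTi, hT]
  have hRfne : ∀ g : G, g ≠ 1 → NoTilingAux.Rf T g = if g ∈ T2 then 1 else 2 := by
    intro g hg
    exact hcnt g hg
  -- Lemma A : elements of T other than 1 are not squares from T
  have hLemA : ∀ t ∈ T, t ≠ 1 → t ∉ T2 := by
    intro t ht htne hmem
    have h2 : ({((1 : G), t), (t, 1)} : Finset (G × G)) ⊆
        (T ×ˢ T).filter (fun p => p.1 * p.2 = t) := by
      intro p hp
      simp only [mem_insert, mem_singleton] at hp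
      rcases hp with rfl | rfl
      · exact mem_filter.2 ⟨mem_product.2 ⟨h1T, ht⟩, one_mul t⟩
      · exact mem_filter.2 ⟨mem_product.2 ⟨ht, h1T⟩, mul_one t⟩
    have hne : ((1 : G), t) ≠ (t, 1) := by
      intro h
      exact htne (congrArg Prod.fst h).symm
    have hcard2 : ({((1 : G), t), (t, 1)} : Finset (G × G)).card = 2 := by
      rw [card_insert_of_notMem (by simp [hne]), card_singleton]
    have hr : NoTilingAux.Rf T t = 1 := by rw [hRfne t htne, if_pos hmem]
    have hle := card_le_card h2
    rw [hcard2] at hle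
    have hle2 : (2 : ℕ) ≤ NoTilingAux.Rf T t := hle
    omega
  -- sum of multiplicities
  have hsum_m : ∑ g, NoTilingAux.mf T g = (2 * n + 1) * (2 * n + 1) := by
    rw [NoTilingAux.sum_mf, hT]
  -- pointwise triple-count relation
  have hcm : ∀ g : G, NoTilingAux.cf T g + NoTilingAux.mf T g
      = 2 * (2 * n + 1) + 2 * n * (if g ∈ T then 1 else 0) := by
    intro g
    rw [NoTilingAux.cf_eq_sum, NoTilingAux.mf_eq_sum hsq2, ← Finset.sum_add_distrib]
    have hpt : ∀ t ∈ T, NoTilingAux.Rf T (g * t⁻¹) + (if g * t⁻¹ ∈ T2 then 1 else 0)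
        = 2 + 2 * n * (if t = g then 1 else 0) := by
      intro t ht
      by_cases h1 : g * t⁻¹ = 1
      · have htg : t = g := by
          rw [mul_inv_eq_one] at h1; exact h1.symm
        rw [if_pos htg, h1, hRf1, if_pos hone2]
        omega
      · have ht2 : t ≠ g := by
          intro he
          exact h1 (by rw [he, mul_inv_cancel])
        rw [hRfne _ h1, if_neg ht2]
        by_cases h2 : g * t⁻¹ ∈ T2
        · rw [if_pos h2, if_pos h2]; omega
        · rw [if_neg h2, if_neg h2]; omega
    rw [Finset.sum_congr rfl hpt, Finset.sum_add_distrib, Finset.sum_const, smul_eq_mul,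
      ← Finset.mul_sum, Finset.sum_ite_eq' T g (fun _ => 1), hT]
    by_cases hgT : g ∈ T
    · rw [if_pos hgT]; ring
    · rw [if_neg hgT]; ring
  -- second moment
  have hsum_msq : ∑ g, NoTilingAux.mf T g * NoTilingAux.mf T g
      = 12 * n ^ 2 + 4 * n + 1 := by
    rw [NoTilingAux.sum_mf_sq T hTi]
    rw [← Finset.add_sum_erase univ (fun x => NoTilingAux.Rf T x * NoTilingAux.Rf T (x ^ 2))
      (mem_univ (1 : G))]
    have h1sq : ((1 : G)) ^ 2 = 1 := one_pow 2
    have hterm1 : NoTilingAux.Rf T 1 * NoTilingAux.Rf T ((1 : G) ^ 2)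
        = (2 * n + 1) * (2 * n + 1) := by rw [h1sq, hRf1]
    have hE : ∀ x ∈ univ.erase (1 : G),
        NoTilingAux.Rf T x * NoTilingAux.Rf T (x ^ 2)
          + 2 * (if x ∈ T2 then 1 else 0) + 2 * (if x ∈ T then 1 else 0) = 4 := by
      intro x hx
      have hx1 : x ≠ 1 := (mem_erase.1 hx).1
      have hx21 : x ^ 2 ≠ 1 := by
        intro h
        exact hx1 (hsq2 x 1 (by rw [h, one_pow]))
      have hmemiff : x ^ 2 ∈ T2 ↔ x ∈ T := by
        constructor
        · intro h
          obtain ⟨a, ha, ha2⟩ := mem_image.1 h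
          rwa [← hsq2 a x ha2]
        · intro h
          exact mem_image.2 ⟨x, h, rfl⟩
      rw [hRfne _ hx1, hRfne _ hx21]
      have hrw : (if x ^ 2 ∈ T2 then 1 else 2) = if x ∈ T then (1 : ℕ) else 2 := by
        by_cases hxT : x ∈ T
        · rw [if_pos (hmemiff.2 hxT), if_pos hxT]
        · rw [if_neg (fun h => hxT (hmemiff.1 h)), if_neg hxT]
      rw [hrw]
      by_cases hxT : x ∈ T
      · have hx2 : x ∉ T2 := hLemA x hxT hx1
        simp [hxT, hx2]
      · by_cases hx2 : x ∈ T2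
        · simp [hxT, hx2]
        · simp [hxT, hx2]
    have key : ∀ (S : Finset G), (∑ x ∈ univ.erase (1 : G), (if x ∈ S then (1 : ℕ) else 0))
        = (S.erase 1).card := by
      intro S
      have h1 : (∑ x ∈ univ.erase (1 : G), (if x ∈ S then (1 : ℕ) else 0))
          = ((univ.erase (1 : G)).filter (· ∈ S)).card := by
        rw [Finset.sum_boole, Nat.cast_id]
      rw [h1]
      congr 1
      ext y
      simp only [mem_filter, mem_erase, mem_univ, and_true, true_and]
    have hEsum := Finset.sum_congr rfl hE
    rw [Finset.sum_add_distrib, Finset.sum_add_distrib, ← Finset.mul_sum, ← Finset.mul_sum,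
      key T2, key T, Finset.sum_const, smul_eq_mul] at hEsum
    have hc1 : (univ.erase (1 : G)).card = 2 * n ^ 2 + 2 * n := by
      rw [card_erase_of_mem (mem_univ _), card_univ, hG]
      simp
    have hc2 : (T2.erase 1).card = 2 * n := by
      rw [card_erase_of_mem hone2, hT2card]
      simp
    have hc3' : (T.erase 1).card = 2 * n := by
      rw [card_erase_of_mem h1T, hT]
      simp
    rw [hc1, hc2, hc3'] at hEsum
    have hsq' : (2 * n + 1) * (2 * n + 1) = 4 * n ^ 2 + 4 * n + 1 := by ring
    rw [hterm1]
    linarith [hEsum]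
  -- decomposition of multiplicities mod 3
  set base : G → ℕ := fun g => if g ∈ T3 then 1 else 2 with hbase
  set Xf : G → ℕ := fun g => NoTilingAux.mf T g / 3 with hXf
  have hXdef : ∀ g : G, NoTilingAux.mf T g = base g + 3 * Xf g := by
    intro g
    obtain ⟨k, hk⟩ := NoTilingAux.cf_decomp T hc3 g
    have h1 := hcm g
    rw [hw] at h1
    simp only [hbase, hXf]
    by_cases h3 : g ∈ T3
    · rw [if_pos h3] at hk ⊢
      by_cases hTg : g ∈ T
      · rw [if_pos hTg] at h1; omega
      · rw [if_neg hTg] at h1; omega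
    · rw [if_neg h3] at hk ⊢
      by_cases hTg : g ∈ T
      · rw [if_pos hTg] at h1; omega
      · rw [if_neg hTg] at h1; omega
  -- sums of base
  have hboole3 : (∑ g, (if g ∈ T3 then (1 : ℕ) else 0)) = 2 * n + 1 := by
    have h1 : (∑ g, (if g ∈ T3 then (1 : ℕ) else 0)) = (univ.filter (· ∈ T3)).card := by
      rw [Finset.sum_boole, Nat.cast_id]
    have h2 : univ.filter (· ∈ T3) = T3 := by
      ext y; simp
    rw [h1, h2, hT3card]
  have hbase_sum : ∑ g, base g = 4 * n ^ 2 + 2 * n + 1 := by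
    have hpt : ∀ g : G, base g + (if g ∈ T3 then (1 : ℕ) else 0) = 2 := by
      intro g
      simp only [hbase]
      by_cases h3 : g ∈ T3
      · rw [if_pos h3, if_pos h3]
      · rw [if_neg h3, if_neg h3]
    have h1 : (∑ g, (base g + (if g ∈ T3 then (1 : ℕ) else 0))) = ∑ _g : G, 2 :=
      Finset.sum_congr rfl (fun g _ => hpt g)
    rw [Finset.sum_add_distrib, hboole3, Finset.sum_const, smul_eq_mul, card_univ, hG] at h1
    linarith
  have hbase_sq_sum : ∑ g, base g * base g = 8 * n ^ 2 + 2 * n + 1 := by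
    have hpt : ∀ g : G, base g * base g + 3 * (if g ∈ T3 then (1 : ℕ) else 0) = 4 := by
      intro g
      simp only [hbase]
      by_cases h3 : g ∈ T3
      · rw [if_pos h3, if_pos h3]
      · rw [if_neg h3, if_neg h3]
    have h1 : (∑ g, (base g * base g + 3 * (if g ∈ T3 then (1 : ℕ) else 0))) = ∑ _g : G, 4 :=
      Finset.sum_congr rfl (fun g _ => hpt g)
    rw [Finset.sum_add_distrib, ← Finset.mul_sum, hboole3, Finset.sum_const, smul_eq_mul,
      card_univ, hG] at h1
    linarith
  -- main sums
  set S1 := ∑ g, Xf g with hS1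
  set U := ∑ g, (if g ∈ T3 then Xf g else 0) with hU
  set P := ∑ g, Xf g * Xf g with hP
  have hUle : U ≤ S1 := by
    apply Finset.sum_le_sum
    intro g _
    by_cases h3 : g ∈ T3
    · rw [if_pos h3]
    · rw [if_neg h3]; exact Nat.zero_le _
  have hbaseX : ∑ g, base g * Xf g + U = 2 * S1 := by
    have hpt : ∀ g : G, base g * Xf g + (if g ∈ T3 then Xf g else 0) = 2 * Xf g := by
      intro g
      simp only [hbase]
      by_cases h3 : g ∈ T3
      · rw [if_pos h3, if_pos h3]; ring
      · rw [if_neg h3, if_neg h3]; ring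
    rw [hU, hS1, ← Finset.sum_add_distrib, Finset.mul_sum]
    exact Finset.sum_congr rfl (fun g _ => hpt g)
  have hS1val : 3 * S1 = 2 * n := by
    have h1 : (∑ g, NoTilingAux.mf T g) = ∑ g, (base g + 3 * Xf g) :=
      Finset.sum_congr rfl (fun g _ => hXdef g)
    rw [Finset.sum_add_distrib, ← Finset.mul_sum, hbase_sum, hsum_m] at h1
    have hsq : (2 * n + 1) * (2 * n + 1) = 4 * n ^ 2 + 4 * n + 1 := by ring
    rw [hsq, ← hS1] at h1
    linarith
  have hPeq : 9 * P + 6 * n = 4 * n ^ 2 + 6 * U := by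
    have h1 : (∑ g, NoTilingAux.mf T g * NoTilingAux.mf T g)
        = ∑ g, (base g * base g + 6 * (base g * Xf g) + 9 * (Xf g * Xf g)) := by
      refine Finset.sum_congr rfl (fun g _ => ?_)
      rw [hXdef g]; ring
    rw [Finset.sum_add_distrib, Finset.sum_add_distrib, ← Finset.mul_sum, ← Finset.mul_sum,
      hbase_sq_sum, hsum_msq] at h1
    have h2 : ∑ g, base g * Xf g + U = 2 * S1 := hbaseX
    have h3 : 3 * S1 = 2 * n := hS1val
    rw [← hP] at h1
    linarith [h1, h2, h3]
  -- final combinatorial contradiction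
  have hS1v : S1 = 2 * w := by omega
  obtain ⟨W, hW⟩ : ∃ W, w * w = W := ⟨_, rfl⟩
  have hn2 : n ^ 2 = 9 * W := by rw [← hW, hw]; ring
  rw [hn2, hw] at hPeq
  have hPlt : P < 4 * W := by omega
  have hex1 : ∃ g1 : G, Xf g1 ≠ 0 := by
    by_contra h
    push_neg at h
    have hz : S1 = 0 := by
      rw [hS1]
      exact Finset.sum_eq_zero (fun g _ => h g)
    omega
  obtain ⟨g1, hg1⟩ := hex1
  have hex2 : ∃ g2, g2 ≠ g1 ∧ Xf g2 ≠ 0 := by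
    by_contra h
    push_neg at h
    have hs : S1 = Xf g1 := by
      rw [hS1]
      exact Finset.sum_eq_single g1 (fun b _ hb => h b hb)
        (fun hb => absurd (mem_univ g1) hb)
    have hp : P = Xf g1 * Xf g1 := by
      rw [hP]
      exact Finset.sum_eq_single g1 (fun b _ hb => by rw [h b hb, mul_zero])
        (fun hb => absurd (mem_univ g1) hb)
    rw [← hs, hS1v] at hp
    have hp4 : P = 4 * W := by rw [hp, ← hW]; ring
    omega
  obtain ⟨g2, hg21, hg2⟩ := hex2
  set a := Xf g1 with ha
  set r := ∑ g ∈ univ.erase g1, Xf g with hr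
  have har : a + r = S1 := by
    rw [hS1, ha, hr]
    exact Finset.add_sum_erase univ Xf (mem_univ g1)
  have hbr : Xf g2 ≤ r := by
    rw [hr]
    exact Finset.single_le_sum (fun i _ => Nat.zero_le _)
      (mem_erase.2 ⟨hg21, mem_univ g2⟩)
  have hP2 : P ≤ a * a + r * r := by
    have h1 : P = a * a + ∑ g ∈ univ.erase g1, Xf g * Xf g := by
      rw [hP]
      exact (Finset.add_sum_erase univ (fun g => Xf g * Xf g) (mem_univ g1)).symm
    rw [h1]
    exact Nat.add_le_add_left (NoTilingAux.sum_sq_le_sq_sum _ _) _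
  have ha1 : 1 ≤ a := Nat.one_le_iff_ne_zero.2 hg1
  have hr1 : 1 ≤ r := le_trans (Nat.one_le_iff_ne_zero.2 hg2) hbr
  have harw : a + r = 2 * w := by omega
  obtain ⟨AA, hAA⟩ : ∃ z, a * a = z := ⟨_, rfl⟩
  obtain ⟨RR, hRR⟩ : ∃ z, r * r = z := ⟨_, rfl⟩
  obtain ⟨AR, hAR⟩ : ∃ z, a * r = z := ⟨_, rfl⟩
  have hsq : AA + 2 * AR + RR = 4 * W := by
    rw [← hAA, ← hRR, ← hAR, ← hW]
    calc a * a + 2 * (a * r) + r * r = (a + r) * (a + r) := by ring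
      _ = (2 * w) * (2 * w) := by rw [harw]
      _ = 4 * (w * w) := by ring
  have hprod : a + r ≤ AR + 1 := by
    rw [← hAR]
    exact NoTilingAux.add_le_mul_succ a r ha1 hr1
  rw [hAA, hRR] at hP2
  omega
end

section
/- Let G be a finite abelian group of odd order and T ⊆ G satisfy the lattice tiling group ring conditions with |T| = 2n+1. If T^(4) = T and T^(5) = T^(2), then |T| ≤ 3. -/
open scoped Pointwise

theorem card_le_three_of_pow_four_eq
    {G : Type*} [CommGroup G] [Fintype G] [DecidableEq G] (n : ℕ) (hn : 2 ≤ n)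
    (hG : Fintype.card G = 2 * n ^ 2 + 2 * n + 1)
    (T : Finset G) (hT : T.card = 2 * n + 1)
    (h1 : (1 : G) ∈ T) (hinv : T = T⁻¹)
    (hcount : ∀ g : G, g ≠ 1 →
      ((T ×ˢ T).filter (fun p => p.1 * p.2 = g)).card =
        if g ∈ T.image (· ^ 2) then 1 else 2)
    (h4 : T.image (· ^ 4) = T) (h5 : T.image (· ^ 5) = T.image (· ^ 2))
    : T.card ≤ 3 := by
  have hodd : Odd (Fintype.card G) := by
    rw [hG]; exact ⟨n ^ 2 + n, by ring⟩
  have h3nd : ¬ (3 ∣ Fintype.card G) := by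
    rw [hG]
    intro hd
    have : ((2 * n ^ 2 + 2 * n + 1 : ℕ) : ZMod 3) = 0 :=
      (ZMod.natCast_eq_zero_iff _ 3).mpr hd
    push_cast at this
    have hall : ∀ m : ZMod 3, 2 * m ^ 2 + 2 * m + 1 ≠ 0 := by decide
    exact hall (n : ZMod 3) this
  -- Step 1: every element of T has fifth power 1
  have key : ∀ t ∈ T, t ^ 5 = 1 := by
    intro t ht
    by_contra h5ne
    have ht4 : t ^ 4 ∈ T := by
      rw [← h4]; exact Finset.mem_image_of_mem _ ht
    have ht5 : t ^ 5 ∈ T.image (· ^ 2) := by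
      rw [← h5]; exact Finset.mem_image_of_mem _ ht
    obtain ⟨s, hs, hs2⟩ := Finset.mem_image.mp ht5
    have hc := hcount (t ^ 5) h5ne
    rw [if_pos ht5] at hc
    obtain ⟨p, hp⟩ := Finset.card_eq_one.mp hc
    have hmem1 : (t, t ^ 4) ∈ (T ×ˢ T).filter (fun p => p.1 * p.2 = t ^ 5) := by
      simp only [Finset.mem_filter, Finset.mem_product]
      refine ⟨⟨ht, ht4⟩, ?_⟩
      group
    have hmem2 : (s, s) ∈ (T ×ˢ T).filter (fun p => p.1 * p.2 = t ^ 5) := by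
      simp only [Finset.mem_filter, Finset.mem_product]
      refine ⟨⟨hs, hs⟩, ?_⟩
      rw [← hs2, sq]
    rw [hp, Finset.mem_singleton] at hmem1 hmem2
    have heq : t = t ^ 4 := by
      have h1' : t = p.1 := congrArg Prod.fst hmem1
      have h2' : t ^ 4 = p.2 := congrArg Prod.snd hmem1
      have h3' : s = p.1 := congrArg Prod.fst hmem2
      have h4' : s = p.2 := congrArg Prod.snd hmem2
      exact h1'.trans (h3'.symm.trans (h4'.trans h2'.symm))
    have ht3 : t ^ 3 = 1 := by
      have : t * t ^ 3 = t * 1 := by rw [mul_one, ← pow_succ']; exact heq.symm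
      exact mul_left_cancel this
    have hdvd : orderOf t ∣ 3 := orderOf_dvd_of_pow_eq_one ht3
    have hdvd2 : orderOf t ∣ Fintype.card G := orderOf_dvd_card
    have hone : orderOf t = 1 := by
      rcases (Nat.prime_three).eq_one_or_self_of_dvd _ hdvd with h | h
      · exact h
      · exact absurd (h ▸ hdvd2) h3nd
    have : t = 1 := orderOf_eq_one_iff.mp hone
    rw [this, one_pow] at h5ne
    exact h5ne rfl
  -- Step 2: every element of T is 1
  have key2 : ∀ t ∈ T, t = 1 := by
    intro t ht
    have h2m : t ^ 2 ∈ T.image (· ^ 5) := by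
      rw [h5]; exact Finset.mem_image_of_mem _ ht
    obtain ⟨s, hs, hs5⟩ := Finset.mem_image.mp h2m
    have ht2 : t ^ 2 = 1 := by rw [← hs5]; exact key s hs
    have hdvd : orderOf t ∣ 2 := orderOf_dvd_of_pow_eq_one ht2
    have hdvd2 : orderOf t ∣ Fintype.card G := orderOf_dvd_card
    have hone : orderOf t = 1 := by
      rcases (Nat.prime_two).eq_one_or_self_of_dvd _ hdvd with h | h
      · exact h
      · have h2d : 2 ∣ Fintype.card G := h ▸ hdvd2
        have := Nat.odd_iff.mp hodd
        omega
    exact orderOf_eq_one_iff.mp hone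
  have hsub : T ⊆ {1} := fun t ht => Finset.mem_singleton.mpr (key2 t ht)
  calc T.card ≤ ({1} : Finset G).card := Finset.card_le_card hsub
    _ ≤ 3 := by simp
end

section
/- In ℤ[G] for G a finite abelian group, if T satisfies T² = 2G − T^(2) + 2n with |T| = 2n+1, then T⁵ = (8n²+8n+2)(2n+1)G − T^(4)T − 4n·T^(2)T + (4n²+2n)T, hence T^(4)T = (8n²+8n+2)(2n+1)G − T⁵ − 4n·T^(2)T + (4n²+2n)T. -/
section aux
variable {G : Type*} [CommGroup G] [Fintype G]

omit [Fintype G] in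
lemma single_mul_sum_single (g : G) (S : Finset G) :
    MonoidAlgebra.single g (1:ℤ) * (∑ h ∈ S, MonoidAlgebra.single h (1:ℤ)) =
      ∑ h ∈ S, MonoidAlgebra.single (g * h) (1:ℤ) := by
  rw [Finset.mul_sum]
  simp only [MonoidAlgebra.single_mul_single, one_mul]

lemma single_mul_GG (g : G) :
    MonoidAlgebra.single g (1:ℤ) * (∑ h : G, MonoidAlgebra.single h (1:ℤ)) =
      ∑ h : G, MonoidAlgebra.single h (1:ℤ) := by
  rw [single_mul_sum_single]
  exact Fintype.sum_equiv (Equiv.mulLeft g) _ _ (fun h => rfl)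

lemma sum_single_mul_GG (S : Finset G) :
    (∑ t ∈ S, MonoidAlgebra.single t (1:ℤ)) * (∑ h : G, MonoidAlgebra.single h (1:ℤ)) =
      (S.card : MonoidAlgebra ℤ G) * (∑ h : G, MonoidAlgebra.single h (1:ℤ)) := by
  rw [Finset.sum_mul]
  simp only [single_mul_GG]
  rw [Finset.sum_const, nsmul_eq_mul]

end aux

theorem fifth_power_eq {G : Type*} [CommGroup G] [Fintype G] [DecidableEq G]
    (n : ℕ) (hG : Fintype.card G = 2 * n ^ 2 + 2 * n + 1)
    (T : Finset G) (hT : T.card = 2 * n + 1)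
    (TT GG T2 T4 : MonoidAlgebra ℤ G)
    (hTT : TT = ∑ t ∈ T, MonoidAlgebra.single t (1 : ℤ))
    (hGG : GG = ∑ g : G, MonoidAlgebra.single g (1 : ℤ))
    (hT2 : T2 = ∑ t ∈ T, MonoidAlgebra.single (t ^ 2) (1 : ℤ))
    (hT4 : T4 = ∑ t ∈ T, MonoidAlgebra.single (t ^ 4) (1 : ℤ))
    (heq : TT ^ 2 = 2 * GG - T2 + ((2 * n : ℕ) : MonoidAlgebra ℤ G)) :
    TT ^ 5 = (((8 * n ^ 2 + 8 * n + 2) * (2 * n + 1) : ℕ) : MonoidAlgebra ℤ G) * GG -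
        T4 * TT - ((4 * n : ℕ) : MonoidAlgebra ℤ G) * (T2 * TT) +
        ((4 * n ^ 2 + 2 * n : ℕ) : MonoidAlgebra ℤ G) * TT ∧
      T4 * TT = (((8 * n ^ 2 + 8 * n + 2) * (2 * n + 1) : ℕ) : MonoidAlgebra ℤ G) * GG -
        TT ^ 5 - ((4 * n : ℕ) : MonoidAlgebra ℤ G) * (T2 * TT) +
        ((4 * n ^ 2 + 2 * n : ℕ) : MonoidAlgebra ℤ G) * TT := by
  -- squaring is bijective since |G| is odd
  have hcop : (Nat.card G).Coprime 2 := by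
    rw [Nat.card_eq_fintype_card, hG, Nat.coprime_two_right]
    exact ⟨n ^ 2 + n, by ring⟩
  have hbij : Function.Bijective (fun g : G => g ^ 2) := (powCoprime hcop).bijective
  -- the ring hom induced by squaring
  set F : MonoidAlgebra ℤ G →+* MonoidAlgebra ℤ G :=
    MonoidAlgebra.mapDomainRingHom ℤ (powMonoidHom 2 : G →* G) with hF
  have hFsingle : ∀ g : G, F (MonoidAlgebra.single g (1:ℤ)) =
      MonoidAlgebra.single (g ^ 2) (1:ℤ) := by
    intro g
    simp [hF, MonoidAlgebra.mapDomainRingHom, Finsupp.mapDomain_single, powMonoidHom]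
  have hFTT : F TT = T2 := by
    rw [hTT, hT2, map_sum]; exact Finset.sum_congr rfl fun t _ => hFsingle t
  have hFT2 : F T2 = T4 := by
    rw [hT2, hT4, map_sum]
    refine Finset.sum_congr rfl fun t _ => ?_
    rw [hFsingle, ← pow_mul]
  have hFGG : F GG = GG := by
    rw [hGG, map_sum]
    simp only [hFsingle]
    exact Fintype.sum_bijective _ hbij _ _ (fun g => rfl)
  have hT2sq : T2 ^ 2 = 2 * GG - T4 + ((2 * n : ℕ) : MonoidAlgebra ℤ G) := by
    have := congrArg F heq
    rw [map_pow, hFTT, map_add, map_sub, map_mul, map_ofNat, hFGG, hFT2, map_natCast] at this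
    exact this
  have hTG : TT * GG = ((2 * n + 1 : ℕ) : MonoidAlgebra ℤ G) * GG := by
    rw [hTT, hGG, sum_single_mul_GG, hT]
  have hT2G : T2 * GG = ((2 * n + 1 : ℕ) : MonoidAlgebra ℤ G) * GG := by
    rw [hT2, hGG]
    have : ∑ t ∈ T, MonoidAlgebra.single (t ^ 2) (1:ℤ) =
        ∑ t ∈ T.image (· ^ 2), MonoidAlgebra.single t (1:ℤ) := by
      rw [Finset.sum_image (fun a _ b _ h => hbij.injective h)]
    rw [this, sum_single_mul_GG, Finset.card_image_of_injective _ hbij.injective, hT]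
  have hGsq : GG * GG = ((2 * n ^ 2 + 2 * n + 1 : ℕ) : MonoidAlgebra ℤ G) * GG := by
    conv_lhs => rw [hGG]
    rw [show (∑ g : G, MonoidAlgebra.single g (1:ℤ)) = ∑ g ∈ Finset.univ, MonoidAlgebra.single g (1:ℤ) from rfl]
    rw [sum_single_mul_GG, Finset.card_univ, hG, hGG]
  constructor
  · push_cast at heq hT2sq hTG hT2G hGsq ⊢
    linear_combination (TT ^ 2 + 2 * GG - T2 + 2 * (n : MonoidAlgebra ℤ G)) * TT * heq +
      TT * hT2sq + 4 * TT * hGsq - 4 * TT * hT2G +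
      (8 * (n : MonoidAlgebra ℤ G) ^ 2 + 8 * (n : MonoidAlgebra ℤ G) + 2) * hTG
  · push_cast at heq hT2sq hTG hT2G hGsq ⊢
    linear_combination (TT ^ 2 + 2 * GG - T2 + 2 * (n : MonoidAlgebra ℤ G)) * TT * heq +
      TT * hT2sq + 4 * TT * hGsq - 4 * TT * hT2G +
      (8 * (n : MonoidAlgebra ℤ G) ^ 2 + 8 * (n : MonoidAlgebra ℤ G) + 2) * hTG
end
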